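/- arXiv:2304.09443 — 10 statements merged into one kernel-verified Lean document; each statement's English description precedes it below -/
import Mathlib

section
/- Suppose the sequence of directed graphs {G(t)} associated with the column stochastic matrices {W(t)} is uniformly strongly connected. Then there exists a constant η > 0 such that for all agents i ∈ {1,…,n} and all times t ≥ 0, the push-sum weights satisfy η ≤ y_i(t) ≤ n. -/
open Finset

/-- The push-sum weights `y_i(t)` of a uniformly strongly connected sequence of
column stochastic matrices are uniformly bounded: `η ≤ y_i(t) ≤ n`. -/
theorem pushsum_weights_bounded (n : ℕ) (hn : 1 ≤ n)
    (W : ℕ → Matrix (Fin n) (Fin n) ℝ)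
    (hWnonneg : ∀ t i j, 0 ≤ W t i j)
    (hWcol : ∀ t j, ∑ i, W t i j = 1)
    (hWdiag : ∀ t i, 0 < W t i i)
    (β : ℝ) (hβ : 0 < β)
    (hWβ : ∀ t i j, 0 < W t i j → β ≤ W t i j)
    (L : ℕ) (hL : 0 < L)
    (hconn : ∀ t : ℕ, ∀ i j : Fin n,
      Relation.TransGen (fun a b => ∃ k ∈ Finset.Ico t (t + L), 0 < W k b a) i j)
    (y : ℕ → Fin n → ℝ)
    (hy0 : ∀ i, y 0 i = 1)
    (hy : ∀ t i, y (t + 1) i = ∑ j, W t i j * y t j) :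
    ∃ η > 0, ∀ i : Fin n, ∀ t : ℕ, η ≤ y t i ∧ y t i ≤ n := by
  classical
  -- nonnegativity of y
  have hynn : ∀ t, ∀ i, 0 ≤ y t i := by
    intro t
    induction t with
    | zero => intro i; rw [hy0]; norm_num
    | succ t ih =>
      intro i; rw [hy]
      exact Finset.sum_nonneg fun j _ => mul_nonneg (hWnonneg t i j) (ih j)
  -- preservation of total mass
  have hsum : ∀ t, ∑ i, y t i = n := by
    intro t
    induction t with
    | zero => simp [hy0]
    | succ t ih =>
      simp only [hy]
      rw [Finset.sum_comm]
      calc ∑ j, ∑ i, W t i j * y t j = ∑ j, (∑ i, W t i j) * y t j := by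
            simp [Finset.sum_mul]
        _ = ∑ j, y t j := by simp [hWcol]
        _ = n := ih
  -- β ≤ 1
  have hβ1 : β ≤ 1 := by
    have i0 : Fin n := ⟨0, hn⟩
    have h1 := hWβ 0 i0 i0 (hWdiag 0 i0)
    have h2 : W 0 i0 i0 ≤ ∑ i, W 0 i i0 :=
      Finset.single_le_sum (fun i _ => hWnonneg 0 i i0) (Finset.mem_univ i0)
    rw [hWcol] at h2; linarith
  -- one-step propagation of lower bounds along positive entries
  have hstep : ∀ t (i j : Fin n) (c : ℝ), 0 ≤ c → 0 < W t i j → c ≤ y t j →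
      β * c ≤ y (t + 1) i := by
    intro t i j c hc hW hyc
    rw [hy]
    have h1 : β * c ≤ W t i j * y t j :=
      mul_le_mul (hWβ t i j hW) hyc hc (hWnonneg t i j)
    exact h1.trans (Finset.single_le_sum
      (fun k _ => mul_nonneg (hWnonneg t i k) (hynn t k)) (Finset.mem_univ j))
  -- diagonal propagation
  have hdiag : ∀ d s (i : Fin n), β ^ d * y s i ≤ y (s + d) i := by
    intro d
    induction d with
    | zero => intro s i; simp
    | succ d ih =>
      intro s i
      have h1 : β ^ (d + 1) * y s i = β * (β ^ d * y s i) := by ring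
      rw [h1]
      have h2 := hstep (s + d) i i (β ^ d * y s i)
        (mul_nonneg (pow_nonneg hβ.le d) (hynn s i)) (hWdiag (s + d) i) (ih s i)
      exact h2
  set B := (n - 1) * L with hB
  -- the key lemma: after B steps, everyone has a β^B fraction of y s j0
  have key : ∀ s (j0 : Fin n) (i : Fin n), β ^ B * y s j0 ≤ y (s + B) i := by
    intro s j0
    set c := y s j0 with hc
    have hc0 : 0 ≤ c := hynn s j0
    set S : ℕ → Finset (Fin n) :=
      fun t => Finset.univ.filter fun i => β ^ (t - s) * c ≤ y t i with hSdef
    have hmem : ∀ t i, i ∈ S t ↔ β ^ (t - s) * c ≤ y t i := by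
      intro t i; simp [hSdef]
    have hS0 : j0 ∈ S s := by rw [hmem, Nat.sub_self, pow_zero, one_mul]
    have hmono1 : ∀ t, s ≤ t → S t ⊆ S (t + 1) := by
      intro t hst i hi
      rw [hmem] at hi ⊢
      have hts : t + 1 - s = (t - s) + 1 := by omega
      rw [hts]
      have h1 : β ^ (t - s + 1) * c = β * (β ^ (t - s) * c) := by ring
      rw [h1]
      exact hstep t i i _ (mul_nonneg (pow_nonneg hβ.le _) hc0) (hWdiag t i) hi
    have hmono : ∀ t t', s ≤ t → t ≤ t' → S t ⊆ S t' := by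
      intro t t' hst h
      induction h with
      | refl => exact subset_rfl
      | step h ih => exact ih.trans (hmono1 _ (hst.trans h))
    -- edge propagation across a window
    have hedge : ∀ t, s ≤ t → ∀ a b : Fin n, a ∈ S t →
        (∃ k ∈ Finset.Ico t (t + L), 0 < W k b a) → b ∈ S (t + L) := by
      intro t hst a b ha ⟨k, hk, hWk⟩
      rw [Finset.mem_Ico] at hk
      have ha' : a ∈ S k := hmono t k hst hk.1 ha
      rw [hmem] at ha'
      have hb : b ∈ S (k + 1) := by
        rw [hmem]
        have hks : k + 1 - s = (k - s) + 1 := by omega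
        rw [hks]
        have h1 : β ^ (k - s + 1) * c = β * (β ^ (k - s) * c) := by ring
        rw [h1]
        exact hstep k b a _ (mul_nonneg (pow_nonneg hβ.le _) hc0) hWk ha'
      exact hmono (k + 1) (t + L) (by omega) (by omega) hb
    -- if no growth over a window, the set is everything
    have hfull : ∀ t, s ≤ t → S (t + L) = S t → S t = Finset.univ := by
      intro t hst heq
      apply Finset.eq_univ_of_forall
      intro i
      have hj0 : j0 ∈ S t := hmono s t le_rfl hst hS0
      have htg := hconn t j0 i
      induction htg with
      | single hrel => exact heq ▸ hedge t hst _ _ hj0 hrel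
      | tail _ hrel ih => exact heq ▸ hedge t hst _ _ ih hrel
    -- cardinality growth
    have hcard : ∀ k, min n (k + 1) ≤ (S (s + k * L)).card := by
      intro k
      induction k with
      | zero =>
        have : j0 ∈ S s := hS0
        have h1 : 1 ≤ (S s).card := Finset.card_pos.mpr ⟨j0, this⟩
        simpa using le_trans (min_le_right n 1) h1
      | succ k ih =>
        have hst : s ≤ s + k * L := by omega
        have heqt : s + (k + 1) * L = s + k * L + L := by ring
        rw [heqt]
        by_cases heq : S (s + k * L + L) = S (s + k * L)
        · have huniv := hfull (s + k * L) hst heq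
          rw [heq, huniv, Finset.card_univ, Fintype.card_fin]
          omega
        · have hsub : S (s + k * L) ⊂ S (s + k * L + L) :=
            (hmono _ _ hst (by omega)).ssubset_of_ne (Ne.symm heq)
          have h1 := Finset.card_lt_card hsub
          omega
    -- conclude
    have hfin := hcard (n - 1)
    have hmin : min n (n - 1 + 1) = n := by omega
    rw [hmin] at hfin
    have huniv : S (s + (n - 1) * L) = Finset.univ := by
      apply Finset.eq_univ_of_card
      rw [Fintype.card_fin]
      exact le_antisymm (le_trans (Finset.card_le_card (Finset.subset_univ _))
        (by rw [Finset.card_univ, Fintype.card_fin])) hfin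
    intro i
    have hi : i ∈ S (s + B) := by rw [hB, huniv]; exact Finset.mem_univ i
    rw [hmem] at hi
    simpa [Nat.add_sub_cancel_left] using hi
  -- assemble
  refine ⟨β ^ B, pow_pos hβ B, fun i t => ⟨?_, ?_⟩⟩
  · rcases le_or_gt B t with hBt | hBt
    · -- use key at s = t - B
      set s := t - B with hs
      have hts : s + B = t := by omega
      -- find j0 with 1 ≤ y s j0
      have hne : (Finset.univ : Finset (Fin n)).Nonempty := ⟨⟨0, hn⟩, Finset.mem_univ _⟩
      have hsum1 : ∑ _i : Fin n, (1 : ℝ) ≤ ∑ i, y s i := by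
        rw [hsum]; simp
      obtain ⟨j0, _, hj0⟩ := Finset.exists_le_of_sum_le hne hsum1
      have hk := key s j0 i
      rw [hts] at hk
      calc β ^ B = β ^ B * 1 := by ring
        _ ≤ β ^ B * y s j0 := by
            exact mul_le_mul_of_nonneg_left hj0 (pow_nonneg hβ.le B)
        _ ≤ y t i := hk
    · -- small t: use diagonal propagation from time 0
      have h1 := hdiag t 0 i
      rw [hy0, mul_one] at h1
      simp only [Nat.zero_add] at h1
      calc β ^ B ≤ β ^ t := pow_le_pow_of_le_one hβ.le hβ1 hBt.le
        _ ≤ y t i := h1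
  · calc y t i ≤ ∑ j, y t j :=
        Finset.single_le_sum (fun j _ => hynn t j) (Finset.mem_univ i)
      _ = n := hsum t
end

section
/- Assume y_i(t) > 0 for all i ∈ {1,…,n} and all t ≥ 0 (so that S(t) is well defined). Then for all i, j ∈ {1,…,n} and all integers t > τ ≥ 0, the matrix products satisfy [Φ_S(t,τ)]_{ij} · y_i(t) = [Φ_W(t,τ)]_{ij} · y_j(τ). -/
open Finset

/-- The matrix `S(t)` with entries `s_ij(t) = w_ij(t) y_j(t) / (Σ_k w_ik(t) y_k(t))`. -/
noncomputable def Smat {n : ℕ} (W : ℕ → Matrix (Fin n) (Fin n) ℝ) (y : ℕ → Fin n → ℝ)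
    (t : ℕ) : Matrix (Fin n) (Fin n) ℝ :=
  fun i j => W t i j * y t j / ∑ k, W t i k * y t k

/-- Auxiliary backward product: `phiAux M τ k = M (τ+k-1) * ⋯ * M (τ+1) * M τ`. -/
def phiAux {n : ℕ} (M : ℕ → Matrix (Fin n) (Fin n) ℝ) (τ : ℕ) :
    ℕ → Matrix (Fin n) (Fin n) ℝ
  | 0 => 1
  | k + 1 => M (τ + k) * phiAux M τ k

/-- Backward product `Φ_M(t,τ) = M(t-1) * ⋯ * M(τ+1) * M(τ)` for `t > τ`. -/
def Phi {n : ℕ} (M : ℕ → Matrix (Fin n) (Fin n) ℝ) (t τ : ℕ) :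
    Matrix (Fin n) (Fin n) ℝ :=
  phiAux M τ (t - τ)

/-- For all `i, j` and `t > τ ≥ 0`: `[Φ_S(t,τ)]_{ij} y_i(t) = [Φ_W(t,τ)]_{ij} y_j(τ)`. -/
theorem phiS_phiW_relation (n : ℕ) (hn : 1 ≤ n)
    (W : ℕ → Matrix (Fin n) (Fin n) ℝ)
    (hWnonneg : ∀ t i j, 0 ≤ W t i j)
    (hWcol : ∀ t j, ∑ i, W t i j = 1)
    (hWdiag : ∀ t i, 0 < W t i i)
    (y : ℕ → Fin n → ℝ)
    (hy0 : ∀ i, y 0 i = 1)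
    (hy : ∀ t i, y (t + 1) i = ∑ j, W t i j * y t j)
    (hypos : ∀ t i, 0 < y t i) :
    ∀ i j : Fin n, ∀ t τ : ℕ, τ < t →
      Phi (Smat W y) t τ i j * y t i = Phi W t τ i j * y τ j := by
  have hS : ∀ t i j, Smat W y t i j * y (t + 1) i = W t i j * y t j := by
    intro t i j
    have hd : (∑ k, W t i k * y t k) = y (t + 1) i := (hy t i).symm
    have hne : y (t + 1) i ≠ 0 := (hypos (t + 1) i).ne'
    rw [Smat, hd, div_mul_cancel₀ _ hne]
  have key : ∀ τ k, ∀ i j : Fin n,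
      phiAux (Smat W y) τ k i j * y (τ + k) i = phiAux W τ k i j * y τ j := by
    intro τ k
    induction k with
    | zero =>
      intro i j
      simp only [phiAux, Nat.add_zero]
      by_cases h : i = j
      · subst h; rfl
      · simp [Matrix.one_apply_ne h]
    | succ k ih =>
      intro i j
      show (Smat W y (τ + k) * phiAux (Smat W y) τ k) i j * y (τ + (k + 1)) i
          = (W (τ + k) * phiAux W τ k) i j * y τ j
      rw [Matrix.mul_apply, Matrix.mul_apply, Finset.sum_mul, Finset.sum_mul]
      apply Finset.sum_congr rfl
      intro l _
      have h1 : Smat W y (τ + k) i l * y (τ + k + 1) i = W (τ + k) i l * y (τ + k) l :=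
        hS (τ + k) i l
      calc Smat W y (τ + k) i l * phiAux (Smat W y) τ k l j * y (τ + (k + 1)) i
          = (Smat W y (τ + k) i l * y (τ + k + 1) i) * phiAux (Smat W y) τ k l j := by
            ring_nf
        _ = W (τ + k) i l * (phiAux (Smat W y) τ k l j * y (τ + k) l) := by
            rw [h1]; ring
        _ = W (τ + k) i l * (phiAux W τ k l j * y τ j) := by rw [ih]
        _ = W (τ + k) i l * phiAux W τ k l j * y τ j := by ring
  intro i j t τ hτ
  have ht : τ + (t - τ) = t := Nat.add_sub_cancel' hτ.le
  have := key τ (t - τ) i j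
  rw [ht] at this
  exact this
end

section
/- Suppose the sequence of directed graphs {G(t)} associated with the column stochastic matrices {W(t)} is uniformly strongly connected. Then for any fixed τ ≥ 0 and all i, j ∈ {1,…,n}, the entries of the backward product of the matrices S converge: lim_{t→∞} [Φ_S(t,τ)]_{ij} = y_j(τ)/n; that is, S(t)···S(τ+1)S(τ) converges to (1/n)·𝟙·y(τ)ᵀ as t → ∞. -/
open Finset Filter

section PushSumAuxSec

namespace PushSumAux
variable {y : ℕ → Fin n → ℝ} {L : ℕ} {β : ℝ}

variable {n : ℕ}

lemma Phi_self (M : ℕ → Matrix (Fin n) (Fin n) ℝ) (τ : ℕ) : Phi M τ τ = 1 := by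
  simp [Phi, phiAux]

lemma Phi_succ (M : ℕ → Matrix (Fin n) (Fin n) ℝ) {τ t : ℕ} (h : τ ≤ t) :
    Phi M (t + 1) τ = M t * Phi M t τ := by
  unfold Phi
  rw [Nat.succ_sub h]
  show phiAux M τ ((t - τ) + 1) = _
  rw [phiAux, Nat.add_sub_cancel' h]

lemma Phi_mul (M : ℕ → Matrix (Fin n) (Fin n) ℝ) {τ s t : ℕ} (hτ : τ ≤ s) (hs : s ≤ t) :
    Phi M t τ = Phi M t s * Phi M s τ := by
  induction t, hs using Nat.le_induction with
  | base => rw [Phi_self, one_mul]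
  | succ t ht ih =>
      rw [Phi_succ M (hτ.trans ht), ih, Phi_succ M ht, mul_assoc]

lemma mul_entry_pos {A B : Matrix (Fin n) (Fin n) ℝ} (hA : ∀ i j, 0 ≤ A i j)
    (hB : ∀ i j, 0 ≤ B i j) {i c j : Fin n} (h1 : 0 < A i c) (h2 : 0 < B c j) :
    0 < (A * B) i j := by
  rw [Matrix.mul_apply]
  exact Finset.sum_pos' (fun k _ => mul_nonneg (hA i k) (hB k j))
    ⟨c, mem_univ c, mul_pos h1 h2⟩

variable {W : ℕ → Matrix (Fin n) (Fin n) ℝ}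

lemma PhiW_nonneg (hWnonneg : ∀ t i j, 0 ≤ W t i j) {τ t : ℕ} (h : τ ≤ t) :
    ∀ i j, 0 ≤ Phi W t τ i j := by
  induction t, h using Nat.le_induction with
  | base => intro i j; rw [Phi_self]; rw [Matrix.one_apply]; split <;> norm_num
  | succ t ht ih =>
      intro i j
      rw [Phi_succ _ ht, Matrix.mul_apply]
      exact Finset.sum_nonneg fun c _ => mul_nonneg (hWnonneg t i c) (ih c j)

lemma PhiW_diag_pos (hWnonneg : ∀ t i j, 0 ≤ W t i j) (hWdiag : ∀ t i, 0 < W t i i)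
    {τ t : ℕ} (h : τ ≤ t) : ∀ i, 0 < Phi W t τ i i := by
  induction t, h using Nat.le_induction with
  | base => intro i; rw [Phi_self]; simp
  | succ t ht ih =>
      intro i
      rw [Phi_succ _ ht]
      exact mul_entry_pos (hWnonneg t) (PhiW_nonneg hWnonneg ht) (hWdiag t i) (ih i)

lemma PhiW_pos_mono (hWnonneg : ∀ t i j, 0 ≤ W t i j) (hWdiag : ∀ t i, 0 < W t i i)
    {τ s t : ℕ} (h1 : τ ≤ s) (h2 : s ≤ t) {i j : Fin n}
    (hpos : 0 < Phi W s τ i j) : 0 < Phi W t τ i j := by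
  induction t, h2 using Nat.le_induction with
  | base => exact hpos
  | succ t ht ih =>
      rw [Phi_succ _ (h1.trans ht)]
      exact mul_entry_pos (hWnonneg t) (PhiW_nonneg hWnonneg (h1.trans ht)) (hWdiag t i) ih

lemma PhiW_entry_lb (hWnonneg : ∀ t i j, 0 ≤ W t i j) {β : ℝ}
    (hWβ : ∀ t i j, 0 < W t i j → β ≤ W t i j) (hβ : 0 < β)
    {τ t : ℕ} (h : τ ≤ t) : ∀ i j, 0 < Phi W t τ i j → β ^ (t - τ) ≤ Phi W t τ i j := by
  induction t, h using Nat.le_induction with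
  | base =>
      intro i j hpos
      rw [Phi_self] at hpos ⊢
      rw [Nat.sub_self, pow_zero]
      rw [Matrix.one_apply] at hpos ⊢
      split <;> simp_all
  | succ t ht ih =>
      intro i j hpos
      rw [Phi_succ _ ht, Matrix.mul_apply] at hpos ⊢
      have hnn : ∀ c ∈ Finset.univ, 0 ≤ W t i c * Phi W t τ c j :=
        fun c _ => mul_nonneg (hWnonneg t i c) (PhiW_nonneg hWnonneg ht c j)
      obtain ⟨c, _, hc⟩ : ∃ c ∈ Finset.univ, 0 < W t i c * Phi W t τ c j := by
        by_contra hcon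
        push_neg at hcon
        have := Finset.sum_nonpos (fun c hc => hcon c hc)
        linarith
      have hWc : 0 < W t i c := by
        rcases mul_pos_iff.mp hc with ⟨h1, _⟩ | ⟨h1, _⟩
        · exact h1
        · exact absurd h1 (not_lt.2 (hWnonneg t i c))
      have hPc : 0 < Phi W t τ c j := by
        rcases mul_pos_iff.mp hc with ⟨_, h2⟩ | ⟨h2, _⟩
        · exact h2
        · exact absurd h2 (not_lt.2 (hWnonneg t i c))
      have hterm : β ^ (t + 1 - τ) ≤ W t i c * Phi W t τ c j := by
        rw [Nat.succ_sub ht, pow_succ]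
        calc β ^ (t - τ) * β ≤ Phi W t τ c j * W t i c :=
              mul_le_mul (ih c j hPc) (hWβ t i c hWc) hβ.le
                (PhiW_nonneg hWnonneg ht c j)
          _ = W t i c * Phi W t τ c j := mul_comm _ _
      calc β ^ (t + 1 - τ) ≤ W t i c * Phi W t τ c j := hterm
        _ ≤ ∑ k, W t i k * Phi W t τ k j := Finset.single_le_sum hnn (mem_univ c)


lemma crossing {α : Type*} (rel : α → α → Prop) (P : α → Prop) :
    ∀ {a b : α}, Relation.TransGen rel a b → P a → ¬ P b →
      ∃ x y, P x ∧ ¬ P y ∧ rel x y := by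
  intro a b h
  induction h with
  | @single c h => exact fun ha hb => ⟨a, c, ha, hb, h⟩
  | @tail c d h1 h2 ih =>
      intro ha hb
      by_cases hc : P c
      · exact ⟨c, d, hc, hb, h2⟩
      · exact ih ha hc

variable {W : ℕ → Matrix (Fin n) (Fin n) ℝ} {y : ℕ → Fin n → ℝ} {L : ℕ} {β : ℝ}

lemma ypos (hWnonneg : ∀ t i j, 0 ≤ W t i j) (hWdiag : ∀ t i, 0 < W t i i)
    (hy0 : ∀ i, y 0 i = 1) (hy : ∀ t i, y (t + 1) i = ∑ j, W t i j * y t j) :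
    ∀ t i, 0 < y t i := by
  intro t
  induction t with
  | zero => intro i; rw [hy0]; norm_num
  | succ t ih =>
      intro i; rw [hy]
      exact Finset.sum_pos' (fun j _ => mul_nonneg (hWnonneg t i j) (ih j).le)
        ⟨i, mem_univ i, mul_pos (hWdiag t i) (ih i)⟩

lemma ysum (hWcol : ∀ t j, ∑ i, W t i j = 1)
    (hy0 : ∀ i, y 0 i = 1) (hy : ∀ t i, y (t + 1) i = ∑ j, W t i j * y t j) :
    ∀ t, ∑ i, y t i = n := by
  intro t
  induction t with
  | zero => simp [hy0]
  | succ t ih =>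
      simp_rw [hy]
      rw [Finset.sum_comm]
      simp_rw [← Finset.sum_mul, hWcol, one_mul]
      exact ih

lemma yle (hWnonneg : ∀ t i j, 0 ≤ W t i j) (hWcol : ∀ t j, ∑ i, W t i j = 1)
    (hWdiag : ∀ t i, 0 < W t i i)
    (hy0 : ∀ i, y 0 i = 1) (hy : ∀ t i, y (t + 1) i = ∑ j, W t i j * y t j) :
    ∀ t i, y t i ≤ n := by
  intro t i
  have h := ysum hWcol hy0 hy t
  have := Finset.single_le_sum (f := fun i => y t i)
    (fun j _ => (ypos hWnonneg hWdiag hy0 hy t j).le) (mem_univ i)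
  linarith


lemma PhiW_reach (hWnonneg : ∀ t i j, 0 ≤ W t i j) (hWdiag : ∀ t i, 0 < W t i i)
    (hconn : ∀ t : ℕ, ∀ i j : Fin n,
      Relation.TransGen (fun a b => ∃ k ∈ Finset.Ico t (t + L), 0 < W k b a) i j)
    (t : ℕ) (i j : Fin n) : 0 < Phi W (t + n * L) t i j := by
  classical
  set F : ℕ → Finset (Fin n) :=
    fun m => univ.filter (fun i => 0 < Phi W (t + m * L) t i j) with hF
  have hmemF : ∀ m i, i ∈ F m ↔ 0 < Phi W (t + m * L) t i j := by
    intro m i; simp [hF]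
  have hle : ∀ m : ℕ, t ≤ t + m * L := fun m => Nat.le_add_right _ _
  have hstep : ∀ m : ℕ, t + m * L ≤ t + (m + 1) * L := by
    intro m
    have : m * L ≤ (m + 1) * L := Nat.mul_le_mul_right L (Nat.le_succ m)
    omega
  have hj : ∀ m, j ∈ F m := fun m =>
    (hmemF m j).2 (PhiW_diag_pos hWnonneg hWdiag (hle m) j)
  have hmono : ∀ m, F m ⊆ F (m + 1) := by
    intro m i hi
    rw [hmemF] at hi ⊢
    rw [Phi_mul W (hle m) (hstep m)]
    exact mul_entry_pos (PhiW_nonneg hWnonneg (hstep m)) (PhiW_nonneg hWnonneg (hle m))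
      (PhiW_diag_pos hWnonneg hWdiag (hstep m) i) hi
  have hgrow : ∀ m, F m ≠ univ → (F m).card + 1 ≤ (F (m + 1)).card := by
    intro m hne
    obtain ⟨a, ha⟩ : ∃ a, a ∉ F m := by
      by_contra h; push_neg at h; exact hne (Finset.eq_univ_iff_forall.2 h)
    obtain ⟨x, d, hx, hd, k, hk, hWk⟩ :
        ∃ x d, x ∈ F m ∧ d ∉ F m ∧ ∃ k ∈ Finset.Ico (t + m * L) (t + m * L + L), 0 < W k d x :=
      crossing _ (fun z => z ∈ F m) (hconn (t + m * L) j a) (hj m) ha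
    have hkmem := Finset.mem_Ico.mp hk
    have hk2 : k + 1 ≤ t + (m + 1) * L := by
      have : (m + 1) * L = m * L + L := by ring
      omega
    have hwin : 0 < Phi W (t + (m + 1) * L) (t + m * L) d x := by
      have h1 : 0 < Phi W (k + 1) (t + m * L) d x := by
        rw [Phi_succ W hkmem.1]
        exact mul_entry_pos (hWnonneg k) (PhiW_nonneg hWnonneg hkmem.1) hWk
          (PhiW_diag_pos hWnonneg hWdiag hkmem.1 x)
      exact PhiW_pos_mono hWnonneg hWdiag (Nat.le_succ_of_le hkmem.1) hk2 h1
    have hdF : d ∈ F (m + 1) := by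
      rw [hmemF]
      rw [Phi_mul W (hle m) (hstep m)]
      exact mul_entry_pos (PhiW_nonneg hWnonneg (hstep m)) (PhiW_nonneg hWnonneg (hle m))
        hwin ((hmemF m x).1 hx)
    calc (F m).card + 1 = (insert d (F m)).card := (Finset.card_insert_of_notMem hd).symm
      _ ≤ (F (m + 1)).card := Finset.card_le_card (Finset.insert_subset hdF (hmono m))
  have hcard : ∀ m, min n (m + 1) ≤ (F m).card := by
    intro m
    induction m with
    | zero =>
        have : 0 < (F 0).card := Finset.card_pos.2 ⟨j, hj 0⟩
        omega
    | succ m ih =>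
        by_cases hu : F m = univ
        · have h1 : F (m + 1) = univ := Finset.univ_subset_iff.mp (hu ▸ hmono m)
          rw [h1, Finset.card_univ, Fintype.card_fin]
          omega
        · have h1 := hgrow m hu
          have h2 : (F m).card < n := by
            have hle' : (F m).card ≤ n := by
              have := Finset.card_le_univ (F m)
              simpa using this
            rcases lt_or_eq_of_le hle' with h | h
            · exact h
            · exact absurd (Finset.eq_univ_of_card _ (by simpa using h)) hu
          omega
  have huniv : i ∈ F n := by
    have h1 := hcard n
    have h2 : min n (n + 1) = n := Nat.min_eq_left (Nat.le_succ n)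
    have h3 : (F n).card ≤ n := by simpa using Finset.card_le_univ (F n)
    have : F n = univ := Finset.eq_univ_of_card _ (by simp; omega)
    rw [this]; exact mem_univ i
  exact (hmemF n i).1 huniv

-- column sums of Phi W are 1
lemma PhiW_colsum (hWcol : ∀ t j, ∑ i, W t i j = 1) {τ t : ℕ} (h : τ ≤ t) (j : Fin n) :
    ∑ i, Phi W t τ i j = 1 := by
  induction t, h using Nat.le_induction with
  | base => rw [Phi_self]; simp [Matrix.one_apply]
  | succ t ht ih =>
      rw [Phi_succ _ ht]
      simp_rw [Matrix.mul_apply]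
      rw [Finset.sum_comm]
      simp_rw [← Finset.sum_mul, hWcol, one_mul]
      exact ih

lemma y_eq (hy : ∀ t i, y (t + 1) i = ∑ j, W t i j * y t j) {τ t : ℕ} (h : τ ≤ t) :
    ∀ i, y t i = ∑ j, Phi W t τ i j * y τ j := by
  induction t, h using Nat.le_induction with
  | base => intro i; rw [Phi_self]; simp [Matrix.one_apply]
  | succ t ht ih =>
      intro i
      rw [hy, Phi_succ _ ht]
      simp_rw [Matrix.mul_apply, Finset.sum_mul]
      rw [Finset.sum_comm]
      congr 1; funext c
      rw [ih c, Finset.mul_sum]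
      congr 1; funext j
      ring

lemma y_lb (hWnonneg : ∀ t i j, 0 ≤ W t i j) (hWcol : ∀ t j, ∑ i, W t i j = 1)
    (hWdiag : ∀ t i, 0 < W t i i)
    (hWβ : ∀ t i j, 0 < W t i j → β ≤ W t i j) (hβ : 0 < β)
    (hconn : ∀ t : ℕ, ∀ i j : Fin n, Relation.TransGen (fun a b => ∃ k ∈ Finset.Ico t (t + L), 0 < W k b a) i j)
    (hy0 : ∀ i, y 0 i = 1) (hy : ∀ t i, y (t + 1) i = ∑ j, W t i j * y t j)
    {t : ℕ} (h : n * L ≤ t) (i : Fin n) : β ^ (n * L) * n ≤ y t i := by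
  obtain ⟨s, rfl⟩ : ∃ s, t = s + n * L := ⟨t - n * L, by omega⟩
  have hyeq := y_eq hy (Nat.le_add_right s (n * L)) (W := W) (τ := s) i
  have hlb : ∀ j, β ^ (n * L) ≤ Phi W (s + n * L) s i j := by
    intro j
    have hpos := PhiW_reach hWnonneg hWdiag hconn s i j
    have := PhiW_entry_lb hWnonneg hWβ hβ (Nat.le_add_right s (n * L)) i j hpos
    simpa using this
  calc β ^ (n * L) * (n : ℝ) = β ^ (n * L) * ∑ j, y s j := by
        rw [ysum hWcol hy0 hy]
    _ = ∑ j, β ^ (n * L) * y s j := Finset.mul_sum _ _ _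
    _ ≤ ∑ j, Phi W (s + n * L) s i j * y s j := by
        apply Finset.sum_le_sum
        intro j _
        exact mul_le_mul_of_nonneg_right (hlb j) (ypos hWnonneg hWdiag hy0 hy s j).le
    _ = y (s + n * L) i := hyeq.symm

lemma PhiS_eq (hWnonneg : ∀ t i j, 0 ≤ W t i j) (hWdiag : ∀ t i, 0 < W t i i)
    (hy0 : ∀ i, y 0 i = 1) (hy : ∀ t i, y (t + 1) i = ∑ j, W t i j * y t j)
    {τ t : ℕ} (h : τ ≤ t) :
    ∀ i j, Phi (Smat W y) t τ i j = Phi W t τ i j * y τ j / y t i := by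
  have hyp := ypos hWnonneg hWdiag hy0 hy
  induction t, h using Nat.le_induction with
  | base =>
      intro i j
      simp only [Phi_self, Matrix.one_apply]
      split
      · rename_i hij
        subst hij
        rw [one_mul, div_self (hyp τ i).ne']
      · rw [zero_mul, zero_div]
  | succ t ht ih =>
      intro i j
      rw [Phi_succ _ ht, Phi_succ _ ht, Matrix.mul_apply, Matrix.mul_apply]
      have hden : ∀ i', ∑ k, W t i' k * y t k = y (t + 1) i' := fun i' => (hy t i').symm
      have hterm : ∀ c, Smat W y t i c * Phi (Smat W y) t τ c j
          = (W t i c * Phi W t τ c j) * (y τ j / y (t + 1) i) := by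
        intro c
        rw [ih c j, Smat, hden i]
        have h1 : y t c ≠ 0 := (hyp t c).ne'
        have h2 : y (t + 1) i ≠ 0 := (hyp (t + 1) i).ne'
        field_simp
      simp_rw [hterm]
      rw [← Finset.sum_mul, mul_div_assoc]


lemma PhiS_nonneg (hWnonneg : ∀ t i j, 0 ≤ W t i j) (hWdiag : ∀ t i, 0 < W t i i)
    (hy0 : ∀ i, y 0 i = 1) (hy : ∀ t i, y (t + 1) i = ∑ j, W t i j * y t j)
    {τ t : ℕ} (h : τ ≤ t) : ∀ i j, 0 ≤ Phi (Smat W y) t τ i j := by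
  intro i j
  rw [PhiS_eq hWnonneg hWdiag hy0 hy h]
  have h1 := PhiW_nonneg hWnonneg h i j
  have h2 := (ypos hWnonneg hWdiag hy0 hy τ j).le
  have h3 := (ypos hWnonneg hWdiag hy0 hy t i).le
  positivity

lemma PhiS_rowsum (hWnonneg : ∀ t i j, 0 ≤ W t i j) (hWdiag : ∀ t i, 0 < W t i i)
    (hy0 : ∀ i, y 0 i = 1) (hy : ∀ t i, y (t + 1) i = ∑ j, W t i j * y t j)
    {τ t : ℕ} (h : τ ≤ t) (i : Fin n) : ∑ j, Phi (Smat W y) t τ i j = 1 := by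
  simp_rw [PhiS_eq hWnonneg hWdiag hy0 hy h, div_eq_mul_inv, ← Finset.sum_mul]
  rw [← y_eq hy h i, mul_inv_cancel₀ (ypos hWnonneg hWdiag hy0 hy t i).ne']

lemma mass (hWnonneg : ∀ t i j, 0 ≤ W t i j) (hWcol : ∀ t j, ∑ i, W t i j = 1)
    (hWdiag : ∀ t i, 0 < W t i i)
    (hy0 : ∀ i, y 0 i = 1) (hy : ∀ t i, y (t + 1) i = ∑ j, W t i j * y t j)
    {τ t : ℕ} (h : τ ≤ t) (j : Fin n) :
    ∑ i, y t i * Phi (Smat W y) t τ i j = y τ j := by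
  have hyp := ypos hWnonneg hWdiag hy0 hy
  have hterm : ∀ i, y t i * Phi (Smat W y) t τ i j = Phi W t τ i j * y τ j := by
    intro i
    rw [PhiS_eq hWnonneg hWdiag hy0 hy h]
    field_simp [(hyp t i).ne']
  simp_rw [hterm]
  rw [← Finset.sum_mul, PhiW_colsum hWcol h, one_mul]

lemma PhiS_lb (hn : 1 ≤ n) (hWnonneg : ∀ t i j, 0 ≤ W t i j) (hWcol : ∀ t j, ∑ i, W t i j = 1)
    (hWdiag : ∀ t i, 0 < W t i i)
    (hWβ : ∀ t i j, 0 < W t i j → β ≤ W t i j) (hβ : 0 < β)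
    (hconn : ∀ t : ℕ, ∀ i j : Fin n, Relation.TransGen (fun a b => ∃ k ∈ Finset.Ico t (t + L), 0 < W k b a) i j)
    (hy0 : ∀ i, y 0 i = 1) (hy : ∀ t i, y (t + 1) i = ∑ j, W t i j * y t j)
    {t : ℕ} (h : n * L ≤ t) (i j : Fin n) :
    β ^ (2 * (n * L)) ≤ Phi (Smat W y) (t + n * L) t i j := by
  have hnR : (0 : ℝ) < n := by exact_mod_cast hn
  have hyp := ypos hWnonneg hWdiag hy0 hy
  rw [PhiS_eq hWnonneg hWdiag hy0 hy (Nat.le_add_right t (n * L))]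
  have h1 : β ^ (n * L) ≤ Phi W (t + n * L) t i j := by
    have hpos := PhiW_reach hWnonneg hWdiag hconn t i j
    have := PhiW_entry_lb hWnonneg hWβ hβ (Nat.le_add_right t (n * L)) i j hpos
    simpa using this
  have h2 : β ^ (n * L) * n ≤ y t j := y_lb hWnonneg hWcol hWdiag hWβ hβ hconn hy0 hy h j
  have h3 : y (t + n * L) i ≤ n := yle hWnonneg hWcol hWdiag hy0 hy _ i
  have h4 : β ^ (n * L) * (β ^ (n * L) * n) ≤ Phi W (t + n * L) t i j * y t j :=
    mul_le_mul h1 h2 (by positivity) (le_trans (by positivity) h1)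
  calc β ^ (2 * (n * L)) = β ^ (n * L) * (β ^ (n * L) * n) / n := by
        field_simp
        ring
    _ ≤ Phi W (t + n * L) t i j * y t j / y (t + n * L) i :=
        div_le_div₀ (mul_nonneg (PhiW_nonneg hWnonneg (Nat.le_add_right t (n * L)) i j)
          (hyp t j).le) h4 (hyp _ i) h3


/-- Oscillation contraction for row-stochastic products. -/
lemma osc_contract (hn : 1 ≤ n) (hWnonneg : ∀ t i j, 0 ≤ W t i j) (hWdiag : ∀ t i, 0 < W t i i)
    (hy0 : ∀ i, y 0 i = 1) (hy : ∀ t i, y (t + 1) i = ∑ j, W t i j * y t j)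
    {τ t1 t2 : ℕ} (h1 : τ ≤ t1) (h2 : t1 ≤ t2) {r : ℝ} (hr : 0 ≤ r)
    (hA : ∀ i c, r ≤ Phi (Smat W y) t2 t1 i c) (j : Fin n)
    (ne : (univ : Finset (Fin n)).Nonempty) :
    univ.sup' ne (fun i => Phi (Smat W y) t2 τ i j)
      - univ.inf' ne (fun i => Phi (Smat W y) t2 τ i j)
    ≤ (1 - r) * (univ.sup' ne (fun i => Phi (Smat W y) t1 τ i j)
      - univ.inf' ne (fun i => Phi (Smat W y) t1 τ i j)) := by
  classical
  set S := Smat W y with hS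
  set A := Phi S t2 t1 with hA'
  set P := Phi S t1 τ with hP
  set Mx1 := univ.sup' ne (fun i => P i j) with hMx1
  set mn1 := univ.inf' ne (fun i => P i j) with hmn1
  have hrow : ∀ i, ∑ c, A i c = 1 := fun i => PhiS_rowsum hWnonneg hWdiag hy0 hy h2 i
  have hAnn : ∀ i c, 0 ≤ A i c := fun i c => le_trans hr (hA i c)
  obtain ⟨c0, _, hc0⟩ := Finset.exists_mem_eq_inf' ne (fun i => P i j)
  have hub : ∀ c, P c j ≤ Mx1 := fun c => Finset.le_sup' (fun i => P i j) (mem_univ c)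
  have hlbP : ∀ c, mn1 ≤ P c j := fun c => Finset.inf'_le (fun i => P i j) (mem_univ c)
  have hosc : 0 ≤ Mx1 - mn1 := by
    have := hub c0
    have := hlbP c0
    linarith
  have hPeq : Phi S t2 τ = A * P := Phi_mul S h1 h2
  have hup : ∀ i, Phi S t2 τ i j ≤ Mx1 - r * (Mx1 - mn1) := by
    intro i
    rw [hPeq, Matrix.mul_apply]
    have hsplit : ∑ c, A i c * (P c j - Mx1) = (∑ c, A i c * P c j) - Mx1 := by
      simp_rw [mul_sub]
      rw [Finset.sum_sub_distrib, ← Finset.sum_mul, hrow, one_mul]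
    have hsum_le : ∑ c, A i c * (P c j - Mx1) ≤ A i c0 * (P c0 j - Mx1) := by
      have h0 : ∑ c ∈ univ.erase c0, A i c * (P c j - Mx1) ≤ 0 :=
        Finset.sum_nonpos fun c _ =>
          mul_nonpos_of_nonneg_of_nonpos (hAnn i c) (sub_nonpos.2 (hub c))
      calc ∑ c, A i c * (P c j - Mx1)
          = A i c0 * (P c0 j - Mx1) + ∑ c ∈ univ.erase c0, A i c * (P c j - Mx1) :=
            (Finset.add_sum_erase _ _ (mem_univ c0)).symm
        _ ≤ A i c0 * (P c0 j - Mx1) := by linarith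
    have hc0le : A i c0 * (P c0 j - Mx1) ≤ r * (mn1 - Mx1) := by
      have he : P c0 j = mn1 := hc0.symm
      rw [he]
      have hnp : mn1 - Mx1 ≤ 0 := by linarith
      exact mul_le_mul_of_nonpos_right (hA i c0) hnp
    have := hsplit ▸ (le_trans hsum_le hc0le)
    linarith [hsplit, hsum_le, hc0le]
  have hdown : ∀ i, mn1 ≤ Phi S t2 τ i j := by
    intro i
    rw [hPeq, Matrix.mul_apply]
    calc mn1 = ∑ c, A i c * mn1 := by rw [← Finset.sum_mul, hrow, one_mul]
      _ ≤ ∑ c, A i c * P c j := Finset.sum_le_sum fun c _ =>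
          mul_le_mul_of_nonneg_left (hlbP c) (hAnn i c)
  have hMx2 : univ.sup' ne (fun i => Phi S t2 τ i j) ≤ Mx1 - r * (Mx1 - mn1) :=
    Finset.sup'_le ne _ fun i _ => hup i
  have hmn2 : mn1 ≤ univ.inf' ne (fun i => Phi S t2 τ i j) :=
    Finset.le_inf' ne _ fun i _ => hdown i
  nlinarith [hMx2, hmn2]

end PushSumAux
end PushSumAuxSec

open PushSumAux in
/-- Under uniform strong connectivity, `S(t)⋯S(τ+1)S(τ) → (1/n)·𝟙·y(τ)ᵀ`
entrywise as `t → ∞`, for every fixed `τ`. -/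
theorem phiS_tendsto (n : ℕ) (hn : 1 ≤ n)
    (W : ℕ → Matrix (Fin n) (Fin n) ℝ)
    (hWnonneg : ∀ t i j, 0 ≤ W t i j)
    (hWcol : ∀ t j, ∑ i, W t i j = 1)
    (hWdiag : ∀ t i, 0 < W t i i)
    (β : ℝ) (hβ : 0 < β)
    (hWβ : ∀ t i j, 0 < W t i j → β ≤ W t i j)
    (L : ℕ) (hL : 0 < L)
    (hconn : ∀ t : ℕ, ∀ i j : Fin n,
      Relation.TransGen (fun a b => ∃ k ∈ Finset.Ico t (t + L), 0 < W k b a) i j)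
    (y : ℕ → Fin n → ℝ)
    (hy0 : ∀ i, y 0 i = 1)
    (hy : ∀ t i, y (t + 1) i = ∑ j, W t i j * y t j) :
    ∀ τ : ℕ, ∀ i j : Fin n,
      Tendsto (fun t => Phi (Smat W y) t τ i j) atTop (nhds (y τ j / n)) := by

  intro τ i j
  classical
  have hne : (univ : Finset (Fin n)).Nonempty := ⟨⟨0, hn⟩, mem_univ _⟩
  have hyp := ypos hWnonneg hWdiag hy0 hy
  have hnR : (0:ℝ) < n := by exact_mod_cast hn
  have hδpos : 0 < β ^ (2 * (n * L)) := pow_pos hβ _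
  have hδ1 : β ^ (2 * (n * L)) ≤ 1 := by
    have hlb := PhiS_lb hn hWnonneg hWcol hWdiag hWβ hβ hconn hy0 hy (le_refl (n * L)) i i
    have hrow := PhiS_rowsum hWnonneg hWdiag hy0 hy (Nat.le_add_right (n * L) (n * L)) i
    have hnn := PhiS_nonneg hWnonneg hWdiag hy0 hy (Nat.le_add_right (n * L) (n * L))
    calc β ^ (2 * (n * L)) ≤ Phi (Smat W y) (n * L + n * L) (n * L) i i := hlb
      _ ≤ ∑ c, Phi (Smat W y) (n * L + n * L) (n * L) i c :=
          Finset.single_le_sum (fun c _ => hnn i c) (mem_univ i)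
      _ = 1 := hrow
  set Mx : ℕ → ℝ := fun t => univ.sup' hne (fun i => Phi (Smat W y) t τ i j) with hMx
  set mn : ℕ → ℝ := fun t => univ.inf' hne (fun i => Phi (Smat W y) t τ i j) with hmn
  have hoscmono : ∀ t1 t2, τ ≤ t1 → t1 ≤ t2 → Mx t2 - mn t2 ≤ Mx t1 - mn t1 := by
    intro t1 t2 ha hb
    have := osc_contract hn hWnonneg hWdiag hy0 hy ha hb (le_refl (0:ℝ))
      (fun i c => PhiS_nonneg hWnonneg hWdiag hy0 hy hb i c) j hne
    calc Mx t2 - mn t2 ≤ (1 - 0) * (Mx t1 - mn t1) := this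
      _ = Mx t1 - mn t1 := by ring
  set t0 := τ + n * L with ht0
  have hcontract : ∀ q : ℕ,
      Mx (t0 + q * (n * L)) - mn (t0 + q * (n * L))
        ≤ (1 - β ^ (2 * (n * L))) ^ q * (Mx t0 - mn t0) := by
    intro q
    induction q with
    | zero => simp
    | succ q ih =>
        have hBle : n * L ≤ t0 + q * (n * L) := by omega
        have h1 : τ ≤ t0 + q * (n * L) := by omega
        have heq : t0 + (q + 1) * (n * L) = (t0 + q * (n * L)) + n * L := by ring
        have hA := fun i c =>
          PhiS_lb hn hWnonneg hWcol hWdiag hWβ hβ hconn hy0 hy hBle i (j := c)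
        have hstep := osc_contract hn hWnonneg hWdiag hy0 hy h1
          (Nat.le_add_right _ (n * L)) hδpos.le hA j hne
        rw [heq]
        calc Mx ((t0 + q * (n * L)) + n * L) - mn ((t0 + q * (n * L)) + n * L)
            ≤ (1 - β ^ (2 * (n * L))) * (Mx (t0 + q * (n * L)) - mn (t0 + q * (n * L))) := hstep
          _ ≤ (1 - β ^ (2 * (n * L))) * ((1 - β ^ (2 * (n * L))) ^ q * (Mx t0 - mn t0)) :=
              mul_le_mul_of_nonneg_left ih (by linarith)
          _ = (1 - β ^ (2 * (n * L))) ^ (q + 1) * (Mx t0 - mn t0) := by ring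
  have hsand : ∀ t, τ ≤ t → |Phi (Smat W y) t τ i j - y τ j / n| ≤ Mx t - mn t := by
    intro t ht
    have h1 : mn t ≤ Phi (Smat W y) t τ i j :=
      Finset.inf'_le (fun i => Phi (Smat W y) t τ i j) (mem_univ i)
    have h2 : Phi (Smat W y) t τ i j ≤ Mx t :=
      Finset.le_sup' (fun i => Phi (Smat W y) t τ i j) (mem_univ i)
    have hm := mass hWnonneg hWcol hWdiag hy0 hy ht j
    have hy_sum := ysum hWcol hy0 hy (W := W) t
    have h3 : y τ j ≤ (n:ℝ) * Mx t := by
      calc y τ j = ∑ c, y t c * Phi (Smat W y) t τ c j := hm.symm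
        _ ≤ ∑ c, y t c * Mx t := Finset.sum_le_sum fun c _ =>
            mul_le_mul_of_nonneg_left
              (Finset.le_sup' (fun i => Phi (Smat W y) t τ i j) (mem_univ c)) (hyp t c).le
        _ = (n:ℝ) * Mx t := by rw [← Finset.sum_mul, hy_sum]
    have h4 : (n:ℝ) * mn t ≤ y τ j := by
      calc (n:ℝ) * mn t = ∑ c, y t c * mn t := by rw [← Finset.sum_mul, hy_sum]
        _ ≤ ∑ c, y t c * Phi (Smat W y) t τ c j := Finset.sum_le_sum fun c _ =>
            mul_le_mul_of_nonneg_left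
              (Finset.inf'_le (fun i => Phi (Smat W y) t τ i j) (mem_univ c)) (hyp t c).le
        _ = y τ j := hm
    have h5 : mn t ≤ y τ j / n := by rw [le_div_iff₀ hnR]; linarith
    have h6 : y τ j / n ≤ Mx t := by rw [div_le_iff₀ hnR]; linarith
    rw [abs_sub_le_iff]
    constructor <;> linarith
  rw [Metric.tendsto_atTop]
  intro ε hε
  have hgeo : Tendsto (fun q : ℕ => (1 - β ^ (2 * (n * L))) ^ q * (Mx t0 - mn t0))
      atTop (nhds 0) := by
    have h1 : |1 - β ^ (2 * (n * L))| < 1 := abs_lt.2 ⟨by linarith, by linarith⟩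
    simpa using (tendsto_pow_atTop_nhds_zero_of_abs_lt_one h1).mul_const (Mx t0 - mn t0)
  obtain ⟨q, hq⟩ := Metric.tendsto_atTop.mp hgeo ε hε
  have hqq := hq q (le_refl q)
  rw [Real.dist_eq, sub_zero] at hqq
  have hq' : (1 - β ^ (2 * (n * L))) ^ q * (Mx t0 - mn t0) < ε := lt_of_abs_lt hqq
  refine ⟨t0 + q * (n * L), fun t ht => ?_⟩
  have hτt : τ ≤ t := by omega
  rw [Real.dist_eq]
  calc |Phi (Smat W y) t τ i j - y τ j / n| ≤ Mx t - mn t := hsand t hτt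
    _ ≤ Mx (t0 + q * (n * L)) - mn (t0 + q * (n * L)) := hoscmono _ _ (by omega) ht
    _ ≤ (1 - β ^ (2 * (n * L))) ^ q * (Mx t0 - mn t0) := hcontract q
    _ < ε := hq'
end

section
/- Suppose the sequence of directed graphs {G(t)} associated with the column stochastic matrices {W(t)} is uniformly strongly connected. Then there exist a constant C > 0 and a constant μ ∈ [0,1) such that for all i, j ∈ {1,…,n} and all integers t ≥ τ ≥ 0, | [Φ_S(t+1,τ)]_{ij} − y_j(τ)/n | ≤ C μ^{t−τ}; that is, S(t)···S(τ+1)S(τ) converges to (1/n)·𝟙·y(τ)ᵀ exponentially fast as t → ∞, uniformly in τ. -/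
open Finset

/-! ### Auxiliary material -/

set_option linter.unusedSectionVars false

section Osc
variable {n : ℕ} [Nonempty (Fin n)]

noncomputable def osc (v : Fin n → ℝ) : ℝ :=
  univ.sup' univ_nonempty v - univ.inf' univ_nonempty v

lemma le_sup'' (v : Fin n → ℝ) (i : Fin n) : v i ≤ univ.sup' univ_nonempty v :=
  Finset.le_sup' v (mem_univ i)

lemma inf_le'' (v : Fin n → ℝ) (i : Fin n) : univ.inf' univ_nonempty v ≤ v i :=
  Finset.inf'_le v (mem_univ i)

lemma osc_nonneg (v : Fin n → ℝ) : 0 ≤ osc v := by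
  obtain ⟨i⟩ := ‹Nonempty (Fin n)›
  have h1 := le_sup'' v i
  have h2 := inf_le'' v i
  unfold osc; linarith

lemma osc_le_of_bounds (v : Fin n → ℝ) (a b : ℝ) (h1 : ∀ i, a ≤ v i) (h2 : ∀ i, v i ≤ b) :
    osc v ≤ b - a := by
  unfold osc
  have hs : univ.sup' univ_nonempty v ≤ b := Finset.sup'_le _ _ fun i _ => h2 i
  have hi : a ≤ univ.inf' univ_nonempty v := Finset.le_inf' _ _ fun i _ => h1 i
  linarith

lemma abs_sub_le_osc (v : Fin n → ℝ) (c : ℝ) (i : Fin n)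
    (hc1 : univ.inf' univ_nonempty v ≤ c) (hc2 : c ≤ univ.sup' univ_nonempty v) :
    |v i - c| ≤ osc v := by
  have h1 := le_sup'' v i
  have h2 := inf_le'' v i
  rw [abs_le]; unfold osc; constructor <;> linarith

/-- A convex combination lies between inf and sup. -/
lemma combo_mem (v : Fin n → ℝ) (w : Fin n → ℝ) (hw : ∀ i, 0 ≤ w i) (hw1 : ∑ i, w i = 1) :
    univ.inf' univ_nonempty v ≤ ∑ i, w i * v i ∧ ∑ i, w i * v i ≤ univ.sup' univ_nonempty v := by
  constructor
  · calc univ.inf' univ_nonempty v = ∑ i, w i * univ.inf' univ_nonempty v := by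
          rw [← sum_mul, hw1, one_mul]
      _ ≤ ∑ i, w i * v i :=
          Finset.sum_le_sum fun i _ => mul_le_mul_of_nonneg_left (inf_le'' v i) (hw i)
  · calc ∑ i, w i * v i ≤ ∑ i, w i * univ.sup' univ_nonempty v :=
          Finset.sum_le_sum fun i _ => mul_le_mul_of_nonneg_left (le_sup'' v i) (hw i)
      _ = univ.sup' univ_nonempty v := by rw [← sum_mul, hw1, one_mul]

lemma osc_contract (A : Matrix (Fin n) (Fin n) ℝ) (η : ℝ) (hη0 : 0 ≤ η)
    (hA : ∀ i j, η ≤ A i j) (hrow : ∀ i, ∑ j, A i j = 1) (v : Fin n → ℝ) :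
    osc (A.mulVec v) ≤ (1 - η) * osc v := by
  set M := univ.sup' univ_nonempty v with hM
  set m := univ.inf' univ_nonempty v with hm
  obtain ⟨j0, -, hj0⟩ := Finset.exists_mem_eq_inf' (univ_nonempty (α := Fin n)) v
  have hmM : m ≤ M := by
    have := osc_nonneg v; unfold osc at this; linarith
  have hub : ∀ i, A.mulVec v i ≤ M - η * (M - m) := by
    intro i
    have hsplit : A.mulVec v i = A i j0 * v j0 + ∑ j ∈ univ.erase j0, A i j * v j := by
      rw [Matrix.mulVec, dotProduct]
      exact (Finset.add_sum_erase univ (fun j => A i j * v j) (mem_univ j0)).symm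
    have herase : ∑ j ∈ univ.erase j0, A i j * v j ≤ ∑ j ∈ univ.erase j0, A i j * M :=
      Finset.sum_le_sum fun j _ => mul_le_mul_of_nonneg_left (le_sup'' v j)
        (le_trans hη0 (hA i j))
    have hsum : ∑ j ∈ univ.erase j0, A i j = 1 - A i j0 := by
      have := Finset.add_sum_erase univ (fun j => A i j) (mem_univ j0)
      rw [hrow i] at this; linarith
    have : A.mulVec v i ≤ A i j0 * m + (1 - A i j0) * M := by
      rw [hsplit, ← hj0]
      have : ∑ j ∈ univ.erase j0, A i j * M = (1 - A i j0) * M := by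
        rw [← sum_mul, hsum]
      linarith [herase, this.symm ▸ herase]
    have hA0 : η ≤ A i j0 := hA i j0
    nlinarith [hA i j0]
  have hlb : ∀ i, m ≤ A.mulVec v i := by
    intro i
    have : ∑ j, A i j * m ≤ ∑ j, A i j * v j :=
      Finset.sum_le_sum fun j _ => mul_le_mul_of_nonneg_left (inf_le'' v j)
        (le_trans hη0 (hA i j))
    rw [← sum_mul, hrow i, one_mul] at this
    simpa [Matrix.mulVec, dotProduct] using this
  have := osc_le_of_bounds (A.mulVec v) m (M - η * (M - m)) hlb hub
  unfold osc at *
  nlinarith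

end Osc

lemma exit_edge {α : Type*} {r : α → α → Prop} {A : Finset α} {x y : α}
    (h : Relation.TransGen r x y) (hx : x ∈ A) (hy : y ∉ A) :
    ∃ a ∈ A, ∃ b, b ∉ A ∧ r a b := by
  induction h with
  | single h => exact ⟨x, hx, _, hy, h⟩
  | tail h1 h2 ih =>
    rename_i c d
    by_cases hc : c ∈ A
    · exact ⟨c, hc, d, hy, h2⟩
    · exact ih hc

section QW
variable {n : ℕ} (W : ℕ → Matrix (Fin n) (Fin n) ℝ)

lemma phiAux_succ_apply (τ k : ℕ) (i j : Fin n) :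
    phiAux W τ (k + 1) i j = ∑ m, W (τ + k) i m * phiAux W τ k m j := by
  simp [phiAux, Matrix.mul_apply]

lemma phiAux_add (τ a b : ℕ) :
    phiAux W τ (a + b) = phiAux W (τ + a) b * phiAux W τ a := by
  induction b with
  | zero => simp [phiAux]
  | succ b ih =>
    show phiAux W τ (a + b + 1) = _
    rw [show phiAux W τ (a+b+1) = W (τ + (a+b)) * phiAux W τ (a+b) from rfl, ih]
    rw [show phiAux W (τ+a) (b+1) = W (τ + a + b) * phiAux W (τ+a) b from rfl]
    rw [Matrix.mul_assoc, Nat.add_assoc]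

variable (hWnonneg : ∀ t i j, 0 ≤ W t i j) (hWcol : ∀ t j, ∑ i, W t i j = 1)
  (hWdiag : ∀ t i, 0 < W t i i) {β : ℝ} (hβ : 0 < β)
  (hWβ : ∀ t i j, 0 < W t i j → β ≤ W t i j)

include hWnonneg in
lemma Qnonneg (τ k : ℕ) (i j : Fin n) : 0 ≤ phiAux W τ k i j := by
  induction k generalizing i j with
  | zero =>
    have : phiAux W τ 0 i j = (1 : Matrix (Fin n) (Fin n) ℝ) i j := rfl
    rw [this, Matrix.one_apply]; positivity
  | succ k ih =>
    rw [phiAux_succ_apply]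
    exact Finset.sum_nonneg fun m _ => mul_nonneg (hWnonneg _ _ _) (ih _ _)

include hWcol in
lemma Qcolsum (τ k : ℕ) (j : Fin n) : ∑ i, phiAux W τ k i j = 1 := by
  induction k with
  | zero => simp [phiAux, Matrix.one_apply]
  | succ k ih =>
    simp only [phiAux_succ_apply]
    rw [Finset.sum_comm]
    simp only [← Finset.sum_mul, hWcol, one_mul]
    exact ih

include hWnonneg hWdiag in
lemma Qpos_mono (τ : ℕ) {k k' : ℕ} (hk : k ≤ k') {i j : Fin n}
    (h : 0 < phiAux W τ k i j) : 0 < phiAux W τ k' i j := by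
  induction k' with
  | zero => exact Nat.le_zero.mp hk ▸ h
  | succ k' ih =>
    rcases Nat.lt_or_ge k (k' + 1) with h' | h'
    · have hk' := ih (Nat.lt_succ_iff.mp h')
      rw [phiAux_succ_apply]
      exact Finset.sum_pos'
        (fun m _ => mul_nonneg (hWnonneg _ _ _) (Qnonneg W hWnonneg _ _ _ _))
        ⟨i, mem_univ i, mul_pos (hWdiag _ _) hk'⟩
    · exact (Nat.le_antisymm hk h') ▸ h

include hWnonneg hWdiag in
lemma Qstep_edge (τ k : ℕ) {a b j : Fin n} (hQ : 0 < phiAux W τ k a j)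
    (hW : 0 < W (τ + k) b a) : 0 < phiAux W τ (k + 1) b j := by
  rw [phiAux_succ_apply]
  exact Finset.sum_pos'
    (fun m _ => mul_nonneg (hWnonneg _ _ _) (Qnonneg W hWnonneg _ _ _ _))
    ⟨a, mem_univ a, mul_pos hW hQ⟩

include hWnonneg hβ hWβ in
lemma Qpos_ge (τ k : ℕ) (i j : Fin n) (h : 0 < phiAux W τ k i j) :
    β ^ k ≤ phiAux W τ k i j := by
  induction k generalizing i j with
  | zero =>
    have he : phiAux W τ 0 i j = (1 : Matrix (Fin n) (Fin n) ℝ) i j := rfl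
    rw [he, Matrix.one_apply] at h ⊢
    by_cases hij : i = j
    · rw [if_pos hij, pow_zero]
    · rw [if_neg hij] at h; exact absurd h (lt_irrefl 0)
  | succ k ih =>
    rw [phiAux_succ_apply] at h ⊢
    obtain ⟨m, -, hm⟩ := Finset.exists_lt_of_sum_lt (by simpa using h :
      ∑ _m : Fin n, (0:ℝ) < ∑ m, W (τ + k) i m * phiAux W τ k m j)
    have hWpos : 0 < W (τ + k) i m := by
      rcases lt_or_eq_of_le (hWnonneg (τ+k) i m) with h' | h'
      · exact h'
      · exfalso; rw [← h'] at hm; simp at hm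
    have hQpos : 0 < phiAux W τ k m j := by
      rcases lt_or_eq_of_le (Qnonneg W hWnonneg τ k m j) with h' | h'
      · exact h'
      · exfalso; rw [← h'] at hm; simp at hm
    calc β ^ (k+1) = β * β ^ k := by ring
      _ ≤ W (τ+k) i m * phiAux W τ k m j :=
          mul_le_mul (hWβ _ _ _ hWpos) (ih m j hQpos) (by positivity) (le_trans hβ.le (hWβ _ _ _ hWpos))
      _ ≤ ∑ m', W (τ + k) i m' * phiAux W τ k m' j :=
          Finset.single_le_sum (f := fun m' => W (τ+k) i m' * phiAux W τ k m' j)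
            (fun m' _ => mul_nonneg (hWnonneg _ _ _) (Qnonneg W hWnonneg _ _ _ _)) (mem_univ m)

variable {L : ℕ} (hL : 0 < L)
  (hconn : ∀ t : ℕ, ∀ i j : Fin n,
    Relation.TransGen (fun a b => ∃ k ∈ Finset.Ico t (t + L), 0 < W k b a) i j)

include hWnonneg hWdiag hL hconn in
lemma Qpos_all (hn : 1 ≤ n) (τ : ℕ) (i j : Fin n) : 0 < phiAux W τ (n * L) i j := by
  set A : ℕ → Finset (Fin n) :=
    fun r => univ.filter (fun i => 0 < phiAux W τ (r * L) i j) with hA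
  have hmem : ∀ r i, i ∈ A r ↔ 0 < phiAux W τ (r * L) i j := by
    intro r i; simp [hA]
  have hj0 : j ∈ A 0 := by
    rw [hmem]
    have : phiAux W τ 0 j j = (1 : Matrix (Fin n) (Fin n) ℝ) j j := rfl
    simp only [Nat.zero_mul, this, Matrix.one_apply_eq]
    norm_num
  have hmono : ∀ r, A r ⊆ A (r + 1) := by
    intro r x hx
    rw [hmem] at hx ⊢
    exact Qpos_mono W hWnonneg hWdiag τ (Nat.mul_le_mul_right L (Nat.le_succ r)) hx
  have hjr : ∀ r, j ∈ A r := by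
    intro r; induction r with
    | zero => exact hj0
    | succ r ih => exact hmono r ih
  have hcard : ∀ r, min (r + 1) n ≤ (A r).card := by
    intro r; induction r with
    | zero =>
      have : 0 < (A 0).card := Finset.card_pos.mpr ⟨j, hj0⟩
      omega
    | succ r ih =>
      by_cases hAr : A r = univ
      · have : A (r + 1) = univ := Finset.eq_univ_of_forall fun x => hmono r (hAr ▸ mem_univ x)
        rw [this, Finset.card_univ, Fintype.card_fin]
        omega
      · obtain ⟨b0, hb0⟩ : ∃ b, b ∉ A r := by
          by_contra hcon
          push_neg at hcon
          exact hAr (Finset.eq_univ_of_forall hcon)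
        obtain ⟨a, ha, b, hb, s, hs, hWs⟩ :=
          exit_edge (hconn (τ + r * L) j b0) (hjr r) hb0
        have hb1 : b ∈ A (r + 1) := by
          rw [hmem]
          rw [Finset.mem_Ico] at hs
          have hQa : 0 < phiAux W τ (s - τ) a j := by
            refine Qpos_mono W hWnonneg hWdiag τ ?_ ((hmem r a).mp ha)
            omega
          have hstep : 0 < phiAux W τ (s - τ + 1) b j := by
            refine Qstep_edge W hWnonneg hWdiag τ (s - τ) hQa ?_
            have : τ + (s - τ) = s := by omega
            rw [this]; exact hWs
          refine Qpos_mono W hWnonneg hWdiag τ ?_ hstep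
          have : (r + 1) * L = r * L + L := by ring
          omega
        have hsub : insert b (A r) ⊆ A (r + 1) := by
          intro x hx
          rcases Finset.mem_insert.mp hx with h | h
          · exact h ▸ hb1
          · exact hmono r h
        have hcardins : (insert b (A r)).card = (A r).card + 1 :=
          Finset.card_insert_of_notMem hb
        have := Finset.card_le_card hsub
        omega
  have hfin := hcard (n - 1)
  have hAn : A (n - 1) = univ := by
    apply Finset.eq_univ_of_card
    have hle : (A (n - 1)).card ≤ n := by
      have := Finset.card_le_card (Finset.subset_univ (A (n - 1)))
      simpa using this
    rw [Fintype.card_fin]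
    omega
  have hi : i ∈ A (n - 1) := hAn ▸ mem_univ i
  rw [hmem] at hi
  exact Qpos_mono W hWnonneg hWdiag τ (Nat.mul_le_mul_right L (by omega)) hi

end QW

section Y
variable {n : ℕ} (W : ℕ → Matrix (Fin n) (Fin n) ℝ) (y : ℕ → Fin n → ℝ)
  (hWnonneg : ∀ t i j, 0 ≤ W t i j) (hWcol : ∀ t j, ∑ i, W t i j = 1)
  (hWdiag : ∀ t i, 0 < W t i i) {β : ℝ} (hβ : 0 < β)
  (hWβ : ∀ t i j, 0 < W t i j → β ≤ W t i j)
  (hy0 : ∀ i, y 0 i = 1) (hy : ∀ t i, y (t + 1) i = ∑ j, W t i j * y t j)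

include hWcol hy0 hy in
lemma ysum (t : ℕ) : ∑ i, y t i = n := by
  induction t with
  | zero => simp [hy0]
  | succ t ih =>
    simp only [hy]
    rw [Finset.sum_comm]
    simp only [← Finset.sum_mul, hWcol, one_mul]
    exact ih

include hWnonneg hWdiag hy0 hy in
lemma ypos (t : ℕ) (i : Fin n) : 0 < y t i := by
  induction t generalizing i with
  | zero => rw [hy0]; norm_num
  | succ t ih =>
    rw [hy]
    exact Finset.sum_pos' (fun j _ => mul_nonneg (hWnonneg _ _ _) (ih j).le)
      ⟨i, mem_univ i, mul_pos (hWdiag t i) (ih i)⟩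

include hWnonneg hWcol hWdiag hy0 hy in
lemma yle (t : ℕ) (i : Fin n) : y t i ≤ n := by
  have h := ysum W y hWcol hy0 hy t
  have := Finset.single_le_sum (f := fun j => y t j)
    (fun j _ => (ypos W y hWnonneg hWdiag hy0 hy t j).le) (mem_univ i)
  rw [h] at this; exact this

include hWnonneg hWdiag hβ hWβ hy0 hy in
lemma ygeo (t : ℕ) (i : Fin n) : β ^ t ≤ y t i := by
  induction t generalizing i with
  | zero => rw [hy0]; norm_num
  | succ t ih =>
    rw [hy]
    calc β ^ (t+1) = β * β ^ t := by ring
      _ ≤ W t i i * y t i := mul_le_mul (hWβ _ _ _ (hWdiag t i)) (ih i) (by positivity)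
          (le_trans hβ.le (hWβ _ _ _ (hWdiag t i)))
      _ ≤ ∑ j, W t i j * y t j := Finset.single_le_sum
          (f := fun j => W t i j * y t j)
          (fun j _ => mul_nonneg (hWnonneg _ _ _)
            (ypos W y hWnonneg hWdiag hy0 hy t j).le) (mem_univ i)

include hy in
lemma yPhi (τ k : ℕ) (i : Fin n) : y (τ + k) i = ∑ j, phiAux W τ k i j * y τ j := by
  induction k generalizing i with
  | zero =>
    have : ∀ j, phiAux W τ 0 i j = (1 : Matrix (Fin n) (Fin n) ℝ) i j := fun j => rfl
    simp [this, Matrix.one_apply]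
  | succ k ih =>
    have hrec : ∀ j, phiAux W τ (k+1) i j = ∑ m, W (τ + k) i m * phiAux W τ k m j := by
      intro j; simp [phiAux, Matrix.mul_apply]
    rw [← Nat.add_assoc, hy]
    simp only [hrec, Finset.sum_mul]
    calc ∑ j, W (τ+k) i j * y (τ+k) j
        = ∑ j, ∑ m, W (τ+k) i j * phiAux W τ k j m * y τ m := by
          refine Finset.sum_congr rfl fun j _ => ?_
          rw [ih j, Finset.mul_sum]
          exact Finset.sum_congr rfl fun m _ => by ring
      _ = ∑ m, ∑ j, W (τ+k) i j * phiAux W τ k j m * y τ m := Finset.sum_comm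

end Y

section S
variable {n : ℕ} (W : ℕ → Matrix (Fin n) (Fin n) ℝ) (y : ℕ → Fin n → ℝ)
  (hWnonneg : ∀ t i j, 0 ≤ W t i j)
  (hy : ∀ t i, y (t + 1) i = ∑ j, W t i j * y t j)
  (hypos : ∀ t i, 0 < y t i)

include hy in
lemma Smat_apply (t : ℕ) (i j : Fin n) :
    Smat W y t i j = W t i j * y t j / y (t + 1) i := by
  rw [Smat, hy]

include hWnonneg hy hypos in
lemma Smat_nonneg (t : ℕ) (i j : Fin n) : 0 ≤ Smat W y t i j := by
  rw [Smat_apply W y hy]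
  exact div_nonneg (mul_nonneg (hWnonneg _ _ _) (hypos _ _).le) (hypos _ _).le

include hy hypos in
lemma Smat_rowsum (t : ℕ) (i : Fin n) : ∑ j, Smat W y t i j = 1 := by
  simp only [Smat_apply W y hy]
  rw [← Finset.sum_div, ← hy, div_self (hypos (t+1) i).ne']

include hy hypos in
lemma phiAux_S_eq (τ k : ℕ) (i j : Fin n) :
    phiAux (Smat W y) τ k i j = phiAux W τ k i j * y τ j / y (τ + k) i := by
  induction k generalizing i with
  | zero =>
    have h1 : phiAux (Smat W y) τ 0 i j = (1 : Matrix (Fin n) (Fin n) ℝ) i j := rfl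
    have h2 : phiAux W τ 0 i j = (1 : Matrix (Fin n) (Fin n) ℝ) i j := rfl
    rw [h1, h2, Matrix.one_apply]
    by_cases hij : i = j
    · subst hij; rw [if_pos rfl, Nat.add_zero, one_mul, div_self (hypos τ i).ne']
    · rw [if_neg hij, Nat.add_zero, zero_mul, zero_div]
  | succ k ih =>
    have hrecS : phiAux (Smat W y) τ (k+1) i j
        = ∑ m, Smat W y (τ + k) i m * phiAux (Smat W y) τ k m j := by
      simp [phiAux, Matrix.mul_apply]
    have hrecW : phiAux W τ (k+1) i j = ∑ m, W (τ + k) i m * phiAux W τ k m j := by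
      simp [phiAux, Matrix.mul_apply]
    rw [hrecS, hrecW]
    have : ∀ m : Fin n, Smat W y (τ + k) i m * phiAux (Smat W y) τ k m j
        = W (τ + k) i m * phiAux W τ k m j * y τ j / y (τ + (k+1)) i := by
      intro m
      rw [ih m, Smat_apply W y hy]
      have h1 : (y (τ + k) m) ≠ 0 := (hypos _ _).ne'
      have h2 : (y (τ + k + 1) i) ≠ 0 := (hypos _ _).ne'
      have h3 : τ + k + 1 = τ + (k + 1) := by ring
      rw [← h3]
      field_simp
    rw [Finset.sum_congr rfl fun m _ => this m, ← Finset.sum_div, ← Finset.sum_mul]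

include hWnonneg hy hypos in
lemma R_nonneg (τ k : ℕ) (i j : Fin n) : 0 ≤ phiAux (Smat W y) τ k i j := by
  induction k generalizing i j with
  | zero =>
    have h1 : phiAux (Smat W y) τ 0 i j = (1 : Matrix (Fin n) (Fin n) ℝ) i j := rfl
    rw [h1, Matrix.one_apply]; positivity
  | succ k ih =>
    have hrecS : phiAux (Smat W y) τ (k+1) i j
        = ∑ m, Smat W y (τ + k) i m * phiAux (Smat W y) τ k m j := by
      simp [phiAux, Matrix.mul_apply]
    rw [hrecS]
    exact Finset.sum_nonneg fun m _ =>
      mul_nonneg (Smat_nonneg W y hWnonneg hy hypos _ _ _) (ih _ _)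

include hy hypos in
lemma R_rowsum (τ k : ℕ) (i : Fin n) : ∑ j, phiAux (Smat W y) τ k i j = 1 := by
  induction k generalizing i with
  | zero =>
    have h1 : ∀ j, phiAux (Smat W y) τ 0 i j = (1 : Matrix (Fin n) (Fin n) ℝ) i j :=
      fun j => rfl
    simp [h1, Matrix.one_apply]
  | succ k ih =>
    have hrecS : ∀ j, phiAux (Smat W y) τ (k+1) i j
        = ∑ m, Smat W y (τ + k) i m * phiAux (Smat W y) τ k m j := by
      intro j; simp [phiAux, Matrix.mul_apply]
    simp only [hrecS]
    rw [Finset.sum_comm]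
    simp only [← Finset.mul_sum, ih]
    simp [Smat_rowsum W y hy hypos]

end S

/-- Under uniform strong connectivity, `S(t)⋯S(τ+1)S(τ)` converges to
`(1/n)·𝟙·y(τ)ᵀ` exponentially fast, uniformly in `τ`. -/
theorem phiS_exponential_convergence (n : ℕ) (hn : 1 ≤ n)
    (W : ℕ → Matrix (Fin n) (Fin n) ℝ)
    (hWnonneg : ∀ t i j, 0 ≤ W t i j)
    (hWcol : ∀ t j, ∑ i, W t i j = 1)
    (hWdiag : ∀ t i, 0 < W t i i)
    (β : ℝ) (hβ : 0 < β)
    (hWβ : ∀ t i j, 0 < W t i j → β ≤ W t i j)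
    (L : ℕ) (hL : 0 < L)
    (hconn : ∀ t : ℕ, ∀ i j : Fin n,
      Relation.TransGen (fun a b => ∃ k ∈ Finset.Ico t (t + L), 0 < W k b a) i j)
    (y : ℕ → Fin n → ℝ)
    (hy0 : ∀ i, y 0 i = 1)
    (hy : ∀ t i, y (t + 1) i = ∑ j, W t i j * y t j) :
    ∃ C > 0, ∃ μ : ℝ, 0 ≤ μ ∧ μ < 1 ∧
      ∀ t τ : ℕ, τ ≤ t → ∀ i j : Fin n,
        |Phi (Smat W y) (t + 1) τ i j - y τ j / n| ≤ C * μ ^ (t - τ) := by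
  haveI : Nonempty (Fin n) := ⟨⟨0, hn⟩⟩
  set B := n * L with hB
  have hBpos : 0 < B := Nat.mul_pos (by omega) hL
  have hypos := ypos W y hWnonneg hWdiag hy0 hy
  have hyub := yle W y hWnonneg hWcol hWdiag hy0 hy
  have hysum := ysum W y hWcol hy0 hy
  -- β ≤ 1
  have hβ1 : β ≤ 1 := by
    set i0 : Fin n := ⟨0, hn⟩
    have h1 := hWβ 0 i0 i0 (hWdiag 0 i0)
    have h2 : W 0 i0 i0 ≤ ∑ i, W 0 i i0 :=
      Finset.single_le_sum (f := fun i => W 0 i i0) (fun i _ => hWnonneg 0 i i0) (mem_univ i0)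
    rw [hWcol] at h2; linarith
  have hn1 : (1:ℝ) ≤ (n:ℝ) := by exact_mod_cast hn
  -- uniform lower bound on y
  have hylow : ∀ t i, β ^ B ≤ y t i := by
    intro t i
    rcases le_or_gt t B with h | h
    · calc β ^ B ≤ β ^ t := pow_le_pow_of_le_one hβ.le hβ1 h
        _ ≤ y t i := ygeo W y hWnonneg hWdiag hβ hWβ hy0 hy t i
    · have ht : t = (t - B) + B := by omega
      have hterm : ∀ j : Fin n, β ^ B * y (t-B) j ≤ phiAux W (t-B) B i j * y (t-B) j := by
        intro j
        refine mul_le_mul_of_nonneg_right ?_ (hypos _ _).le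
        exact Qpos_ge W hWnonneg hβ hWβ (t-B) B i j
          (Qpos_all W hWnonneg hWdiag hL hconn hn (t-B) i j)
      have hsum : β ^ B * (n:ℝ) ≤ ∑ j, phiAux W (t-B) B i j * y (t-B) j := by
        calc β ^ B * (n:ℝ) = ∑ j, β ^ B * y (t-B) j := by
              rw [← Finset.mul_sum, hysum]
          _ ≤ _ := Finset.sum_le_sum fun j _ => hterm j
      have hy' := yPhi W y hy (t - B) B i
      have hβB : (0:ℝ) < β ^ B := by positivity
      nlinarith [hy'.symm, (by rw [← ht] at hy'; exact hy' : y t i = ∑ j, phiAux W (t-B) B i j * y (t-B) j)]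
  -- the contraction coefficient
  set η : ℝ := β ^ B * β ^ B / ((n:ℝ) + 1) with hηdef
  have hβB : (0:ℝ) < β ^ B := by positivity
  have hβB1 : β ^ B ≤ 1 := pow_le_one₀ hβ.le hβ1
  have hη0 : 0 < η := by positivity
  have hη2 : η ≤ 1/2 := by
    rw [hηdef]
    apply div_le_div₀ (by norm_num) (by nlinarith) (by norm_num) (by linarith)
  have hμ0pos : 0 < 1 - η := by linarith
  have hμ0lt1 : 1 - η < 1 := by linarith
  -- each B-block of the S-product has entries ≥ η
  have hblock : ∀ τ i j, η ≤ phiAux (Smat W y) τ B i j := by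
    intro τ i j
    rw [phiAux_S_eq W y hy hypos]
    have hQ : β ^ B ≤ phiAux W τ B i j :=
      Qpos_ge W hWnonneg hβ hWβ τ B i j (Qpos_all W hWnonneg hWdiag hL hconn hn τ i j)
    rw [hηdef]
    apply div_le_div₀
    · exact mul_nonneg (le_trans hβB.le hQ) (hypos _ _).le
    · exact mul_le_mul hQ (hylow τ j) hβB.le (le_trans hβB.le hQ)
    · exact hypos _ _
    · linarith [hyub (τ + B) i]
  -- oscillation decay
  have hosc : ∀ q s τ' j, osc (fun i => phiAux (Smat W y) τ' (B*q + s) i j) ≤ (1-η)^q := by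
    intro q
    induction q with
    | zero =>
      intro s τ' j
      have := osc_le_of_bounds (fun i => phiAux (Smat W y) τ' (B*0 + s) i j) 0 1
        (fun i => R_nonneg W y hWnonneg hy hypos τ' _ i j)
        (fun i => by
          have hrs := R_rowsum W y hy hypos τ' (B*0 + s) i
          have := Finset.single_le_sum (f := fun j' => phiAux (Smat W y) τ' (B*0+s) i j')
            (fun j' _ => R_nonneg W y hWnonneg hy hypos τ' _ i j') (mem_univ j)
          rw [hrs] at this; exact this)
      simpa using this
    | succ q ih =>
      intro s τ' j
      have hsplit : B*(q+1) + s = (B*q + s) + B := by ring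
      have hadd := phiAux_add (Smat W y) τ' (B*q+s) B
      have hcol : (fun i => phiAux (Smat W y) τ' (B*(q+1) + s) i j)
          = (phiAux (Smat W y) (τ' + (B*q+s)) B).mulVec
              (fun m => phiAux (Smat W y) τ' (B*q+s) m j) := by
        funext i
        rw [hsplit, hadd]
        simp [Matrix.mul_apply, Matrix.mulVec, dotProduct]
      rw [hcol]
      calc osc _ ≤ (1-η) * osc (fun m => phiAux (Smat W y) τ' (B*q+s) m j) :=
            osc_contract _ η hη0.le (fun i' j' => hblock _ i' j')
              (fun i' => R_rowsum W y hy hypos _ B i') _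
        _ ≤ (1-η) * (1-η)^q := mul_le_mul_of_nonneg_left (ih s τ' j) hμ0pos.le
        _ = (1-η)^(q+1) := by ring
  -- the constants
  refine ⟨1/(1-η), by positivity, (1-η) ^ ((1:ℝ)/(B:ℝ)), Real.rpow_nonneg hμ0pos.le _,
    Real.rpow_lt_one hμ0pos.le hμ0lt1 (by positivity), ?_⟩
  intro t τ htτ i j
  set k := t + 1 - τ with hkdef
  have hkm : k = (t - τ) + 1 := by omega
  set q := k / B with hqdef
  set s := k % B with hsdef
  have hks : B * q + s = k := Nat.div_add_mod k B
  have hsB : s < B := Nat.mod_lt _ hBpos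
  -- identify Phi with phiAux
  have hPhi : Phi (Smat W y) (t + 1) τ i j = phiAux (Smat W y) τ k i j := rfl
  -- the target value is a convex combination of the column
  set v : Fin n → ℝ := fun i' => phiAux (Smat W y) τ k i' j with hvdef
  set w : Fin n → ℝ := fun i' => y (τ + k) i' / n with hwdef
  have hwnonneg : ∀ i', 0 ≤ w i' := fun i' => div_nonneg (hypos _ _).le (by positivity)
  have hwsum : ∑ i', w i' = 1 := by
    rw [hwdef, ← Finset.sum_div, hysum]
    exact div_self (by positivity)
  have hconv : ∑ i', w i' * v i' = y τ j / n := by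
    have hterm : ∀ i' : Fin n, w i' * v i' = phiAux W τ k i' j * y τ j / n := by
      intro i'
      rw [hwdef, hvdef]
      simp only
      rw [phiAux_S_eq W y hy hypos]
      have h1 : (y (τ + k) i') ≠ 0 := (hypos _ _).ne'
      field_simp
    rw [Finset.sum_congr rfl fun i' _ => hterm i']
    rw [← Finset.sum_div, ← Finset.sum_mul, Qcolsum W hWcol, one_mul]
  have hcomb := combo_mem v w hwnonneg hwsum
  have habs : |v i - y τ j / n| ≤ osc v :=
    abs_sub_le_osc v _ i (hconv ▸ hcomb.1) (hconv ▸ hcomb.2)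
  -- oscillation bound
  have hoscv : osc v ≤ (1-η)^q := by
    have := hosc q s τ j
    rw [hks] at this
    exact this
  -- exponent arithmetic
  have hBR : (0:ℝ) < (B:ℝ) := by exact_mod_cast hBpos
  set m := t - τ with hmdef
  have hqm : (m:ℝ)/(B:ℝ) - 1 ≤ (q:ℝ) := by
    have hmlt : m < B*(q+1) := by
      have hexp : B*(q+1) = B*q + B := by ring
      omega
    have hmltR : (m:ℝ) < (B:ℝ)*((q:ℝ)+1) := by exact_mod_cast hmlt
    rw [sub_le_iff_le_add, div_le_iff₀ hBR]
    nlinarith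
  have hkey : (1-η)^q ≤ (1/(1-η)) * ((1-η) ^ ((1:ℝ)/(B:ℝ))) ^ m := by
    have e1 : ((1-η) ^ ((1:ℝ)/(B:ℝ))) ^ m = (1-η) ^ ((m:ℝ)/(B:ℝ)) := by
      rw [← Real.rpow_natCast ((1-η) ^ ((1:ℝ)/(B:ℝ))) m, ← Real.rpow_mul hμ0pos.le]
      congr 1
      field_simp
    have e2 : (1-η)^q = (1-η) ^ ((q:ℝ)) := (Real.rpow_natCast (1-η) q).symm
    rw [e1, e2]
    have h4 := Real.rpow_le_rpow_of_exponent_ge hμ0pos hμ0lt1.le hqm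
    have e3 : (1-η) ^ ((m:ℝ)/(B:ℝ) - 1) = (1/(1-η)) * (1-η) ^ ((m:ℝ)/(B:ℝ)) := by
      rw [Real.rpow_sub hμ0pos, Real.rpow_one]
      ring
    rw [e3] at h4
    exact h4
  calc |Phi (Smat W y) (t + 1) τ i j - y τ j / n| = |v i - y τ j / n| := by rw [hPhi]
    _ ≤ osc v := habs
    _ ≤ (1-η)^q := hoscv
    _ ≤ (1/(1-η)) * ((1-η) ^ ((1:ℝ)/(B:ℝ))) ^ m := hkey
end

section
/- Suppose the sequence of directed graphs {G(t)} associated with the column stochastic matrices {W(t)} is uniformly strongly connected. Then the push-sum ratios converge to the average of the initial values exponentially fast: there exist constants C > 0 and μ ∈ [0,1) such that for every agent i ∈ {1,…,n} and every t ≥ 0, ‖ x_i(t)/y_i(t) − (1/n) Σ_{k=1}^n x_k(0) ‖ ≤ C μ^t. -/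
open Finset

namespace PushSumAux

variable {n : ℕ}

/-- Product of `W` over the window `[t, t+s)`: `W(t+s-1) ⋯ W(t)`. -/
def prodW (W : ℕ → Matrix (Fin n) (Fin n) ℝ) (t : ℕ) : ℕ → Matrix (Fin n) (Fin n) ℝ
  | 0 => 1
  | s + 1 => W (t + s) * prodW W t s

variable {W : ℕ → Matrix (Fin n) (Fin n) ℝ}

lemma prodW_succ_apply (t s : ℕ) (i j : Fin n) :
    prodW W t (s + 1) i j = ∑ k, W (t + s) i k * prodW W t s k j := by
  simp [prodW, Matrix.mul_apply]

lemma prodW_nonneg (hWnonneg : ∀ t i j, 0 ≤ W t i j) (t s : ℕ) (i j : Fin n) :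
    0 ≤ prodW W t s i j := by
  induction s generalizing i with
  | zero => by_cases h : i = j <;> simp [prodW, Matrix.one_apply, h]
  | succ s ih =>
      rw [prodW_succ_apply]
      exact Finset.sum_nonneg fun k _ => mul_nonneg (hWnonneg _ _ _) (ih k)

lemma prodW_col (hWcol : ∀ t j, ∑ i, W t i j = 1) (t s : ℕ) (j : Fin n) :
    ∑ i, prodW W t s i j = 1 := by
  induction s with
  | zero => simp [prodW, Matrix.one_apply, Finset.sum_ite_eq, j.2]
  | succ s ih =>
      simp only [prodW_succ_apply]
      rw [Finset.sum_comm]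
      simp only [← Finset.sum_mul, hWcol, one_mul]
      exact ih


lemma prodW_pos_succ (hWnonneg : ∀ t i j, 0 ≤ W t i j) (hWdiag : ∀ t i, 0 < W t i i)
    (t s : ℕ) (i j : Fin n) (h : 0 < prodW W t s i j) : 0 < prodW W t (s + 1) i j := by
  rw [prodW_succ_apply]
  have : 0 < W (t + s) i i * prodW W t s i j := mul_pos (hWdiag _ _) h
  calc (0:ℝ) < W (t + s) i i * prodW W t s i j := this
    _ ≤ ∑ k, W (t + s) i k * prodW W t s k j :=
      Finset.single_le_sum (f := fun k => W (t + s) i k * prodW W t s k j)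
        (fun k _ => mul_nonneg (hWnonneg _ _ _) (prodW_nonneg hWnonneg t s k j))
        (Finset.mem_univ i)

lemma prodW_pos_mono (hWnonneg : ∀ t i j, 0 ≤ W t i j) (hWdiag : ∀ t i, 0 < W t i i)
    (t : ℕ) {s s' : ℕ} (hss : s ≤ s') (i j : Fin n)
    (h : 0 < prodW W t s i j) : 0 < prodW W t s' i j := by
  induction s' with
  | zero => obtain rfl := Nat.le_zero.mp hss; exact h
  | succ s' ih =>
      rcases Nat.lt_or_ge s (s'+1) with hlt | hge
      · exact prodW_pos_succ hWnonneg hWdiag t s' i j (ih (by omega))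
      · have : s = s' + 1 := le_antisymm hss hge
        exact this ▸ h

lemma prodW_diag_pos (hWnonneg : ∀ t i j, 0 ≤ W t i j) (hWdiag : ∀ t i, 0 < W t i i)
    (t s : ℕ) (j : Fin n) : 0 < prodW W t s j j := by
  have h0 : 0 < prodW W t 0 j j := by simp [prodW, Matrix.one_apply]
  exact prodW_pos_mono hWnonneg hWdiag t (Nat.zero_le s) j j h0

lemma prodW_beta (hWnonneg : ∀ t i j, 0 ≤ W t i j)
    {β : ℝ} (hβ : 0 < β) (hWβ : ∀ t i j, 0 < W t i j → β ≤ W t i j)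
    (t s : ℕ) (i j : Fin n) (h : 0 < prodW W t s i j) :
    β ^ s ≤ prodW W t s i j := by
  induction s generalizing i with
  | zero =>
      by_cases hij : i = j
      · simp [prodW, Matrix.one_apply, hij]
      · simp [prodW, Matrix.one_apply, hij] at h
  | succ s ih =>
      rw [prodW_succ_apply] at h ⊢
      obtain ⟨k, -, hk⟩ := Finset.exists_lt_of_sum_lt (by simpa using h :
        (∑ _k : Fin n, (0:ℝ)) < ∑ k, W (t + s) i k * prodW W t s k j)
      have hWpos : 0 < W (t + s) i k := by
        rcases lt_or_eq_of_le (hWnonneg (t+s) i k) with h' | h'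
        · exact h'
        · exfalso; rw [← h'] at hk; simp at hk
      have hPpos : 0 < prodW W t s k j := by
        by_contra h'
        push_neg at h'
        have := mul_nonpos_of_nonneg_of_nonpos (le_of_lt hWpos) h'
        exact absurd hk (not_lt.mpr (le_trans this (le_refl 0)))
      have hβk : β ≤ W (t + s) i k := hWβ _ _ _ hWpos
      have hβP : β ^ s ≤ prodW W t s k j := ih k hPpos
      calc β ^ (s + 1) = β * β ^ s := by ring
        _ ≤ W (t + s) i k * prodW W t s k j := by
            apply mul_le_mul hβk hβP (by positivity) (le_of_lt hWpos)
        _ ≤ ∑ k', W (t + s) i k' * prodW W t s k' j :=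
            Finset.single_le_sum (f := fun k' => W (t + s) i k' * prodW W t s k' j)
              (fun k' _ => mul_nonneg (hWnonneg _ _ _) (prodW_nonneg hWnonneg t s k' j))
              (Finset.mem_univ k)


/-- Support of the `j`-th column of the window product. -/
noncomputable def Sfin (W : ℕ → Matrix (Fin n) (Fin n) ℝ) (t s : ℕ) (j : Fin n) : Finset (Fin n) :=
  Finset.univ.filter fun i => 0 < prodW W t s i j

lemma Sfin_mono (hWnonneg : ∀ t i j, 0 ≤ W t i j) (hWdiag : ∀ t i, 0 < W t i i)
    (t : ℕ) {s s' : ℕ} (hss : s ≤ s') (j : Fin n) :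
    Sfin W t s j ⊆ Sfin W t s' j := by
  intro i hi
  simp only [Sfin, Finset.mem_filter, Finset.mem_univ, true_and] at hi ⊢
  exact prodW_pos_mono hWnonneg hWdiag t hss i j hi

lemma Sfin_grow (hWnonneg : ∀ t i j, 0 ≤ W t i j) (hWdiag : ∀ t i, 0 < W t i i)
    {L : ℕ}
    (hconn : ∀ t : ℕ, ∀ i j : Fin n,
      Relation.TransGen (fun a b => ∃ k ∈ Finset.Ico t (t + L), 0 < W k b a) i j)
    (t s : ℕ) (j : Fin n) (hne : Sfin W t s j ≠ Finset.univ) :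
    (Sfin W t s j).card + 1 ≤ (Sfin W t (s + L) j).card := by
  -- choose an element outside S
  obtain ⟨m, hm⟩ : ∃ m, m ∉ Sfin W t s j := by
    by_contra h
    push_neg at h
    exact hne (Finset.eq_univ_iff_forall.mpr h)
  have hj : j ∈ Sfin W t s j := by
    simp only [Sfin, Finset.mem_filter, Finset.mem_univ, true_and]
    exact prodW_diag_pos hWnonneg hWdiag t s j
  -- crossing arc
  have hcross : ∃ b ∈ Sfin W t s j, ∃ a ∉ Sfin W t s j,
      ∃ k ∈ Finset.Ico (t + s) (t + s + L), 0 < W k a b := by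
    by_contra hno
    push_neg at hno
    have hclosed : ∀ p q : Fin n,
        Relation.TransGen (fun a b => ∃ k ∈ Finset.Ico (t+s) (t+s+L), 0 < W k b a) p q →
        p ∈ Sfin W t s j → q ∈ Sfin W t s j := by
      intro p q hpq
      induction hpq with
      | single hstep =>
          intro hp
          obtain ⟨k, hk, hkpos⟩ := hstep
          by_contra hq
          exact absurd hkpos (not_lt.mpr (hno _ hp _ hq k hk))
      | tail _ hstep ih =>
          intro hp
          have hb := ih hp
          obtain ⟨k, hk, hkpos⟩ := hstep
          by_contra hq
          exact absurd hkpos (not_lt.mpr (hno _ hb _ hq k hk))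
    exact hm (hclosed j m (hconn (t + s) j m) hj)
  obtain ⟨b, hb, a, ha, k, hk, hWk⟩ := hcross
  simp only [Finset.mem_Ico] at hk
  -- a enters the support at stage k - t + 1 ≤ s + L
  have hkt : t + s ≤ k := hk.1
  have hbk : b ∈ Sfin W t (k - t) j :=
    Sfin_mono hWnonneg hWdiag t (by omega) j hb
  have hbpos : 0 < prodW W t (k - t) b j := by
    simpa [Sfin] using hbk
  have hapos : 0 < prodW W t (k - t + 1) a j := by
    rw [prodW_succ_apply]
    have hkey : t + (k - t) = k := by omega
    rw [hkey]
    calc (0:ℝ) < W k a b * prodW W t (k - t) b j := mul_pos hWk hbpos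
      _ ≤ ∑ c, W k a c * prodW W t (k - t) c j :=
        Finset.single_le_sum (f := fun c => W k a c * prodW W t (k - t) c j)
          (fun c _ => mul_nonneg (hWnonneg _ _ _) (prodW_nonneg hWnonneg t _ c j))
          (Finset.mem_univ b)
  have haS : a ∈ Sfin W t (s + L) j := by
    have : a ∈ Sfin W t (k - t + 1) j := by
      simp only [Sfin, Finset.mem_filter, Finset.mem_univ, true_and]
      exact hapos
    exact Sfin_mono hWnonneg hWdiag t (by omega) j this
  have hsub : insert a (Sfin W t s j) ⊆ Sfin W t (s + L) j := by
    intro c hc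
    rcases Finset.mem_insert.mp hc with rfl | hc
    · exact haS
    · exact Sfin_mono hWnonneg hWdiag t (by omega) j hc
  calc (Sfin W t s j).card + 1 = (insert a (Sfin W t s j)).card :=
        (Finset.card_insert_of_notMem ha).symm
    _ ≤ (Sfin W t (s + L) j).card := Finset.card_le_card hsub


lemma Sfin_card (hWnonneg : ∀ t i j, 0 ≤ W t i j) (hWdiag : ∀ t i, 0 < W t i i)
    {L : ℕ}
    (hconn : ∀ t : ℕ, ∀ i j : Fin n,
      Relation.TransGen (fun a b => ∃ k ∈ Finset.Ico t (t + L), 0 < W k b a) i j)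
    (t : ℕ) (j : Fin n) (m : ℕ) :
    min n (m + 1) ≤ (Sfin W t (m * L) j).card := by
  induction m with
  | zero =>
      have hj : j ∈ Sfin W t 0 j := by
        simp only [Sfin, Finset.mem_filter, Finset.mem_univ, true_and]
        exact prodW_diag_pos hWnonneg hWdiag t 0 j
      have : 1 ≤ (Sfin W t 0 j).card := Finset.card_pos.mpr ⟨j, hj⟩
      simpa using le_trans (min_le_right n 1) this
  | succ m ih =>
      by_cases hcase : Sfin W t (m * L) j = Finset.univ
      · have hsub : Finset.univ ⊆ Sfin W t ((m + 1) * L) j := by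
          rw [← hcase]
          exact Sfin_mono hWnonneg hWdiag t (by nlinarith) j
        have : (Sfin W t ((m+1) * L) j).card = n := by
          have := Finset.eq_univ_iff_forall.mpr fun i => hsub (Finset.mem_univ i)
          rw [this, Finset.card_univ, Fintype.card_fin]
        omega
      · have hgrow := Sfin_grow hWnonneg hWdiag hconn t (m * L) j hcase
        have hmL : m * L + L = (m + 1) * L := by ring
        rw [hmL] at hgrow
        have hlt : (Sfin W t (m * L) j).card < n := by
          have hle : (Sfin W t (m * L) j).card ≤ n := by
            simpa using Finset.card_le_card (Finset.subset_univ (Sfin W t (m * L) j))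
          rcases lt_or_eq_of_le hle with h | h
          · exact h
          · exfalso
            apply hcase
            apply Finset.eq_univ_of_card
            simp [h]
        omega

lemma prodW_full_pos (hn : 1 ≤ n) (hWnonneg : ∀ t i j, 0 ≤ W t i j)
    (hWdiag : ∀ t i, 0 < W t i i) {L : ℕ}
    (hconn : ∀ t : ℕ, ∀ i j : Fin n,
      Relation.TransGen (fun a b => ∃ k ∈ Finset.Ico t (t + L), 0 < W k b a) i j)
    (t : ℕ) (i j : Fin n) : 0 < prodW W t (n * L) i j := by
  have hcard := Sfin_card hWnonneg hWdiag hconn t j (n - 1)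
  have hmin : min n ((n - 1) + 1) = n := by omega
  rw [hmin] at hcard
  have huniv : Sfin W t ((n - 1) * L) j = Finset.univ := by
    have hle : (Sfin W t ((n-1) * L) j).card ≤ n := by
      simpa using Finset.card_le_card (Finset.subset_univ (Sfin W t ((n-1) * L) j))
    apply Finset.eq_univ_of_card (Sfin W t ((n-1) * L) j)
    rw [Fintype.card_fin]
    omega
  have hi : i ∈ Sfin W t ((n - 1) * L) j := huniv ▸ Finset.mem_univ i
  have hpos : 0 < prodW W t ((n - 1) * L) i j := by simpa [Sfin] using hi
  exact prodW_pos_mono hWnonneg hWdiag t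
    (Nat.mul_le_mul_right L (by omega)) i j hpos


variable {E : Type*} [NormedAddCommGroup E] [NormedSpace ℝ E]

lemma iterate_prodW (e : ℕ → Fin n → E)
    (he : ∀ t i, e (t + 1) i = ∑ j, W t i j • e t j) (t s : ℕ) (i : Fin n) :
    e (t + s) i = ∑ j, prodW W t s i j • e t j := by
  induction s generalizing i with
  | zero =>
      simp [prodW, Matrix.one_apply, ite_smul]
  | succ s ih =>
      have h1 : t + (s + 1) = (t + s) + 1 := rfl
      rw [h1, he (t + s) i]
      have h2 : ∀ j, e (t + s) j = ∑ k, prodW W t s j k • e t k := fun j => ih j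
      calc ∑ j, W (t + s) i j • e (t + s) j
          = ∑ j, ∑ k, (W (t + s) i j * prodW W t s j k) • e t k := by
            refine Finset.sum_congr rfl fun j _ => ?_
            rw [h2 j, Finset.smul_sum]
            exact Finset.sum_congr rfl fun k _ => (mul_smul _ _ _).symm
        _ = ∑ k, (∑ j, W (t + s) i j * prodW W t s j k) • e t k := by
            rw [Finset.sum_comm]
            exact Finset.sum_congr rfl fun k _ => (Finset.sum_smul).symm
        _ = ∑ k, prodW W t (s + 1) i k • e t k := by
            refine Finset.sum_congr rfl fun k _ => ?_
            rw [prodW_succ_apply]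

/-- Non-expansiveness of a column-stochastic matrix in the block ℓ¹ norm. -/
lemma colstoch_nonexpansive (M : Matrix (Fin n) (Fin n) ℝ)
    (hM : ∀ i j, 0 ≤ M i j) (hcol : ∀ j, ∑ i, M i j = 1) (e : Fin n → E) :
    ∑ i, ‖∑ j, M i j • e j‖ ≤ ∑ j, ‖e j‖ := by
  calc ∑ i, ‖∑ j, M i j • e j‖
      ≤ ∑ i, ∑ j, M i j * ‖e j‖ := by
        refine Finset.sum_le_sum fun i _ => ?_
        refine le_trans (norm_sum_le _ _) (Finset.sum_le_sum fun j _ => ?_)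
        rw [norm_smul, Real.norm_eq_abs, abs_of_nonneg (hM i j)]
    _ = ∑ j, (∑ i, M i j) * ‖e j‖ := by
        rw [Finset.sum_comm]
        exact Finset.sum_congr rfl fun j _ => (Finset.sum_mul _ _ _).symm
    _ = ∑ j, ‖e j‖ := by simp [hcol]

/-- Contraction of a column-stochastic matrix with entries ≥ δ on sum-zero blocks. -/
lemma colstoch_contract (M : Matrix (Fin n) (Fin n) ℝ) {δ : ℝ} (hδ : 0 < δ)
    (hM : ∀ i j, δ ≤ M i j) (hcol : ∀ j, ∑ i, M i j = 1) (e : Fin n → E)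
    (hsum : ∑ j, e j = 0) :
    ∑ i, ‖∑ j, M i j • e j‖ ≤ (1 - n * (δ / 2)) * ∑ j, ‖e j‖ := by
  have key : ∀ i, (∑ j, M i j • e j) = ∑ j, (M i j - δ / 2) • e j := by
    intro i
    have : ∑ j, (M i j - δ / 2) • e j = ∑ j, M i j • e j - (δ/2) • ∑ j, e j := by
      rw [Finset.smul_sum, ← Finset.sum_sub_distrib]
      exact Finset.sum_congr rfl fun j _ => by rw [sub_smul]
    rw [this, hsum, smul_zero, sub_zero]
  calc ∑ i, ‖∑ j, M i j • e j‖
      ≤ ∑ i, ∑ j, (M i j - δ / 2) * ‖e j‖ := by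
        refine Finset.sum_le_sum fun i _ => ?_
        rw [key i]
        refine le_trans (norm_sum_le _ _) (Finset.sum_le_sum fun j _ => ?_)
        rw [norm_smul, Real.norm_eq_abs, abs_of_nonneg (by linarith [hM i j])]
    _ = ∑ j, (∑ i, (M i j - δ / 2)) * ‖e j‖ := by
        rw [Finset.sum_comm]
        exact Finset.sum_congr rfl fun j _ => (Finset.sum_mul _ _ _).symm
    _ = (1 - n * (δ / 2)) * ∑ j, ‖e j‖ := by
        rw [Finset.mul_sum]
        refine Finset.sum_congr rfl fun j _ => ?_
        congr 1
        rw [Finset.sum_sub_distrib, hcol j]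
        simp [Finset.card_univ, mul_comm]

end PushSumAux
/-- Push-sum over a uniformly strongly connected graph sequence: the ratios
`x_i(t)/y_i(t)` converge to the average of the initial values exponentially fast. -/
theorem pushsum_converges_exponentially (n d : ℕ) (hn : 1 ≤ n) (hd : 1 ≤ d)
    (W : ℕ → Matrix (Fin n) (Fin n) ℝ)
    (hWnonneg : ∀ t i j, 0 ≤ W t i j)
    (hWcol : ∀ t j, ∑ i, W t i j = 1)
    (hWdiag : ∀ t i, 0 < W t i i)
    (β : ℝ) (hβ : 0 < β)
    (hWβ : ∀ t i j, 0 < W t i j → β ≤ W t i j)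
    (L : ℕ) (hL : 0 < L)
    (hconn : ∀ t : ℕ, ∀ i j : Fin n,
      Relation.TransGen (fun a b => ∃ k ∈ Finset.Ico t (t + L), 0 < W k b a) i j)
    (x : ℕ → Fin n → EuclideanSpace ℝ (Fin d))
    (hx : ∀ t i, x (t + 1) i = ∑ j, W t i j • x t j)
    (y : ℕ → Fin n → ℝ)
    (hy0 : ∀ i, y 0 i = 1)
    (hy : ∀ t i, y (t + 1) i = ∑ j, W t i j * y t j) :
    ∃ C > 0, ∃ μ : ℝ, 0 ≤ μ ∧ μ < 1 ∧
      ∀ i : Fin n, ∀ t : ℕ,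
        ‖(y t i)⁻¹ • x t i - (n : ℝ)⁻¹ • ∑ k, x 0 k‖ ≤ C * μ ^ t := by
  classical
  open PushSumAux in
  set B : ℕ := n * L with hB
  have hBpos : 0 < B := Nat.mul_pos hn hL
  set δ : ℝ := β ^ B with hδ
  have hδpos : 0 < δ := pow_pos hβ B
  -- β ≤ 1
  have hβ1 : β ≤ 1 := by
    have i0 : Fin n := ⟨0, hn⟩
    have h1 : W 0 i0 i0 ≤ ∑ i, W 0 i i0 :=
      Finset.single_le_sum (fun i _ => hWnonneg 0 i i0) (Finset.mem_univ i0)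
    have := hWβ 0 i0 i0 (hWdiag 0 i0)
    rw [hWcol 0 i0] at h1
    linarith
  -- all entries of the window product are ≥ δ
  have hP : ∀ t i j, δ ≤ prodW W t B i j := by
    intro t i j
    have hpos := prodW_full_pos hn hWnonneg hWdiag hconn t i j
    exact prodW_beta hWnonneg hβ hWβ t B i j hpos
  -- n * δ ≤ 1
  have hδn : (n : ℝ) * δ ≤ 1 := by
    have j0 : Fin n := ⟨0, hn⟩
    have h1 : ∑ i : Fin n, δ ≤ ∑ i, prodW W 0 B i j0 :=
      Finset.sum_le_sum fun i _ => hP 0 i j0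
    rw [prodW_col hWcol 0 B j0] at h1
    simpa [Finset.card_univ] using h1
  set lam : ℝ := 1 - n * (δ / 2) with hlam
  have hlam_pos : 0 < lam := by
    have : (n : ℝ) * (δ / 2) ≤ 1 / 2 := by linarith
    simp only [hlam]; linarith
  have hlam_lt1 : lam < 1 := by
    have hn' : (0:ℝ) < n := by exact_mod_cast hn
    have : 0 < (n : ℝ) * (δ / 2) := by positivity
    simp only [hlam]; linarith
  -- y is nonnegative
  have hynn : ∀ t i, 0 ≤ y t i := by
    intro t
    induction t with
    | zero => intro i; rw [hy0 i]; norm_num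
    | succ t ih =>
        intro i
        rw [hy t i]
        exact Finset.sum_nonneg fun j _ => mul_nonneg (hWnonneg t i j) (ih j)
  -- sum of y is n
  have hysum : ∀ t, ∑ i, y t i = n := by
    intro t
    induction t with
    | zero => simp [hy0]
    | succ t ih =>
        simp only [hy t]
        rw [Finset.sum_comm]
        simp only [← Finset.sum_mul, hWcol, one_mul]
        exact ih
  -- y satisfies the smul recurrence
  have hy' : ∀ t i, y (t + 1) i = ∑ j, W t i j • y t j := by
    intro t i; simpa [smul_eq_mul] using hy t i
  -- lower bound β^t on y
  have hylow : ∀ t i, β ^ t ≤ y t i := by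
    intro t
    induction t with
    | zero => intro i; rw [hy0 i]; norm_num
    | succ t ih =>
        intro i
        rw [hy t i]
        calc β ^ (t + 1) = β * β ^ t := by ring
          _ ≤ W t i i * y t i := by
              apply mul_le_mul (hWβ t i i (hWdiag t i)) (ih i) (by positivity)
                (le_of_lt (hWdiag t i))
          _ ≤ ∑ j, W t i j * y t j :=
              Finset.single_le_sum (f := fun j => W t i j * y t j)
                (fun j _ => mul_nonneg (hWnonneg t i j) (hynn t j)) (Finset.mem_univ i)
  -- uniform lower bound δ on y
  have hylb : ∀ t i, δ ≤ y t i := by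
    intro t i
    rcases le_or_gt t B with hle | hlt
    · calc δ = β ^ B := hδ
        _ ≤ β ^ t := pow_le_pow_of_le_one (le_of_lt hβ) hβ1 hle
        _ ≤ y t i := hylow t i
    · have ht : t = (t - B) + B := by omega
      have hrep := iterate_prodW (W := W) y hy' (t - B) B i
      rw [← ht] at hrep
      rw [hrep]
      have h1 : ∑ j, δ * y (t - B) j ≤ ∑ j, prodW W (t - B) B i j • y (t - B) j := by
        refine Finset.sum_le_sum fun j _ => ?_
        rw [smul_eq_mul]
        exact mul_le_mul_of_nonneg_right (hP _ i j) (hynn _ j)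
      rw [← Finset.mul_sum, hysum] at h1
      have hn' : (1:ℝ) ≤ n := by exact_mod_cast hn
      nlinarith
  set S : EuclideanSpace ℝ (Fin d) := ∑ k, x 0 k with hS
  set e : ℕ → Fin n → EuclideanSpace ℝ (Fin d) :=
    fun t i => x t i - (y t i * (n : ℝ)⁻¹) • S with he_def
  have hnR : (0:ℝ) < n := by exact_mod_cast hn
  -- e satisfies the same recurrence
  have he : ∀ t i, e (t + 1) i = ∑ j, W t i j • e t j := by
    intro t i
    simp only [he_def, hx t i, hy t i, smul_sub, smul_smul]
    rw [Finset.sum_sub_distrib]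
    congr 1
    rw [← Finset.sum_smul, Finset.sum_mul]
    congr 1
    exact Finset.sum_congr rfl fun j _ => by ring
  -- e sums to zero
  have hesum : ∀ t, ∑ i, e t i = 0 := by
    intro t
    induction t with
    | zero =>
        simp only [he_def]
        rw [Finset.sum_sub_distrib, ← Finset.sum_smul]
        simp only [hy0, one_mul]
        rw [Finset.sum_const, Finset.card_univ, Fintype.card_fin, nsmul_eq_mul,
          mul_inv_cancel₀ (ne_of_gt hnR), one_smul, hS, sub_self]
    | succ t ih =>
        calc ∑ i, e (t+1) i = ∑ i, ∑ j, W t i j • e t j :=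
              Finset.sum_congr rfl fun i _ => he t i
          _ = ∑ j, (∑ i, W t i j) • e t j := by
              rw [Finset.sum_comm]
              exact Finset.sum_congr rfl fun j _ => (Finset.sum_smul).symm
          _ = ∑ j, e t j := by simp [hWcol]
          _ = 0 := ih
  set N : ℕ → ℝ := fun t => ∑ i, ‖e t i‖ with hN_def
  have hNnn : ∀ t, 0 ≤ N t := fun t => Finset.sum_nonneg fun i _ => norm_nonneg _
  have hN1 : ∀ t, N (t + 1) ≤ N t := by
    intro t
    have h1 : N (t + 1) = ∑ i, ‖∑ j, W t i j • e t j‖ :=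
      Finset.sum_congr rfl fun i _ => by rw [he t i]
    rw [h1]
    exact colstoch_nonexpansive (W t) (hWnonneg t) (hWcol t) (e t)
  have hNmono : ∀ s t, s ≤ t → N t ≤ N s := by
    intro s t hst
    induction t with
    | zero => obtain rfl := Nat.le_zero.mp hst; exact le_refl _
    | succ t ih =>
        rcases Nat.lt_or_ge s (t+1) with hlt | hge
        · exact le_trans (hN1 t) (ih (by omega))
        · obtain rfl : s = t + 1 := le_antisymm hst hge
          exact le_refl _
  have hNB : ∀ t, N (t + B) ≤ lam * N t := by
    intro t
    have h1 : N (t + B) = ∑ i, ‖∑ j, prodW W t B i j • e t j‖ :=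
      Finset.sum_congr rfl fun i _ => by rw [iterate_prodW (W := W) e he t B i]
    rw [h1, hlam]
    exact colstoch_contract (prodW W t B) hδpos (hP t) (prodW_col hWcol t B) (e t) (hesum t)
  have hNq : ∀ q r, N (q * B + r) ≤ lam ^ q * N 0 := by
    intro q
    induction q with
    | zero => intro r; simpa using hNmono 0 r (Nat.zero_le r)
    | succ q ih =>
        intro r
        have harith : (q + 1) * B + r = (q * B + r) + B := by ring
        calc N ((q + 1) * B + r) = N ((q * B + r) + B) := by rw [harith]
          _ ≤ lam * N (q * B + r) := hNB _
          _ ≤ lam * (lam ^ q * N 0) :=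
              mul_le_mul_of_nonneg_left (ih r) (le_of_lt hlam_pos)
          _ = lam ^ (q + 1) * N 0 := by ring
  have hNt : ∀ t, N t ≤ lam ^ (t / B) * N 0 := by
    intro t
    have := hNq (t / B) (t % B)
    rwa [Nat.div_add_mod' t B] at this
  -- set up μ
  set μ : ℝ := lam ^ ((B : ℝ)⁻¹) with hμ_def
  have hBR : (0:ℝ) < B := by exact_mod_cast hBpos
  have hμpos : 0 < μ := Real.rpow_pos_of_pos hlam_pos _
  have hμlt1 : μ < 1 :=
    Real.rpow_lt_one (le_of_lt hlam_pos) hlam_lt1 (by positivity)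
  have hμt : ∀ t : ℕ, μ ^ t = lam ^ ((t : ℝ) / B) := by
    intro t
    rw [hμ_def, ← Real.rpow_natCast (lam ^ ((B:ℝ)⁻¹)) t,
      ← Real.rpow_mul (le_of_lt hlam_pos)]
    congr 1
    field_simp
  have hpow : ∀ t : ℕ, lam ^ (t / B) ≤ lam⁻¹ * μ ^ t := by
    intro t
    have hfloor : (t : ℝ) / B - 1 ≤ ((t / B : ℕ) : ℝ) := by
      have h1 : B * (t / B) + t % B = t := Nat.div_add_mod t B
      have h2 : t % B < B := Nat.mod_lt t hBpos
      have h3 : (t : ℝ) < B * ((t / B : ℕ) : ℝ) + B := by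
        exact_mod_cast (by omega : t < B * (t / B) + B)
      rw [sub_le_iff_le_add, div_le_iff₀ hBR]
      nlinarith
    calc lam ^ (t / B) = lam ^ (((t / B : ℕ)):ℝ) := (Real.rpow_natCast _ _).symm
      _ ≤ lam ^ ((t:ℝ)/B - 1) :=
          Real.rpow_le_rpow_of_exponent_ge hlam_pos (le_of_lt hlam_lt1) hfloor
      _ = lam ^ ((t:ℝ)/B) * lam ^ (-1 : ℝ) := by
          rw [← Real.rpow_add hlam_pos]; ring_nf
      _ = lam⁻¹ * μ ^ t := by rw [Real.rpow_neg_one, hμt t, mul_comm]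
  have hN0 : 0 ≤ N 0 := hNnn 0
  refine ⟨δ⁻¹ * ((N 0 + 1) * lam⁻¹), by positivity, μ, le_of_lt hμpos, hμlt1, ?_⟩
  intro i t
  have hyne : y t i ≠ 0 := ne_of_gt (lt_of_lt_of_le hδpos (hylb t i))
  have heq : (y t i)⁻¹ • x t i - (n : ℝ)⁻¹ • S = (y t i)⁻¹ • e t i := by
    simp only [he_def, smul_sub, smul_smul]
    congr 2
    rw [← mul_assoc, inv_mul_cancel₀ hyne, one_mul]
  rw [heq, norm_smul, Real.norm_eq_abs, abs_of_nonneg (inv_nonneg.mpr (hynn t i))]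
  have h1 : ‖e t i‖ ≤ N t :=
    Finset.single_le_sum (f := fun j => ‖e t j‖) (fun j _ => norm_nonneg _)
      (Finset.mem_univ i)
  have h2 : (y t i)⁻¹ ≤ δ⁻¹ := by
    apply inv_anti₀ hδpos (hylb t i)
  have hμtnn : (0:ℝ) ≤ μ ^ t := le_of_lt (pow_pos hμpos t)
  calc (y t i)⁻¹ * ‖e t i‖
      ≤ δ⁻¹ * N t := by
        apply mul_le_mul h2 (le_trans h1 (le_refl _)) (norm_nonneg _)
          (le_of_lt (inv_pos.mpr hδpos))
    _ ≤ δ⁻¹ * (lam ^ (t / B) * N 0) :=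
        mul_le_mul_of_nonneg_left (hNt t) (le_of_lt (inv_pos.mpr hδpos))
    _ ≤ δ⁻¹ * ((lam⁻¹ * μ ^ t) * N 0) := by
        apply mul_le_mul_of_nonneg_left
          (mul_le_mul_of_nonneg_right (hpow t) hN0)
          (le_of_lt (inv_pos.mpr hδpos))
    _ ≤ δ⁻¹ * ((lam⁻¹ * μ ^ t) * (N 0 + 1)) := by
        apply mul_le_mul_of_nonneg_left
          (mul_le_mul_of_nonneg_left (by linarith) ?_)
          (le_of_lt (inv_pos.mpr hδpos))
        exact mul_nonneg (le_of_lt (inv_pos.mpr hlam_pos)) hμtnn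
    _ = δ⁻¹ * ((N 0 + 1) * lam⁻¹) * μ ^ t := by ring
end

section
/- Suppose the sequence of directed graphs {G(t)} associated with the column stochastic matrices {W(t)} is uniformly strongly connected. Then the matrices S(t) satisfy: for every t, every row of S(t) sums to 1 (S(t) is row stochastic), and there exists a constant γ > 0 (independent of t) such that s_ii(t) ≥ γ for all i, and s_ij(t) ≥ γ whenever s_ij(t) > 0. In particular, one may take γ = βη/n, where η > 0 is a uniform lower bound on the entries y_i(t). -/
open Finset

/-- Each `S(t)` is a row stochastic matrix with positive diagonal entries, and its
positive entries (in particular all diagonal entries) are bounded below by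
`γ = βη/n > 0`, where `η > 0` is a uniform lower bound on the weights `y_i(t)`. -/
theorem Smat_row_stochastic_uniform_bound (n : ℕ) (hn : 1 ≤ n)
    (W : ℕ → Matrix (Fin n) (Fin n) ℝ)
    (hWnonneg : ∀ t i j, 0 ≤ W t i j)
    (hWcol : ∀ t j, ∑ i, W t i j = 1)
    (hWdiag : ∀ t i, 0 < W t i i)
    (β : ℝ) (hβ : 0 < β)
    (hWβ : ∀ t i j, 0 < W t i j → β ≤ W t i j)
    (L : ℕ) (hL : 0 < L)
    (hconn : ∀ t : ℕ, ∀ i j : Fin n,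
      Relation.TransGen (fun a b => ∃ k ∈ Finset.Ico t (t + L), 0 < W k b a) i j)
    (y : ℕ → Fin n → ℝ)
    (hy0 : ∀ i, y 0 i = 1)
    (hy : ∀ t i, y (t + 1) i = ∑ j, W t i j * y t j) :
    (∀ t : ℕ, ∀ i : Fin n, ∑ j, Smat W y t i j = 1) ∧
    ∃ η > 0, (∀ i : Fin n, ∀ t : ℕ, η ≤ y t i) ∧
      β * η / n > 0 ∧
      ∀ t : ℕ, ∀ i j : Fin n,
        β * η / n ≤ Smat W y t i i ∧
        (0 < Smat W y t i j → β * η / n ≤ Smat W y t i j) := by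
  classical
  -- positivity of y
  have ypos : ∀ t i, 0 < y t i := by
    intro t
    induction t with
    | zero => intro i; rw [hy0]; norm_num
    | succ t ih =>
      intro i
      rw [hy]
      exact Finset.sum_pos' (fun k _ => mul_nonneg (hWnonneg t i k) (ih k).le)
        ⟨i, Finset.mem_univ i, mul_pos (hWdiag t i) (ih i)⟩
  -- total mass is n
  have ysum : ∀ t, ∑ i, y t i = (n : ℝ) := by
    intro t
    induction t with
    | zero => simp [hy0]
    | succ t ih =>
      have h1 : ∑ i, y (t + 1) i = ∑ j, (∑ i, W t i j) * y t j := by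
        simp only [hy, Finset.sum_mul]
        exact Finset.sum_comm
      rw [h1]
      simp only [hWcol, one_mul]
      exact ih
  -- some coordinate is at least 1
  have hex : ∀ t, ∃ j, 1 ≤ y t j := by
    intro t
    by_contra h
    push_neg at h
    have h2 : ∑ i, y t i < ∑ _i : Fin n, (1 : ℝ) :=
      Finset.sum_lt_sum_of_nonempty ⟨⟨0, hn⟩, Finset.mem_univ _⟩ (fun i _ => h i)
    rw [ysum t, Finset.sum_const, Finset.card_univ, Fintype.card_fin, nsmul_eq_mul,
      mul_one] at h2
    exact lt_irrefl _ h2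
  -- one-step transfer
  have step : ∀ t (i j : Fin n), 0 < W t i j → β * y t j ≤ y (t + 1) i := by
    intro t i j hpos
    rw [hy]
    calc β * y t j ≤ W t i j * y t j :=
          mul_le_mul_of_nonneg_right (hWβ t i j hpos) (ypos t j).le
      _ ≤ ∑ k, W t i k * y t k :=
          Finset.single_le_sum (fun k _ => mul_nonneg (hWnonneg t i k) (ypos t k).le)
            (Finset.mem_univ j)
  -- self-loop decay
  have selfstep : ∀ t s (i : Fin n), β ^ s * y t i ≤ y (t + s) i := by
    intro t s i
    induction s with
    | zero => simp
    | succ s ih =>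
      have h1 : β * y (t + s) i ≤ y (t + s + 1) i := step (t + s) i i (hWdiag (t + s) i)
      calc β ^ (s + 1) * y t i = β * (β ^ s * y t i) := by ring
        _ ≤ β * y (t + s) i := mul_le_mul_of_nonneg_left ih hβ.le
        _ ≤ y (t + (s + 1)) i := by rw [show t + (s + 1) = t + s + 1 by omega]; exact h1
  -- propagation: after (n-1)*L steps, every coordinate dominates β^((n-1)*L) * y t j
  have prop : ∀ t (j i : Fin n), β ^ ((n - 1) * L) * y t j ≤ y (t + (n - 1) * L) i := by
    intro t j i
    set F : ℕ → Finset (Fin n) :=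
      fun s => Finset.univ.filter (fun b => β ^ s * y t j ≤ y (t + s) b) with hF
    have hmemF : ∀ s b, b ∈ F s ↔ β ^ s * y t j ≤ y (t + s) b := by
      intro s b; simp [hF]
    have hmono : ∀ ⦃s s' : ℕ⦄, s ≤ s' → F s ⊆ F s' := by
      intro s s' hss b hb
      rw [hmemF] at hb ⊢
      have h2 : β ^ (s' - s) * y (t + s) b ≤ y (t + s') b := by
        have h3 := selfstep (t + s) (s' - s) b
        rwa [show t + s + (s' - s) = t + s' by omega] at h3
      calc β ^ s' * y t j = β ^ (s' - s) * (β ^ s * y t j) := by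
            rw [← mul_assoc, ← pow_add]
            congr 2
            omega
        _ ≤ β ^ (s' - s) * y (t + s) b :=
            mul_le_mul_of_nonneg_left hb (pow_nonneg hβ.le _)
        _ ≤ y (t + s') b := h2
    have hjF : ∀ s, j ∈ F s := fun s => (hmemF s j).2 (selfstep t s j)
    have hedge : ∀ s (a b : Fin n) (k : ℕ), a ∈ F s → t + s ≤ k → k < t + s + L →
        0 < W k b a → b ∈ F (s + L) := by
      intro s a b k ha hk1 hk2 hw
      have ha' : a ∈ F (k - t) := hmono (by omega) ha
      rw [hmemF] at ha'
      have hstep : β * y k a ≤ y (k + 1) b := step k b a hw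
      have hb : b ∈ F (k + 1 - t) := by
        rw [hmemF]
        rw [show t + (k + 1 - t) = k + 1 by omega]
        have h3 : β ^ (k + 1 - t) * y t j = β * (β ^ (k - t) * y t j) := by
          rw [show k + 1 - t = (k - t) + 1 by omega, pow_succ]
          ring
        rw [h3]
        calc β * (β ^ (k - t) * y t j) ≤ β * y (t + (k - t)) a :=
              mul_le_mul_of_nonneg_left ha' hβ.le
          _ = β * y k a := by rw [show t + (k - t) = k by omega]
          _ ≤ y (k + 1) b := hstep
      exact hmono (by omega) hb
    have hgrow : ∀ s, F s ≠ Finset.univ → ∃ b, b ∉ F s ∧ b ∈ F (s + L) := by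
      intro s hne
      obtain ⟨c, hc⟩ : ∃ c, c ∉ F s := by
        by_contra h
        push_neg at h
        exact hne (Finset.eq_univ_iff_forall.2 h)
      have claim : ∀ c' : Fin n,
          Relation.TransGen (fun a b => ∃ k ∈ Finset.Ico (t + s) (t + s + L), 0 < W k b a) j c' →
          c' ∈ F s ∨ ∃ b, b ∉ F s ∧ b ∈ F (s + L) := by
        intro c' hp
        induction hp with
        | @single b h =>
          obtain ⟨k, hk, hw⟩ := h
          rw [Finset.mem_Ico] at hk
          have hbF := hedge s j b k (hjF s) hk.1 hk.2 hw
          by_cases hmem : b ∈ F s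
          · exact Or.inl hmem
          · exact Or.inr ⟨b, hmem, hbF⟩
        | @tail b c'' hp1 h ih =>
          rcases ih with h1 | h1
          · obtain ⟨k, hk, hw⟩ := h
            rw [Finset.mem_Ico] at hk
            have hbF := hedge s b c'' k h1 hk.1 hk.2 hw
            by_cases hmem : c'' ∈ F s
            · exact Or.inl hmem
            · exact Or.inr ⟨c'', hmem, hbF⟩
          · exact Or.inr h1
      rcases claim c (hconn (t + s) j c) with h | h
      · exact absurd h hc
      · exact h
    have hcard : ∀ p, min n (p + 1) ≤ (F (p * L)).card := by
      intro p
      induction p with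
      | zero =>
        have h1 : 1 ≤ (F 0).card := Finset.card_pos.2 ⟨j, hjF 0⟩
        simpa using le_trans (min_le_right n 1) h1
      | succ p ih =>
        have hEq : (p + 1) * L = p * L + L := by ring
        by_cases hu : F (p * L) = Finset.univ
        · have h1 : F ((p + 1) * L) = Finset.univ := by
            apply Finset.eq_univ_of_forall
            intro x
            exact hmono (by omega : p * L ≤ (p + 1) * L) (hu ▸ Finset.mem_univ x)
          rw [h1, Finset.card_univ, Fintype.card_fin]
          exact min_le_left _ _
        · obtain ⟨b, hb1, hb2⟩ := hgrow (p * L) hu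
          have hss : F (p * L) ⊂ F ((p + 1) * L) := by
            constructor
            · exact hmono (by omega)
            · intro h
              exact hb1 (h (hEq ▸ hb2))
          have h2 := Finset.card_lt_card hss
          have h3 : min n (p + 1 + 1) ≤ min n (p + 1) + 1 := by omega
          omega
    have hall : F ((n - 1) * L) = Finset.univ := by
      have h1 := hcard (n - 1)
      rw [show n - 1 + 1 = n by omega, min_self] at h1
      apply Finset.eq_univ_of_card
      have h2 : (F ((n - 1) * L)).card ≤ n := by
        simpa using Finset.card_le_univ (F ((n - 1) * L))
      rw [Fintype.card_fin]
      omega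
    have := Finset.eq_univ_iff_forall.1 hall i
    rwa [hmemF] at this
  -- uniform lower bound on y
  set T : ℕ := (n - 1) * L with hT
  set η : ℝ := (min β 1) ^ T with hηdef
  have hmin0 : 0 < min β 1 := lt_min hβ one_pos
  have hη0 : 0 < η := pow_pos hmin0 T
  have hηβT : η ≤ β ^ T := pow_le_pow_left₀ hmin0.le (min_le_left β 1) T
  have hηy : ∀ (i : Fin n) (t : ℕ), η ≤ y t i := by
    intro i t
    rcases le_or_gt T t with h | h
    · obtain ⟨j, hj⟩ := hex (t - T)
      have h1 := prop (t - T) j i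
      rw [show t - T + T = t by omega] at h1
      calc η ≤ β ^ T := hηβT
        _ = β ^ T * 1 := (mul_one _).symm
        _ ≤ β ^ T * y (t - T) j := mul_le_mul_of_nonneg_left hj (pow_nonneg hβ.le _)
        _ ≤ y t i := h1
    · have h1 : η ≤ (min β 1) ^ t :=
        pow_le_pow_of_le_one hmin0.le (min_le_right β 1) h.le
      have h2 : (min β 1) ^ t ≤ β ^ t := pow_le_pow_left₀ hmin0.le (min_le_left β 1) t
      have h3 : β ^ t ≤ y t i := by
        have h4 := selfstep 0 t i
        rw [hy0, mul_one, Nat.zero_add] at h4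
        exact h4
      linarith
  -- denominator facts
  have hD : ∀ t (i : Fin n), 0 < ∑ k, W t i k * y t k := by
    intro t i
    have := ypos (t + 1) i
    rwa [hy] at this
  have hW1 : ∀ t (i k : Fin n), W t i k ≤ 1 := by
    intro t i k
    calc W t i k ≤ ∑ i', W t i' k :=
          Finset.single_le_sum (fun i' _ => hWnonneg t i' k) (Finset.mem_univ i)
      _ = 1 := hWcol t k
  have hDn : ∀ t (i : Fin n), (∑ k, W t i k * y t k) ≤ (n : ℝ) := by
    intro t i
    calc ∑ k, W t i k * y t k ≤ ∑ k, 1 * y t k :=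
          Finset.sum_le_sum (fun k _ =>
            mul_le_mul_of_nonneg_right (hW1 t i k) (ypos t k).le)
      _ = (n : ℝ) := by simp only [one_mul]; exact ysum t
  have hnpos : (0 : ℝ) < n := by
    have : (1 : ℝ) ≤ n := by exact_mod_cast hn
    linarith
  -- entry bound
  have hSbound : ∀ t (i j : Fin n), 0 < W t i j → β * η / n ≤ Smat W y t i j := by
    intro t i j hw
    show β * η / n ≤ W t i j * y t j / ∑ k, W t i k * y t k
    apply div_le_div₀ (mul_nonneg (hWnonneg t i j) (ypos t j).le)
    · exact mul_le_mul (hWβ t i j hw) (hηy j t) hη0.le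
        (le_trans hβ.le (hWβ t i j hw))
    · exact hD t i
    · exact hDn t i
  refine ⟨?_, η, hη0, hηy, ?_, ?_⟩
  · intro t i
    show (∑ j, W t i j * y t j / ∑ k, W t i k * y t k) = 1
    rw [← Finset.sum_div]
    exact div_self (ne_of_gt (hD t i))
  · exact div_pos (mul_pos hβ hη0) hnpos
  · intro t i j
    refine ⟨hSbound t i i (hWdiag t i), ?_⟩
    intro hS
    apply hSbound t i j
    rcases (hWnonneg t i j).lt_or_eq with h | h
    · exact h
    · exfalso
      have : Smat W y t i j = 0 := by
        show W t i j * y t j / ∑ k, W t i k * y t k = 0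
        rw [← h, zero_mul, zero_div]
      rw [this] at hS
      exact lt_irrefl 0 hS
end

section
/- Suppose the sequence of directed graphs {G(t)} associated with the column stochastic matrices {W(t)} is uniformly strongly connected. Then the sequence of row stochastic matrices {S(t)} has a unique absolute probability sequence {π(t)}, and it is given explicitly by π_i(t) = y_i(t)/n for all i ∈ {1,…,n} and t ≥ 0. In particular, each vector (y_1(t)/n,…,y_n(t)/n) is a stochastic vector and y(t)ᵀ = y(t+1)ᵀ S(t) for all t ≥ 0. -/
open Finset

/-- A sequence of stochastic vectors `π(t)` is an absolute probability sequence for a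
sequence of row stochastic matrices `S(t)` if `π(t)ᵀ = π(t+1)ᵀ S(t)` for all `t`. -/
def IsAbsProbSeq {n : ℕ} (S : ℕ → Matrix (Fin n) (Fin n) ℝ) (π : ℕ → Fin n → ℝ) : Prop :=
  (∀ t : ℕ, (∀ i, 0 ≤ π t i) ∧ ∑ i, π t i = 1) ∧
  ∀ t : ℕ, ∀ j : Fin n, π t j = ∑ i, π (t + 1) i * S t i j

namespace APS

variable {n : ℕ}

/-- Backward product `pm M s r = M (s+r-1) * ⋯ * M s`. -/
noncomputable def pm (M : ℕ → Matrix (Fin n) (Fin n) ℝ) (s : ℕ) : ℕ → Matrix (Fin n) (Fin n) ℝ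
  | 0 => 1
  | r + 1 => M (s + r) * pm M s r

lemma pm_zero (M : ℕ → Matrix (Fin n) (Fin n) ℝ) (s : ℕ) : pm M s 0 = 1 := rfl

lemma pm_succ (M : ℕ → Matrix (Fin n) (Fin n) ℝ) (s r : ℕ) :
    pm M s (r + 1) = M (s + r) * pm M s r := rfl

lemma pm_nonneg {M : ℕ → Matrix (Fin n) (Fin n) ℝ} (hM : ∀ t i j, 0 ≤ M t i j)
    (s r : ℕ) (i j : Fin n) : 0 ≤ pm M s r i j := by
  induction r generalizing i j with
  | zero => rw [pm_zero]; simp [Matrix.one_apply]; positivity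
  | succ r ih =>
    rw [pm_succ, Matrix.mul_apply]
    exact Finset.sum_nonneg fun k _ => mul_nonneg (hM _ _ _) (ih k j)

lemma pm_rowsum {M : ℕ → Matrix (Fin n) (Fin n) ℝ} (hM : ∀ t i, ∑ j, M t i j = 1)
    (s r : ℕ) (i : Fin n) : ∑ j, pm M s r i j = 1 := by
  induction r generalizing i with
  | zero => simp [pm_zero, Matrix.one_apply]
  | succ r ih =>
    rw [pm_succ]
    simp only [Matrix.mul_apply]
    rw [Finset.sum_comm]
    calc ∑ k, ∑ j, M (s + r) i k * pm M s r k j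
        = ∑ k, M (s + r) i k * ∑ j, pm M s r k j := by
          simp [Finset.mul_sum]
      _ = 1 := by simp only [ih]; simpa using hM (s + r) i

lemma pm_comp (M : ℕ → Matrix (Fin n) (Fin n) ℝ) (s a b : ℕ) :
    pm M s (a + b) = pm M (s + b) a * pm M s b := by
  induction a with
  | zero => simp [pm_zero]
  | succ a ih =>
    have h1 : a + 1 + b = (a + b) + 1 := by omega
    rw [h1, pm_succ, ih, pm_succ, Matrix.mul_assoc,
      show s + (a + b) = s + b + a from by omega]

lemma entry_mul_le {A B : Matrix (Fin n) (Fin n) ℝ}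
    (hA : ∀ i j, 0 ≤ A i j) (hB : ∀ i j, 0 ≤ B i j) (i k j : Fin n) :
    A i k * B k j ≤ (A * B) i j := by
  rw [Matrix.mul_apply]
  exact Finset.single_le_sum (fun c _ => mul_nonneg (hA i c) (hB c j)) (mem_univ k)

lemma transGen_closed {α : Type*} {R : α → α → Prop} {s : Finset α}
    (hcl : ∀ a ∈ s, ∀ c, R a c → c ∈ s) {x z : α}
    (h : Relation.TransGen R x z) (hx : x ∈ s) : z ∈ s := by
  induction h with
  | single h => exact hcl _ hx _ h
  | tail h1 h2 ih => exact hcl _ ih _ h2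

lemma contraction {Q : Matrix (Fin n) (Fin n) ℝ} {c : ℝ}
    (hQ : ∀ i j, c ≤ Q i j) (hrow : ∀ i, ∑ j, Q i j = 1)
    {v : Fin n → ℝ} (hv : ∑ i, v i = 0) :
    ∑ j, |∑ i, v i * Q i j| ≤ (1 - n * c) * ∑ i, |v i| := by
  have key : ∀ j, |∑ i, v i * Q i j| ≤ ∑ i, |v i| * (Q i j - c) := by
    intro j
    have h0 : ∑ i, v i * Q i j = ∑ i, v i * (Q i j - c) := by
      simp only [mul_sub, Finset.sum_sub_distrib, ← Finset.sum_mul, hv, zero_mul, sub_zero]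
    rw [h0]
    refine le_trans (Finset.abs_sum_le_sum_abs _ _) (Finset.sum_le_sum fun i _ => ?_)
    rw [abs_mul, abs_of_nonneg (show (0:ℝ) ≤ Q i j - c by linarith [hQ i j])]
  calc ∑ j, |∑ i, v i * Q i j| ≤ ∑ j, ∑ i, |v i| * (Q i j - c) :=
        Finset.sum_le_sum fun j _ => key j
    _ = ∑ i, |v i| * (1 - n * c) := by
        rw [Finset.sum_comm]
        refine Finset.sum_congr rfl fun i _ => ?_
        rw [← Finset.mul_sum, Finset.sum_sub_distrib, hrow i]
        simp [Finset.card_univ]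
    _ = (1 - n * c) * ∑ i, |v i| := by rw [← Finset.sum_mul, mul_comm]

lemma aps_prop {S : ℕ → Matrix (Fin n) (Fin n) ℝ} {π : ℕ → Fin n → ℝ}
    (h2 : ∀ t j, π t j = ∑ i, π (t + 1) i * S t i j) (r t : ℕ) (j : Fin n) :
    π t j = ∑ i, π (t + r) i * pm S t r i j := by
  induction r with
  | zero => simp [pm_zero, Matrix.one_apply]
  | succ r ih =>
    rw [ih]
    calc ∑ i, π (t + r) i * pm S t r i j
        = ∑ i, (∑ a, π (t + r + 1) a * S (t + r) a i) * pm S t r i j := by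
          simp_rw [← h2]
      _ = ∑ a, π (t + r + 1) a * ∑ i, S (t + r) a i * pm S t r i j := by
          simp only [Finset.sum_mul, Finset.mul_sum, mul_assoc]
          rw [Finset.sum_comm]
      _ = ∑ a, π (t + (r + 1)) a * pm S t (r + 1) a j := by
          refine Finset.sum_congr rfl fun a _ => ?_
          rw [pm_succ, Matrix.mul_apply, show t + (r + 1) = t + r + 1 from rfl]

section window

variable {M W : ℕ → Matrix (Fin n) (Fin n) ℝ} {γ : ℝ} {L : ℕ}
variable (hMnn : ∀ t i j, 0 ≤ M t i j)
variable (hγ : ∀ t i j, 0 < W t i j → γ ≤ M t i j)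
variable (hγpos : 0 < γ) (hγ1 : γ ≤ 1)
variable (hWdiag : ∀ t i, 0 < W t i i)

set_option linter.unusedSectionVars false

include hMnn hγ hγpos hγ1 hWdiag in
lemma pm_diag (s r : ℕ) (i : Fin n) : γ ^ r ≤ pm M s r i i := by
  induction r with
  | zero => simp [pm_zero, Matrix.one_apply]
  | succ r ih =>
    rw [pm_succ]
    calc γ ^ (r + 1) = γ * γ ^ r := by ring
      _ ≤ M (s + r) i i * pm M s r i i := by
          apply mul_le_mul (hγ _ _ _ (hWdiag _ _)) ih (by positivity)
          exact le_trans (le_of_lt hγpos) (hγ _ _ _ (hWdiag _ _))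
      _ ≤ (M (s + r) * pm M s r) i i :=
          entry_mul_le (fun a b => hMnn _ a b) (pm_nonneg hMnn s r) i i i

include hMnn hγ hγpos hγ1 hWdiag in
lemma pm_edge {k s r : ℕ} {i j : Fin n} (hk : 0 < W k i j)
    (h1 : s ≤ k) (h2 : k < s + r) : γ ^ r ≤ pm M s r i j := by
  set b := k - s with hb
  set a := r - (b + 1) with ha
  have hr : r = a + (b + 1) := by omega
  have hsb : s + b = k := by omega
  have step1 : γ * γ ^ b ≤ pm M s (b + 1) i j := by
    rw [pm_succ, hsb]
    calc γ * γ ^ b ≤ M k i j * pm M s b j j := by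
          apply mul_le_mul (hγ _ _ _ hk) (pm_diag hMnn hγ hγpos hγ1 hWdiag s b j)
            (by positivity) (le_trans (le_of_lt hγpos) (hγ _ _ _ hk))
      _ ≤ (M k * pm M s b) i j :=
          entry_mul_le (fun a b => hMnn _ a b) (pm_nonneg hMnn s b) i j j
  rw [hr, pm_comp]
  calc γ ^ (a + (b + 1)) = γ ^ a * (γ * γ ^ b) := by ring
    _ ≤ pm M (s + (b + 1)) a i i * pm M s (b + 1) i j := by
        apply mul_le_mul (pm_diag hMnn hγ hγpos hγ1 hWdiag _ a i) step1 (by positivity)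
        exact pm_nonneg hMnn _ a i i
    _ ≤ (pm M (s + (b + 1)) a * pm M s (b + 1)) i j :=
        entry_mul_le (pm_nonneg hMnn _ a) (pm_nonneg hMnn s (b + 1)) i i j

include hMnn hγ hγpos hγ1 hWdiag in
lemma pm_window (hn : 1 ≤ n) (hL : 0 < L)
    (hconn : ∀ t : ℕ, ∀ i j : Fin n,
      Relation.TransGen (fun a b => ∃ k ∈ Finset.Ico t (t + L), 0 < W k b a) i j)
    (t : ℕ) (i j : Fin n) :
    γ ^ ((n - 1) * L) ≤ pm M t ((n - 1) * L) i j := by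
  classical
  set B : ℕ → Finset (Fin n) :=
    fun r => univ.filter (fun a => γ ^ (r * L) ≤ pm M t (r * L) a j) with hB
  have hBmem : ∀ r (a : Fin n), a ∈ B r ↔ γ ^ (r * L) ≤ pm M t (r * L) a j := by
    intro r a; simp [hB]
  have hjB : ∀ r, j ∈ B r := fun r =>
    (hBmem r j).mpr (pm_diag hMnn hγ hγpos hγ1 hWdiag t (r * L) j)
  have hstep : ∀ r (a c : Fin n), a ∈ B r → γ ^ L ≤ pm M (t + r * L) L c a → c ∈ B (r + 1) := by
    intro r a c ha hca
    rw [hBmem]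
    have hdec : (r + 1) * L = L + r * L := by ring
    rw [hdec, pm_comp]
    calc γ ^ (L + r * L) = γ ^ L * γ ^ (r * L) := by rw [pow_add]
      _ ≤ pm M (t + r * L) L c a * pm M t (r * L) a j := by
          apply mul_le_mul hca ((hBmem r a).mp ha) (by positivity)
          exact pm_nonneg hMnn _ L c a
      _ ≤ (pm M (t + r * L) L * pm M t (r * L)) c j :=
          entry_mul_le (pm_nonneg hMnn _ L) (pm_nonneg hMnn t (r * L)) c a j
  have hmono : ∀ r, B r ⊆ B (r + 1) := by
    intro r a ha
    exact hstep r a a ha (pm_diag hMnn hγ hγpos hγ1 hWdiag _ L a)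
  have hgrow : ∀ r, B r ≠ univ → (B r).card < (B (r + 1)).card := by
    intro r hne
    obtain ⟨i0, hi0⟩ : ∃ i0, i0 ∉ B r := by
      by_contra h; push_neg at h; exact hne (Finset.eq_univ_iff_forall.mpr h)
    by_cases hex : ∃ a ∈ B r, ∃ c, c ∉ B r ∧
        ∃ k ∈ Finset.Ico (t + r * L) (t + r * L + L), 0 < W k c a
    · obtain ⟨a, ha, c, hc, k, hk, hWk⟩ := hex
      rw [Finset.mem_Ico] at hk
      have hcB : c ∈ B (r + 1) :=
        hstep r a c ha (pm_edge hMnn hγ hγpos hγ1 hWdiag hWk hk.1 hk.2)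
      apply Finset.card_lt_card
      exact (Finset.ssubset_iff_of_subset (hmono r)).mpr ⟨c, hcB, hc⟩
    · exfalso
      push_neg at hex
      refine hi0 (transGen_closed ?_ (hconn (t + r * L) j i0) (hjB r))
      intro a ha c hR
      by_contra hc
      obtain ⟨k, hk, hWk⟩ := hR
      exact absurd hWk (not_lt.mpr (hex a ha c hc k hk))
  have hcard : ∀ r, min (r + 1) n ≤ (B r).card := by
    intro r
    induction r with
    | zero =>
      have h1 : 1 ≤ (B 0).card := Finset.card_pos.mpr ⟨j, hjB 0⟩
      exact le_trans (min_le_left _ _) h1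
    | succ r ih =>
      by_cases h : B r = univ
      · have huniv : B (r + 1) = univ := Finset.univ_subset_iff.mp (h ▸ hmono r)
        rw [huniv, Finset.card_univ, Fintype.card_fin]
        exact min_le_right _ _
      · have := hgrow r h
        omega
  have hfin : B (n - 1) = univ := by
    apply Finset.eq_univ_of_card
    have h1 := hcard (n - 1)
    have h2 := Finset.card_le_univ (B (n - 1))
    rw [Fintype.card_fin] at h2 ⊢
    omega
  have : i ∈ B (n - 1) := hfin ▸ Finset.mem_univ i
  exact (hBmem (n - 1) i).mp this

end window

end APS


/-- The sequence `{S(t)}` has the unique absolute probability sequence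
`π_i(t) = y_i(t)/n`; in particular each `y(t)/n` is a stochastic vector and
`y(t)ᵀ = y(t+1)ᵀ S(t)` for all `t`. -/
theorem Smat_absolute_probability_sequence (n : ℕ) (hn : 1 ≤ n)
    (W : ℕ → Matrix (Fin n) (Fin n) ℝ)
    (hWnonneg : ∀ t i j, 0 ≤ W t i j)
    (hWcol : ∀ t j, ∑ i, W t i j = 1)
    (hWdiag : ∀ t i, 0 < W t i i)
    (β : ℝ) (hβ : 0 < β)
    (hWβ : ∀ t i j, 0 < W t i j → β ≤ W t i j)
    (L : ℕ) (hL : 0 < L)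
    (hconn : ∀ t : ℕ, ∀ i j : Fin n,
      Relation.TransGen (fun a b => ∃ k ∈ Finset.Ico t (t + L), 0 < W k b a) i j)
    (y : ℕ → Fin n → ℝ)
    (hy0 : ∀ i, y 0 i = 1)
    (hy : ∀ t i, y (t + 1) i = ∑ j, W t i j * y t j) :
    IsAbsProbSeq (Smat W y) (fun t i => y t i / n) ∧
    (∀ t : ℕ, ∀ j : Fin n, y t j = ∑ i, y (t + 1) i * Smat W y t i j) ∧
    ∀ π : ℕ → Fin n → ℝ, IsAbsProbSeq (Smat W y) π → π = fun t i => y t i / n := by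
  classical
  have hnR : (0:ℝ) < n := by exact_mod_cast Nat.pos_of_ne_zero (by omega)
  set m := (n - 1) * L with hm
  -- basic facts about y
  have ysum : ∀ t, ∑ i, y t i = (n:ℝ) := by
    intro t; induction t with
    | zero => simp [hy0]
    | succ t ih =>
      calc ∑ i, y (t+1) i = ∑ i, ∑ j, W t i j * y t j := by simp [hy]
        _ = ∑ j, (∑ i, W t i j) * y t j := by
            rw [Finset.sum_comm]; simp [Finset.sum_mul]
        _ = ∑ j, y t j := by simp [hWcol]
        _ = n := ih
  have ypos : ∀ t i, 0 < y t i := by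
    intro t
    induction t with
    | zero => intro i; simp [hy0]
    | succ t ih =>
      intro i
      rw [hy]
      have h1 : W t i i * y t i ≤ ∑ j, W t i j * y t j :=
        Finset.single_le_sum (fun j _ => mul_nonneg (hWnonneg t i j) (le_of_lt (ih j)))
          (mem_univ i)
      have h2 := mul_pos (hWdiag t i) (ih i)
      linarith
  have ynn : ∀ t i, 0 ≤ y t i := fun t i => (ypos t i).le
  have yle : ∀ t i, y t i ≤ n := by
    intro t i
    rw [← ysum t]
    exact Finset.single_le_sum (fun j _ => ynn t j) (mem_univ i)
  have hβ1 : β ≤ 1 := by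
    have h1 : W 0 ⟨0, hn⟩ ⟨0, hn⟩ ≤ ∑ i, W 0 i ⟨0, hn⟩ :=
      Finset.single_le_sum (fun i _ => hWnonneg 0 i _) (mem_univ _)
    rw [hWcol 0 _] at h1
    exact le_trans (hWβ 0 _ _ (hWdiag 0 _)) h1
  have ypm : ∀ s r i, y (s + r) i = ∑ j, APS.pm W s r i j * y s j := by
    intro s r
    induction r with
    | zero => intro i; simp [APS.pm_zero, Matrix.one_apply]
    | succ r ih =>
      intro i
      rw [show s + (r + 1) = (s + r) + 1 from rfl, hy]
      calc ∑ j, W (s+r) i j * y (s+r) j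
          = ∑ j, W (s+r) i j * ∑ k, APS.pm W s r j k * y s k := by simp_rw [ih]
        _ = ∑ k, (∑ j, W (s+r) i j * APS.pm W s r j k) * y s k := by
            simp only [Finset.mul_sum, Finset.sum_mul, mul_assoc]
            rw [Finset.sum_comm]
        _ = ∑ k, APS.pm W s (r+1) i k * y s k := by
            refine Finset.sum_congr rfl fun k _ => ?_
            rw [APS.pm_succ, Matrix.mul_apply]
  have hWwin : ∀ t i j, β ^ m ≤ APS.pm W t m i j := fun t i j =>
    APS.pm_window hWnonneg (fun t i j h => hWβ t i j h) hβ hβ1 hWdiag hn hL hconn t i j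
  have ypowlow : ∀ t i, β ^ t ≤ y t i := by
    intro t
    induction t with
    | zero => intro i; simp [hy0]
    | succ t ih =>
      intro i
      rw [hy]
      have h1 : W t i i * y t i ≤ ∑ j, W t i j * y t j :=
        Finset.single_le_sum (fun j _ => mul_nonneg (hWnonneg t i j) (ynn t j)) (mem_univ i)
      have h2 : β * β ^ t ≤ W t i i * y t i :=
        mul_le_mul (hWβ t i i (hWdiag t i)) (ih i) (by positivity) (hWnonneg t i i)
      calc β ^ (t+1) = β * β ^ t := by ring
        _ ≤ _ := le_trans h2 h1
  have ylow : ∀ t i, β ^ m ≤ y t i := by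
    intro t i
    rcases le_or_gt m t with h | h
    · have h1 : t = (t - m) + m := by omega
      rw [h1, ypm]
      have h2 : ∑ j, β ^ m * y (t - m) j ≤ ∑ j, APS.pm W (t-m) m i j * y (t-m) j :=
        Finset.sum_le_sum fun j _ =>
          mul_le_mul_of_nonneg_right (hWwin _ i j) (ynn _ j)
      rw [← Finset.mul_sum, ysum] at h2
      have h3 : β ^ m * 1 ≤ β ^ m * n :=
        mul_le_mul_of_nonneg_left (by exact_mod_cast hn) (by positivity)
      linarith
    · exact le_trans (pow_le_pow_of_le_one hβ.le hβ1 (by omega)) (ypowlow t i)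
  -- basic facts about S
  have hden : ∀ t i, ∑ k, W t i k * y t k = y (t+1) i := fun t i => (hy t i).symm
  have hdpos : ∀ t i, 0 < y (t+1) i := fun t i => ypos _ i
  have hSapp : ∀ t i j, Smat W y t i j = W t i j * y t j / y (t+1) i := by
    intro t i j; rw [Smat, hden]
  have Snn : ∀ t i j, 0 ≤ Smat W y t i j := by
    intro t i j; rw [hSapp]
    exact div_nonneg (mul_nonneg (hWnonneg t i j) (ynn t j)) (hdpos t i).le
  have Srow : ∀ t i, ∑ j, Smat W y t i j = 1 := by
    intro t i
    simp_rw [hSapp]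
    rw [← Finset.sum_div, hden, div_self (hdpos t i).ne']
  have Sle1 : ∀ t i j, Smat W y t i j ≤ 1 := by
    intro t i j
    rw [← Srow t i]
    exact Finset.single_le_sum (fun k _ => Snn t i k) (mem_univ j)
  set γ₀ := β * β ^ m / n with hγ₀
  have hγ₀pos : 0 < γ₀ := div_pos (mul_pos hβ (pow_pos hβ m)) hnR
  have Sbound : ∀ t i j, 0 < W t i j → γ₀ ≤ Smat W y t i j := by
    intro t i j hWk
    rw [hSapp, hγ₀]
    apply div_le_div₀ (mul_nonneg (hWnonneg t i j) (ynn t j)) ?_ (hdpos t i) (yle (t+1) i)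
    exact mul_le_mul (hWβ t i j hWk) (ylow t j) (by positivity) (hWnonneg t i j)
  have hγ₀1 : γ₀ ≤ 1 :=
    le_trans (Sbound 0 ⟨0, hn⟩ ⟨0, hn⟩ (hWdiag 0 _)) (Sle1 0 _ _)
  -- existence
  have hmid : ∀ t : ℕ, ∀ j : Fin n, y t j = ∑ i, y (t + 1) i * Smat W y t i j := by
    intro t j
    have h1 : ∀ i : Fin n, y (t+1) i * Smat W y t i j = W t i j * y t j := by
      intro i
      rw [hSapp, mul_comm, div_mul_cancel₀ _ (hdpos t i).ne']
    simp_rw [h1]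
    rw [← Finset.sum_mul, hWcol, one_mul]
  have hπsum : ∀ t, ∑ i, y t i / n = 1 := by
    intro t; rw [← Finset.sum_div, ysum, div_self hnR.ne']
  have hπrec : ∀ t : ℕ, ∀ j : Fin n,
      y t j / n = ∑ i, (y (t+1) i / n) * Smat W y t i j := by
    intro t j
    have h1 : (∑ i, y (t+1) i / n * Smat W y t i j)
        = (∑ i, y (t+1) i * Smat W y t i j) / n := by
      rw [Finset.sum_div]
      exact Finset.sum_congr rfl fun i _ => div_mul_eq_mul_div _ _ _
    rw [h1, ← hmid t j]
  have hexist : IsAbsProbSeq (Smat W y) (fun t i => y t i / n) :=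
    ⟨fun t => ⟨fun i => div_nonneg (ynn t i) hnR.le, hπsum t⟩, hπrec⟩
  refine ⟨hexist, hmid, ?_⟩
  -- uniqueness
  intro π hπ
  set c := γ₀ ^ m with hc
  have hcpos : 0 < c := pow_pos hγ₀pos m
  have hQlow : ∀ t i j, c ≤ APS.pm (Smat W y) t m i j := fun t i j =>
    APS.pm_window Snn Sbound hγ₀pos hγ₀1 hWdiag hn hL hconn t i j
  have hQrow : ∀ t i, ∑ j, APS.pm (Smat W y) t m i j = 1 := fun t i =>
    APS.pm_rowsum Srow t m i
  have hnc1 : (n:ℝ) * c ≤ 1 := by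
    have h1 : ∑ _j : Fin n, c ≤ ∑ j, APS.pm (Smat W y) 0 m ⟨0, hn⟩ j :=
      Finset.sum_le_sum fun j _ => hQlow 0 _ j
    rw [hQrow] at h1
    simpa [Finset.card_univ, mul_comm] using h1
  have hnc0 : 0 < (n:ℝ) * c := mul_pos hnR hcpos
  set d : ℕ → Fin n → ℝ := fun t i => π t i - y t i / n with hd
  have hdsum : ∀ t, ∑ i, d t i = 0 := by
    intro t
    simp only [hd, Finset.sum_sub_distrib, (hπ.1 t).2, hπsum t, sub_self]
  have hprop : ∀ t j, d t j = ∑ i, d (t + m) i * APS.pm (Smat W y) t m i j := by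
    intro t j
    have h1 := APS.aps_prop hπ.2 m t j
    have h2 := APS.aps_prop (π := fun t i => y t i / n) hπrec m t j
    simp only [hd, sub_mul, Finset.sum_sub_distrib]
    rw [← h1, ← h2]
  have key : ∀ r t, ∑ j, |d t j| ≤ 2 * (1 - n * c) ^ r := by
    intro r
    induction r with
    | zero =>
      intro t
      simp only [pow_zero, mul_one]
      have habs : ∀ j : Fin n, |d t j| ≤ |π t j| + |y t j / n| := by
        intro j
        rw [hd]
        calc |π t j - y t j / n| = |π t j + -(y t j / n)| := by rw [sub_eq_add_neg]
          _ ≤ |π t j| + |-(y t j / n)| := abs_add_le _ _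
          _ = |π t j| + |y t j / n| := by rw [abs_neg]
      calc ∑ j, |d t j| ≤ ∑ j, (|π t j| + |y t j / n|) :=
            Finset.sum_le_sum fun j _ => habs j
        _ = (∑ j, |π t j|) + ∑ j, |y t j / n| := Finset.sum_add_distrib
        _ = 1 + 1 := by
            rw [Finset.sum_congr rfl fun j _ => abs_of_nonneg ((hπ.1 t).1 j),
              Finset.sum_congr rfl fun j _ => abs_of_nonneg (div_nonneg (ynn t j) hnR.le),
              (hπ.1 t).2, hπsum t]
        _ = 2 := by norm_num
    | succ r ih =>
      intro t
      calc ∑ j, |d t j| = ∑ j, |∑ i, d (t+m) i * APS.pm (Smat W y) t m i j| := by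
            simp_rw [← hprop]
        _ ≤ (1 - n * c) * ∑ i, |d (t+m) i| :=
            APS.contraction (hQlow t) (hQrow t) (hdsum (t+m))
        _ ≤ (1 - n * c) * (2 * (1 - n * c) ^ r) :=
            mul_le_mul_of_nonneg_left (ih (t+m)) (by linarith)
        _ = 2 * (1 - n * c) ^ (r+1) := by ring
  funext t i
  have hd0 : d t i = 0 := by
    by_contra hne
    have hpos : 0 < |d t i| := abs_pos.mpr hne
    obtain ⟨r, hr⟩ := exists_pow_lt_of_lt_one (show 0 < |d t i| / 2 by linarith)
      (show 1 - (n:ℝ) * c < 1 by linarith)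
    have h1 : |d t i| ≤ ∑ j, |d t j| :=
      Finset.single_le_sum (f := fun j => |d t j|) (fun j _ => abs_nonneg _) (mem_univ i)
    have h2 := key r t
    nlinarith
  have : π t i - y t i / n = 0 := hd0
  linarith
end

section
/- Consider the subgradient-push iterates. Assume: (i) there exist η > 0 with y_i(t) ≥ η for all i and t; (ii) there exist μ ∈ (0,1) and a sequence of stochastic vectors {φ(t)} such that |[Φ_W(t+1,s)]_{ij} − φ_i(t)| ≤ 4 μ^{t−s} for all i,j and all t ≥ s ≥ 0; and (iii) ‖g_i(t)‖ ≤ G for all i and t, where G > 0. Then for all t ≥ 0 and all i ∈ {1,…,n}, ‖ z_i(t+1) − (1/n) Σ_{k=1}^n ( x_k(t) − α(t) g_k(t) ) ‖ ≤ (8/η) μ^t Σ_{k=1}^n ‖ x_k(0) − α(0) g_k(0) ‖ + (8nG/η) Σ_{s=0}^t μ^{t−s} α(s). -/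
/-!
Write `u(t) = x(t) - α(t) g(t)`. Then `u(t+1) = W(t) u(t) - α(t+1) g(t+1)`, so by variation of
constants `x(t+1) = W(t) u(t)` is `Φ(t+1,0) u(0)` plus the perturbations `-α(s) g(s)` pushed
through `Φ(t+1,s)`, while `W` being column stochastic makes `∑ₖ u_k(t)` the plain sum of the same
terms. Hence `x_i(t+1) - (y_i(t+1)/n) ∑ₖ u_k(t)` only involves the deviations
`Φ(t+1,s)_{ik} - y_i(t+1)/n`. Since `y(t+1) = Φ(t+1,s) y(s)` and `y(s)/n` is a stochastic vector,
`y_i(t+1)/n` is an average of row `i` of `Φ(t+1,s)`, whose entries are all within `4 μ^{t-s}` of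
`φ_i(t)`; so every deviation is at most `8 μ^{t-s}`. Dividing by `y_i(t+1) ≥ η` gives the bound.
-/

open Finset

namespace Matrix

variable {R E : Type*} [CommSemiring R] [AddCommMonoid E] [Module R E]

def smulVec {m ι : Type*} [Fintype ι] (M : Matrix m ι R) : (ι → E) →ₗ[R] m → E :=
  LinearMap.pi fun i => ∑ j, M i j • LinearMap.proj j

theorem smulVec_apply {m ι : Type*} [Fintype ι] (M : Matrix m ι R) (v : ι → E) (i : m) :
    M.smulVec v i = ∑ j, M i j • v j := by
  simp [smulVec]

theorem one_smulVec {ι : Type*} [Fintype ι] [DecidableEq ι] (v : ι → E) :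
    (1 : Matrix ι ι R).smulVec v = v := by
  ext i
  simp [smulVec_apply, one_apply, ite_smul]

theorem mul_smulVec {l m ι : Type*} [Fintype m] [Fintype ι] (A : Matrix l m R)
    (B : Matrix m ι R) (v : ι → E) : (A * B).smulVec v = A.smulVec (B.smulVec v) := by
  ext i
  simp only [smulVec_apply, mul_apply, sum_smul, smul_sum, smul_smul]
  exact sum_comm

theorem sum_smulVec_of_sum_col_eq_one {ι : Type*} [Fintype ι] {M : Matrix ι ι R}
    (hM : ∀ j, ∑ i, M i j = 1) (v : ι → E) : ∑ i, M.smulVec v i = ∑ j, v j := by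
  simp only [smulVec_apply]
  rw [sum_comm]
  simp only [← sum_smul, hM, one_smul]

end Matrix

section Phi

variable {n : ℕ} (M : ℕ → Matrix (Fin n) (Fin n) ℝ)

theorem Phi_self (s : ℕ) : Phi M s s = 1 := by
  simp [Phi, phiAux]

theorem Phi_succ {s t : ℕ} (h : s ≤ t) : Phi M (t + 1) s = M t * Phi M t s := by
  rw [Phi, Phi, Nat.sub_add_comm h, phiAux, Nat.add_sub_cancel' h]

variable {E : Type*}

section Module

variable [AddCommMonoid E] [Module ℝ E]

theorem smulVec_Phi_succ {s t : ℕ} (h : s ≤ t) (v : Fin n → E) :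
    (M t).smulVec ((Phi M t s).smulVec v) = (Phi M (t + 1) s).smulVec v := by
  rw [Phi_succ M h, Matrix.mul_smulVec]

theorem eq_smulVec_Phi_add_sum_Ico {a b : ℕ → Fin n → E}
    (ha : ∀ t, a (t + 1) = (M t).smulVec (a t) + b t) {s t : ℕ} (hst : s ≤ t) :
    a t = (Phi M t s).smulVec (a s) + ∑ r ∈ Ico s t, (Phi M t (r + 1)).smulVec (b r) := by
  induction t, hst using Nat.le_induction with
  | base => simp [Phi_self, Matrix.one_smulVec]
  | succ t hst ih =>
    rw [ha, ih, map_add, map_sum, smulVec_Phi_succ M hst, sum_Ico_succ_top hst, Phi_self,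
      Matrix.one_smulVec, add_assoc]
    congr 2
    exact sum_congr rfl fun r hr => smulVec_Phi_succ M (mem_Ico.1 hr).2 _

theorem sum_eq_sum_add_sum_range_of_sum_col_eq_one (hM : ∀ t j, ∑ i, M t i j = 1)
    {a b : ℕ → Fin n → E} (ha : ∀ t, a (t + 1) = (M t).smulVec (a t) + b t) (t : ℕ) :
    ∑ i, a t i = ∑ i, a 0 i + ∑ s ∈ range t, ∑ i, b s i := by
  induction t with
  | zero => simp
  | succ t ih =>
    simp only [ha, Pi.add_apply, sum_add_distrib, Matrix.sum_smulVec_of_sum_col_eq_one (hM t),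
      ih, sum_range_succ, add_assoc]

end Module

theorem smulVec_sub_smul_sum_eq [AddCommGroup E] [Module ℝ E] (hM : ∀ t j, ∑ i, M t i j = 1)
    {a b : ℕ → Fin n → E} (ha : ∀ t, a (t + 1) = (M t).smulVec (a t) + b t) (c : ℝ) (t : ℕ)
    (i : Fin n) :
    (M t).smulVec (a t) i - c • ∑ k, a t k =
      ∑ k, (Phi M (t + 1) 0 i k - c) • a 0 k +
        ∑ s ∈ range t, ∑ k, (Phi M (t + 1) (s + 1) i k - c) • b s k := by
  have hMa : (M t).smulVec (a t) = (Phi M (t + 1) 0).smulVec (a 0) +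
      ∑ s ∈ range t, (Phi M (t + 1) (s + 1)).smulVec (b s) := by
    rw [eq_smulVec_Phi_add_sum_Ico M ha (Nat.zero_le t), map_add, map_sum,
      smulVec_Phi_succ M (Nat.zero_le t), range_eq_Ico]
    exact congrArg _ (sum_congr rfl fun s hs => smulVec_Phi_succ M (mem_Ico.1 hs).2 _)
  rw [hMa, sum_eq_sum_add_sum_range_of_sum_col_eq_one M hM ha t]
  simp only [Pi.add_apply, Finset.sum_apply, Matrix.smulVec_apply, sub_smul, sum_sub_distrib,
    smul_add, smul_sum]
  abel

end Phi

theorem norm_sum_smul_le_of_abs_le {ι E : Type*} [Fintype ι] [SeminormedAddCommGroup E]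
    [NormedSpace ℝ E] {c : ι → ℝ} {ε : ℝ} (hc : ∀ k, |c k| ≤ ε) (v : ι → E) :
    ‖∑ k, c k • v k‖ ≤ ε * ∑ k, ‖v k‖ := by
  rw [mul_sum]
  refine (norm_sum_le _ _).trans (sum_le_sum fun k _ => ?_)
  rw [norm_smul, Real.norm_eq_abs]
  exact mul_le_mul_of_nonneg_right (hc k) (norm_nonneg _)

theorem abs_sub_sum_mul_le {ι : Type*} [Fintype ι] {p a : ι → ℝ} (hp : ∀ m, 0 ≤ p m)
    (hp1 : ∑ m, p m = 1) {k : ι} {ε : ℝ} (ha : ∀ m, |a k - a m| ≤ ε) :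
    |a k - ∑ m, p m * a m| ≤ ε := by
  have hdiff : a k - ∑ m, p m * a m = ∑ m, p m * (a k - a m) := by
    simp only [mul_sub, sum_sub_distrib, ← sum_mul, hp1, one_mul]
  calc |a k - ∑ m, p m * a m| ≤ ∑ m, |p m * (a k - a m)| := hdiff ▸ abs_sum_le_sum_abs _ _
    _ ≤ ∑ m, p m * ε := sum_le_sum fun m _ => by
      rw [abs_mul, abs_of_nonneg (hp m)]
      exact mul_le_mul_of_nonneg_left (ha m) (hp m)
    _ = ε := by rw [← sum_mul, hp1, one_mul]

theorem abs_Phi_sub_div_le {n : ℕ} {W : ℕ → Matrix (Fin n) (Fin n) ℝ}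
    (hWcol : ∀ t j, ∑ i, W t i j = 1) {y : ℕ → Fin n → ℝ} (hy0 : ∀ i, y 0 i = 1)
    (hy : ∀ t, y (t + 1) = (W t).smulVec (y t)) (hy_nonneg : ∀ t i, 0 ≤ y t i)
    {s t : ℕ} (hst : s ≤ t) (i k : Fin n) {r ε : ℝ}
    (hΦ : ∀ j, |Phi W (t + 1) s i j - r| ≤ ε) :
    |Phi W (t + 1) s i k - y (t + 1) i / n| ≤ 2 * ε := by
  have hy' : ∀ t, y (t + 1) = (W t).smulVec (y t) + 0 := fun t => by rw [hy, add_zero]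
  have hsum : ∑ m, y s m = n := by
    simpa [hy0] using sum_eq_sum_add_sum_range_of_sum_col_eq_one W hWcol hy' s
  have hyt : y (t + 1) i / n = ∑ m, y s m / n * Phi W (t + 1) s i m := by
    rw [eq_smulVec_Phi_add_sum_Ico W hy' (Nat.le_succ_of_le hst)]
    simp [Matrix.smulVec_apply, sum_div, div_mul_eq_mul_div, mul_comm]
  rw [hyt]
  refine abs_sub_sum_mul_le (fun m => div_nonneg (hy_nonneg s m) n.cast_nonneg)
    (by rw [← sum_div, hsum, div_self (Nat.cast_ne_zero.2 i.pos.ne')]) fun m => ?_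
  calc |Phi W (t + 1) s i k - Phi W (t + 1) s i m|
      ≤ |Phi W (t + 1) s i k - r| + |r - Phi W (t + 1) s i m| := abs_sub_le _ _ _
    _ ≤ ε + ε := add_le_add (hΦ k) (abs_sub_comm r _ ▸ hΦ m)
    _ = 2 * ε := (two_mul ε).symm

theorem norm_smulVec_sub_smul_sum_le {n : ℕ} {E : Type*} [SeminormedAddCommGroup E]
    [NormedSpace ℝ E] {M : ℕ → Matrix (Fin n) (Fin n) ℝ} (hM : ∀ t j, ∑ i, M t i j = 1)
    {a b : ℕ → Fin n → E} (ha : ∀ t, a (t + 1) = (M t).smulVec (a t) + b t) {c : ℝ} {t : ℕ}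
    {i : Fin n} {ε : ℕ → ℝ} (hdev : ∀ s ≤ t, ∀ k, |Phi M (t + 1) s i k - c| ≤ ε s) :
    ‖(M t).smulVec (a t) i - c • ∑ k, a t k‖ ≤
      ε 0 * ∑ k, ‖a 0 k‖ + ∑ s ∈ range t, ε (s + 1) * ∑ k, ‖b s k‖ := by
  rw [smulVec_sub_smul_sum_eq M hM ha]
  refine (norm_add_le _ _).trans (add_le_add ?_ ((norm_sum_le _ _).trans ?_))
  · exact norm_sum_smul_le_of_abs_le (hdev 0 t.zero_le) _
  · exact sum_le_sum fun s hs =>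
      norm_sum_smul_le_of_abs_le (hdev (s + 1) (mem_range.1 hs)) _

theorem sum_mul_sum_norm_le_of_norm_le {ι E : Type*} [Fintype ι] [SeminormedAddCommGroup E]
    {α w : ℕ → ℝ} (hα : ∀ s, 0 ≤ α s) (hw : ∀ s, 0 ≤ w s) {G : ℝ} (hG : 0 ≤ G)
    {b : ℕ → ι → E} (hb : ∀ s k, ‖b s k‖ ≤ α (s + 1) * G) (t : ℕ) :
    ∑ s ∈ range t, w (s + 1) * ∑ k, ‖b s k‖ ≤
      Fintype.card ι * G * ∑ s ∈ range (t + 1), w s * α s := by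
  rw [sum_range_succ', mul_add, mul_sum]
  refine le_add_of_le_of_nonneg (sum_le_sum fun s _ => ?_)
    (mul_nonneg (by positivity) (mul_nonneg (hw 0) (hα 0)))
  calc w (s + 1) * ∑ k, ‖b s k‖ ≤ w (s + 1) * ∑ _k : ι, α (s + 1) * G :=
        mul_le_mul_of_nonneg_left (sum_le_sum fun k _ => hb s k) (hw _)
    _ = _ := by rw [sum_const, card_univ, nsmul_eq_mul]; ring

theorem norm_inv_smul_sub_smul_le {E : Type*} [SeminormedAddCommGroup E] [NormedSpace ℝ E]
    {η y c R : ℝ} (hη : 0 < η) (hy : η ≤ y) {v w : E} (h : ‖v - (y * c) • w‖ ≤ R) :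
    ‖y⁻¹ • v - c • w‖ ≤ R / η := by
  have hy0 : 0 < y := hη.trans_le hy
  rw [← inv_mul_cancel_left₀ hy0.ne' c, ← smul_smul, ← smul_sub, norm_smul, norm_inv,
    Real.norm_of_nonneg hy0.le, inv_mul_eq_div]
  exact div_le_div₀ ((norm_nonneg _).trans h) h hη hy

theorem subgradient_push_consensus_bound_general (n d : ℕ)
    (W : ℕ → Matrix (Fin n) (Fin n) ℝ)
    (hWcol : ∀ t j, ∑ i, W t i j = 1)
    (α : ℕ → ℝ) (hα : ∀ t, 0 < α t)
    (g : ℕ → Fin n → EuclideanSpace ℝ (Fin d))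
    (x : ℕ → Fin n → EuclideanSpace ℝ (Fin d))
    (hx : ∀ t i, x (t + 1) i = ∑ j, W t i j • (x t j - α t • g t j))
    (y : ℕ → Fin n → ℝ)
    (hy0 : ∀ i, y 0 i = 1)
    (hy : ∀ t i, y (t + 1) i = ∑ j, W t i j * y t j)
    -- (i) uniform lower bound on y
    (η : ℝ) (hη : 0 < η) (hylb : ∀ t i, η ≤ y t i)
    -- (ii) exponential ergodicity of the backward products of W
    (μ : ℝ) (hμ0 : 0 < μ)
    (φ : ℕ → Fin n → ℝ)
    (hergodic : ∀ t s : ℕ, s ≤ t → ∀ i j : Fin n,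
      |Phi W (t + 1) s i j - φ t i| ≤ 4 * μ ^ (t - s))
    -- (iii) uniformly bounded subgradients
    (G : ℝ) (hG : 0 < G) (hgbd : ∀ t i, ‖g t i‖ ≤ G) :
    ∀ t : ℕ, ∀ i : Fin n,
      ‖(y (t + 1) i)⁻¹ • x (t + 1) i - (n : ℝ)⁻¹ • ∑ k, (x t k - α t • g t k)‖
        ≤ (8 / η) * μ ^ t * ∑ k, ‖x 0 k - α 0 • g 0 k‖
          + (8 * n * G / η) * ∑ s ∈ Finset.range (t + 1), μ ^ (t - s) * α s := by
  intro t i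
  set u : ℕ → Fin n → EuclideanSpace ℝ (Fin d) := fun s k => x s k - α s • g s k
  have hxu : ∀ s, x (s + 1) = (W s).smulVec (u s) := fun s => funext fun k => by
    simp [hx, Matrix.smulVec_apply, u]
  have hu : ∀ s, u (s + 1) = (W s).smulVec (u s) + -(α (s + 1) • g (s + 1)) := fun s => by
    rw [← hxu]
    exact funext fun k => sub_eq_add_neg _ _
  have hyW : ∀ s, y (s + 1) = (W s).smulVec (y s) := fun s => funext fun k => by
    simp [hy, Matrix.smulVec_apply]
  have hdev : ∀ s ≤ t, ∀ k, |Phi W (t + 1) s i k - y (t + 1) i / n| ≤ 8 * μ ^ (t - s) :=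
    fun s hs k => by
      have := abs_Phi_sub_div_le hWcol hy0 hyW (fun s k => hη.le.trans (hylb s k)) hs i k
        (hergodic t s hs i)
      linarith
  have hb : ∀ s k, ‖(-(α (s + 1) • g (s + 1))) k‖ ≤ α (s + 1) * G := fun s k => by
    simpa [norm_smul, abs_of_pos (hα _)] using
      mul_le_mul_of_nonneg_left (hgbd (s + 1) k) (hα (s + 1)).le
  have hmain : ‖x (t + 1) i - (y (t + 1) i * (n : ℝ)⁻¹) • ∑ k, u t k‖ ≤
      8 * μ ^ t * ∑ k, ‖u 0 k‖ + n * G * ∑ s ∈ range (t + 1), 8 * μ ^ (t - s) * α s := by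
    have h := norm_smulVec_sub_smul_sum_le hWcol hu hdev
    rw [← hxu, Nat.sub_zero, div_eq_mul_inv] at h
    refine h.trans (add_le_add le_rfl ?_)
    simpa using sum_mul_sum_norm_le_of_norm_le (w := fun s => 8 * μ ^ (t - s))
      (fun s => (hα s).le) (fun s => by positivity) hG.le hb t
  refine (norm_inv_smul_sub_smul_le hη (hylb _ _) hmain).trans_eq ?_
  simp only [mul_assoc, ← mul_sum]
  ring

/-- Consensus-error bound for the subgradient-push iterates. -/
theorem subgradient_push_consensus_bound (n d : ℕ) (hn : 1 ≤ n) (hd : 1 ≤ d)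
    (W : ℕ → Matrix (Fin n) (Fin n) ℝ)
    (hWnonneg : ∀ t i j, 0 ≤ W t i j)
    (hWcol : ∀ t j, ∑ i, W t i j = 1)
    (hWdiag : ∀ t i, 0 < W t i i)
    (α : ℕ → ℝ) (hα : ∀ t, 0 < α t)
    (g : ℕ → Fin n → EuclideanSpace ℝ (Fin d))
    (x : ℕ → Fin n → EuclideanSpace ℝ (Fin d))
    (hx : ∀ t i, x (t + 1) i = ∑ j, W t i j • (x t j - α t • g t j))
    (y : ℕ → Fin n → ℝ)
    (hy0 : ∀ i, y 0 i = 1)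
    (hy : ∀ t i, y (t + 1) i = ∑ j, W t i j * y t j)
    -- (i) uniform lower bound on y
    (η : ℝ) (hη : 0 < η) (hylb : ∀ t i, η ≤ y t i)
    -- (ii) exponential ergodicity of the backward products of W
    (μ : ℝ) (hμ0 : 0 < μ) (hμ1 : μ < 1)
    (φ : ℕ → Fin n → ℝ)
    (hφ : ∀ t : ℕ, (∀ i, 0 ≤ φ t i) ∧ ∑ i, φ t i = 1)
    (hergodic : ∀ t s : ℕ, s ≤ t → ∀ i j : Fin n,
      |Phi W (t + 1) s i j - φ t i| ≤ 4 * μ ^ (t - s))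
    -- (iii) uniformly bounded subgradients
    (G : ℝ) (hG : 0 < G) (hgbd : ∀ t i, ‖g t i‖ ≤ G) :
    ∀ t : ℕ, ∀ i : Fin n,
      ‖(y (t + 1) i)⁻¹ • x (t + 1) i - (n : ℝ)⁻¹ • ∑ k, (x t k - α t • g t k)‖
        ≤ (8 / η) * μ ^ t * ∑ k, ‖x 0 k - α 0 • g 0 k‖
          + (8 * n * G / η) * ∑ s ∈ Finset.range (t + 1), μ ^ (t - s) * α s :=
  subgradient_push_consensus_bound_general n d W hWcol α hα g x hx y hy0 hy η hη hylb μ hμ0 φ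
    hergodic G hG hgbd
end

section
/- Let μ ∈ (0,1) and let α : ℕ → ℝ be a positive, non-increasing sequence. Then for every integer t ≥ 0, Σ_{s=0}^{t} μ^{t−s} α(s) ≤ (1/(1−μ)) · ( α(0) μ^{t/2} + α(⌈t/2⌉) ), where μ^{t/2} denotes the real power and ⌈·⌉ is the ceiling function. -/
open Finset

private lemma geom_aux {μ : ℝ} (hμ0 : 0 < μ) (hμ1 : μ < 1) (n : ℕ) :
    ∑ i ∈ Finset.range n, μ ^ i ≤ (1 - μ)⁻¹ := by
  have h1 : μ ≠ 1 := ne_of_lt hμ1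
  rw [geom_sum_eq h1]
  rw [div_le_iff_of_neg (by linarith : μ - 1 < 0)]
  have hp : 0 < μ ^ n := pow_pos hμ0 n
  have he : (1 - μ)⁻¹ * (μ - 1) = -1 := by
    rw [inv_mul_eq_div]
    rw [div_eq_iff (by linarith : (1:ℝ) - μ ≠ 0)]
    ring
  linarith

/-- For `μ ∈ (0,1)` and a positive non-increasing sequence `α`,
`Σ_{s=0}^t μ^{t−s} α(s) ≤ (1/(1−μ)) (α(0) μ^{t/2} + α(⌈t/2⌉))`,
where `μ^{t/2}` is the real power. -/
theorem geometric_stepsize_sum_bound (μ : ℝ) (hμ0 : 0 < μ) (hμ1 : μ < 1)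
    (α : ℕ → ℝ) (hαpos : ∀ s, 0 < α s) (hαmono : ∀ s, α (s + 1) ≤ α s) :
    ∀ t : ℕ, ∑ s ∈ Finset.range (t + 1), μ ^ (t - s) * α s
      ≤ (1 - μ)⁻¹ * (α 0 * μ ^ ((t : ℝ) / 2) + α ⌈(t : ℝ) / 2⌉₊) := by
  intro t
  set m := ⌈(t : ℝ) / 2⌉₊ with hm
  have hαanti : Antitone α := antitone_nat_of_succ_le hαmono
  have hinv : (0:ℝ) < (1 - μ)⁻¹ := by
    have : (0:ℝ) < 1 - μ := by linarith
    positivity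
  have hmt : m ≤ t + 1 := by
    rw [hm]
    apply Nat.ceil_le.mpr
    push_cast
    have : (0:ℝ) ≤ t := Nat.cast_nonneg t
    linarith
  -- split the sum
  have hsplit : ∑ s ∈ Finset.range (t + 1), μ ^ (t - s) * α s
      = (∑ s ∈ Finset.range m, μ ^ (t - s) * α s)
        + ∑ s ∈ Finset.Ico m (t + 1), μ ^ (t - s) * α s := by
    simp only [Finset.range_eq_Ico]
    exact (Finset.sum_Ico_consecutive _ (Nat.zero_le m) hmt).symm
  -- first part
  have hS1 : ∑ s ∈ Finset.range m, μ ^ (t - s) * α s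
      ≤ (1 - μ)⁻¹ * (α 0 * μ ^ ((t : ℝ) / 2)) := by
    have step1 : ∑ s ∈ Finset.range m, μ ^ (t - s) * α s
        ≤ μ ^ (t + 1 - m) * α 0 * ∑ j ∈ Finset.range m, μ ^ j := by
      rw [Finset.mul_sum, ← Finset.sum_range_reflect (fun j => μ ^ (t + 1 - m) * α 0 * μ ^ j) m]
      apply Finset.sum_le_sum
      intro s hs
      have hsm : s < m := Finset.mem_range.mp hs
      have hexp : t - s = (t + 1 - m) + (m - 1 - s) := by omega
      rw [hexp, pow_add]
      have h1 : α s ≤ α 0 := hαanti (Nat.zero_le s)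
      have h2 : (0:ℝ) ≤ μ ^ (t + 1 - m) := le_of_lt (pow_pos hμ0 _)
      have h3 : (0:ℝ) ≤ μ ^ (m - 1 - s) := le_of_lt (pow_pos hμ0 _)
      calc μ ^ (t + 1 - m) * μ ^ (m - 1 - s) * α s
          ≤ μ ^ (t + 1 - m) * μ ^ (m - 1 - s) * α 0 := by
            apply mul_le_mul_of_nonneg_left h1 (by positivity)
        _ = μ ^ (t + 1 - m) * α 0 * μ ^ (m - 1 - s) := by ring
    have step2 : μ ^ (t + 1 - m) ≤ μ ^ ((t : ℝ) / 2) := by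
      rw [← Real.rpow_natCast μ (t + 1 - m)]
      apply Real.rpow_le_rpow_of_exponent_ge hμ0 (le_of_lt hμ1)
      have hceil : (m : ℝ) < (t : ℝ) / 2 + 1 := Nat.ceil_lt_add_one (by positivity)
      have : ((t + 1 - m : ℕ) : ℝ) = (t : ℝ) + 1 - m := by
        push_cast [Nat.cast_sub hmt]; ring
      rw [this]; linarith
    have hgeom := geom_aux hμ0 hμ1 m
    have hα0 : 0 < α 0 := hαpos 0
    calc ∑ s ∈ Finset.range m, μ ^ (t - s) * α s
        ≤ μ ^ (t + 1 - m) * α 0 * ∑ j ∈ Finset.range m, μ ^ j := step1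
      _ ≤ μ ^ (t + 1 - m) * α 0 * (1 - μ)⁻¹ := by
          apply mul_le_mul_of_nonneg_left hgeom (by positivity)
      _ ≤ μ ^ ((t : ℝ) / 2) * α 0 * (1 - μ)⁻¹ := by
          apply mul_le_mul_of_nonneg_right _ (le_of_lt hinv)
          exact mul_le_mul_of_nonneg_right step2 (le_of_lt hα0)
      _ = (1 - μ)⁻¹ * (α 0 * μ ^ ((t : ℝ) / 2)) := by ring
  -- second part
  have hS2 : ∑ s ∈ Finset.Ico m (t + 1), μ ^ (t - s) * α s ≤ (1 - μ)⁻¹ * α m := by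
    have step1 : ∑ s ∈ Finset.Ico m (t + 1), μ ^ (t - s) * α s
        ≤ α m * ∑ j ∈ Finset.range (t + 1 - m), μ ^ j := by
      rw [Finset.mul_sum, ← Finset.sum_range_reflect (fun j => α m * μ ^ j) (t + 1 - m),
        Finset.sum_Ico_eq_sum_range]
      apply Finset.sum_le_sum
      intro i hi
      have hi' : i < t + 1 - m := Finset.mem_range.mp hi
      have hexp : t - (m + i) = t + 1 - m - 1 - i := by omega
      rw [hexp]
      have h1 : α (m + i) ≤ α m := hαanti (Nat.le_add_right m i)
      have h2 : (0:ℝ) < μ ^ (t + 1 - m - 1 - i) := pow_pos hμ0 _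
      calc μ ^ (t + 1 - m - 1 - i) * α (m + i)
          ≤ μ ^ (t + 1 - m - 1 - i) * α m := by
            apply mul_le_mul_of_nonneg_left h1 (le_of_lt h2)
        _ = α m * μ ^ (t + 1 - m - 1 - i) := by ring
    have hgeom := geom_aux hμ0 hμ1 (t + 1 - m)
    have hαm : 0 < α m := hαpos m
    calc ∑ s ∈ Finset.Ico m (t + 1), μ ^ (t - s) * α s
        ≤ α m * ∑ j ∈ Finset.range (t + 1 - m), μ ^ j := step1
      _ ≤ α m * (1 - μ)⁻¹ := mul_le_mul_of_nonneg_left hgeom (le_of_lt hαm)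
      _ = (1 - μ)⁻¹ * α m := by ring
  rw [hsplit, mul_add]
  exact add_le_add hS1 hS2
end

section
/- Consider the push-sum algorithm initialized for an arbitrary convex combination: each agent i knows a positive number c_i with Σ_{i=1}^n c_i = 1, and sets x_i(0) = c_i x_i^{int} for an arbitrary x_i^{int} ∈ ℝ^d and y_i(0) = c_i. If the sequence of directed graphs {G(t)} associated with the column stochastic matrices {W(t)} is uniformly strongly connected, then each ratio x_i(t)/y_i(t) converges to Σ_{k=1}^n c_k x_k^{int} exponentially fast as t → ∞: there exist constants C > 0 and μ ∈ [0,1) such that ‖ x_i(t)/y_i(t) − Σ_{k=1}^n c_k x_k^{int} ‖ ≤ C μ^t for all i and t. -/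
open Finset

namespace PushSumAux

variable {n : ℕ} (W : ℕ → Matrix (Fin n) (Fin n) ℝ)

/-- Product `W (t+s-1) * ... * W t`. -/
def Q (t : ℕ) : ℕ → Matrix (Fin n) (Fin n) ℝ
  | 0 => 1
  | (s+1) => W (t+s) * Q t s

theorem Q_succ_apply (t s : ℕ) (i j : Fin n) :
    Q W t (s+1) i j = ∑ m, W (t+s) i m * Q W t s m j := by
  simp [Q, Matrix.mul_apply]

theorem Q_nonneg (hW : ∀ t i j, 0 ≤ W t i j) (t s : ℕ) (i j : Fin n) :
    0 ≤ Q W t s i j := by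
  induction s generalizing i j with
  | zero => simp only [Q, Matrix.one_apply]; split <;> norm_num
  | succ s ih =>
    rw [Q_succ_apply]
    exact Finset.sum_nonneg fun m _ => mul_nonneg (hW _ _ _) (ih m j)

theorem Q_col (hWcol : ∀ t j, ∑ i, W t i j = 1) (t s : ℕ) (j : Fin n) :
    ∑ i, Q W t s i j = 1 := by
  induction s with
  | zero => simp [Q, Matrix.one_apply]
  | succ s ih =>
    simp only [Q_succ_apply]
    rw [Finset.sum_comm]
    simp only [← Finset.sum_mul, hWcol, one_mul, ih]

theorem Q_pos_le (hW : ∀ t i j, 0 ≤ W t i j) (β : ℝ) (hβ0 : 0 ≤ β)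
    (hWβ : ∀ t i j, 0 < W t i j → β ≤ W t i j) (t s : ℕ) (i j : Fin n)
    (h : 0 < Q W t s i j) : β ^ s ≤ Q W t s i j := by
  induction s generalizing i j with
  | zero =>
    simp only [Q, Matrix.one_apply] at h ⊢
    split at h
    · simp_all
    · exact absurd h (lt_irrefl 0)
  | succ s ih =>
    rw [Q_succ_apply] at h ⊢
    obtain ⟨m, -, hm⟩ := Finset.exists_lt_of_sum_lt (f := fun _ => (0:ℝ)) (by simpa using h)
    have hW' : 0 < W (t+s) i m := by
      rcases (hW (t+s) i m).lt_or_eq with h' | h'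
      · exact h'
      · rw [← h', zero_mul] at hm; exact absurd hm (lt_irrefl 0)
    have hQ' : 0 < Q W t s m j := by
      rcases (Q_nonneg W hW t s m j).lt_or_eq with h' | h'
      · exact h'
      · rw [← h', mul_zero] at hm; exact absurd hm (lt_irrefl 0)
    calc β ^ (s+1) = β * β ^ s := by ring
    _ ≤ W (t+s) i m * Q W t s m j :=
        mul_le_mul (hWβ _ _ _ hW') (ih m j hQ') (by positivity) (hW _ _ _)
    _ ≤ ∑ m, W (t+s) i m * Q W t s m j :=
        Finset.single_le_sum (f := fun m' => W (t+s) i m' * Q W t s m' j)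
          (fun m' _ => mul_nonneg (hW _ _ _) (Q_nonneg W hW t s m' j))
          (Finset.mem_univ m)

theorem Q_mono (hW : ∀ t i j, 0 ≤ W t i j) (hWdiag : ∀ t i, 0 < W t i i)
    (t s : ℕ) (i j : Fin n) (h : 0 < Q W t s i j) : 0 < Q W t (s+1) i j := by
  rw [Q_succ_apply]
  have h1 : 0 < W (t+s) i i * Q W t s i j := mul_pos (hWdiag _ _) h
  refine lt_of_lt_of_le h1 ?_
  exact Finset.single_le_sum (f := fun m => W (t+s) i m * Q W t s m j)
    (fun m _ => mul_nonneg (hW _ _ _) (Q_nonneg W hW t s m j)) (Finset.mem_univ i)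

theorem Q_step (hW : ∀ t i j, 0 ≤ W t i j) (t s : ℕ) (a b j : Fin n)
    (hWba : 0 < W (t+s) b a) (h : 0 < Q W t s a j) : 0 < Q W t (s+1) b j := by
  rw [Q_succ_apply]
  have h1 : 0 < W (t+s) b a * Q W t s a j := mul_pos hWba h
  refine lt_of_lt_of_le h1 ?_
  exact Finset.single_le_sum (f := fun m => W (t+s) b m * Q W t s m j)
    (fun m _ => mul_nonneg (hW _ _ _) (Q_nonneg W hW t s m j)) (Finset.mem_univ a)

theorem Q_full (hn : 1 ≤ n) (hW : ∀ t i j, 0 ≤ W t i j) (hWdiag : ∀ t i, 0 < W t i i)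
    (L : ℕ) (hL : 0 < L)
    (hconn : ∀ t : ℕ, ∀ i j : Fin n,
      Relation.TransGen (fun a b => ∃ k ∈ Finset.Ico t (t + L), 0 < W k b a) i j)
    (t : ℕ) (i j : Fin n) : 0 < Q W t (n*L) i j := by
  set S : ℕ → Finset (Fin n) := fun s => Finset.univ.filter (fun i => 0 < Q W t s i j) with hS
  have hmemS : ∀ s i, i ∈ S s ↔ 0 < Q W t s i j := by
    intro s i; simp [hS]
  have hj0 : j ∈ S 0 := by
    rw [hmemS]; simp [Q, Matrix.one_apply]
  have hmono : ∀ s, S s ⊆ S (s+1) := by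
    intro s a ha
    rw [hmemS] at ha ⊢
    exact Q_mono W hW hWdiag t s a j ha
  have hmono' : ∀ s r, s ≤ r → S s ⊆ S r := by
    intro s r hsr
    induction r, hsr using Nat.le_induction with
    | base => exact Finset.Subset.rfl
    | succ r hr ih => exact ih.trans (hmono r)
  have hgrow : ∀ s, S s ≠ Finset.univ → S s ⊂ S (s+L) := by
    intro s hne
    refine Finset.ssubset_iff_of_subset (hmono' s (s+L) (Nat.le_add_right _ _)) |>.mpr ?_
    by_contra hcon
    push_neg at hcon
    have heq : ∀ r, r ≤ L → S (s+r) = S s := by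
      intro r hr
      refine Finset.Subset.antisymm ?_ (hmono' s (s+r) (Nat.le_add_right _ _))
      intro a ha
      exact hcon a (hmono' (s+r) (s+L) (by omega) ha)
    obtain ⟨b, hb⟩ : ∃ b, b ∉ S s := by
      by_contra h
      push_neg at h
      exact hne (Finset.eq_univ_of_forall h)
    have hreach : ∀ b', Relation.TransGen
        (fun a b => ∃ k ∈ Finset.Ico (t+s) (t+s + L), 0 < W k b a) j b' → b' ∈ S s := by
      intro b' htg
      induction htg with
      | @single b' hrel =>
        obtain ⟨k, hk, hWk⟩ := hrel
        simp only [Finset.mem_Ico] at hk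
        have hkts : k = t + (s + (k - t - s)) := by omega
        have hj' : j ∈ S (s + (k - t - s)) := by
          rw [heq _ (by omega)]
          exact hmono' 0 s (Nat.zero_le _) hj0
        rw [hmemS] at hj' ⊢
        have hWk' : 0 < W (t + (s + (k - t - s))) b' j := by rw [← hkts]; exact hWk
        have := Q_step W hW t (s + (k - t - s)) j b' j hWk' hj'
        have hb' : _ ∈ S (s + (k - t - s) + 1) := (hmemS _ _).mpr this
        rw [show s + (k-t-s) + 1 = s + (k-t-s+1) by omega, heq _ (by omega)] at hb'
        rw [← hmemS]; exact hb'
      | @tail m b' hrel h2 ih =>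
        obtain ⟨k, hk, hWk⟩ := h2
        simp only [Finset.mem_Ico] at hk
        have hkts : k = t + (s + (k - t - s)) := by omega
        have ha' : m ∈ S (s + (k - t - s)) := by
          rw [heq _ (by omega)]; exact ih
        rw [hmemS] at ha'
        have hWk' : 0 < W (t + (s + (k - t - s))) b' m := by rw [← hkts]; exact hWk
        have := Q_step W hW t (s + (k - t - s)) m b' j hWk' ha'
        have hb' : _ ∈ S (s + (k - t - s) + 1) := (hmemS _ _).mpr this
        rw [show s + (k-t-s) + 1 = s + (k-t-s+1) by omega, heq _ (by omega)] at hb'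
        exact hb'
    exact hb (hreach b (hconn (t+s) j b))
  have hcard : ∀ m, S (m*L) = Finset.univ ∨ m + 1 ≤ (S (m*L)).card := by
    intro m
    induction m with
    | zero =>
      right
      simpa using Finset.card_pos.mpr ⟨j, by simpa using hj0⟩
    | succ m ih =>
      rcases ih with h | h
      · left
        apply Finset.eq_univ_of_forall
        intro a
        exact hmono' (m*L) ((m+1)*L) (by nlinarith) (h ▸ Finset.mem_univ a)
      · by_cases hu : S (m*L) = Finset.univ
        · left
          apply Finset.eq_univ_of_forall
          intro a
          exact hmono' (m*L) ((m+1)*L) (by nlinarith) (hu ▸ Finset.mem_univ a)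
        · right
          have := Finset.card_lt_card ((show m*L + L = (m+1)*L by ring) ▸ hgrow (m*L) hu)
          omega
  have hfull : S (n*L) = Finset.univ := by
    rcases hcard n with h | h
    · exact h
    · have : (S (n*L)).card ≤ n := le_trans (Finset.card_le_card (Finset.subset_univ _)) (by simp)
      omega
  have : i ∈ S (n*L) := hfull ▸ Finset.mem_univ i
  rwa [hmemS] at this

theorem Q_action {E : Type*} [AddCommMonoid E] [Module ℝ E]
    (v : ℕ → Fin n → E)
    (hv : ∀ t i, v (t+1) i = ∑ j, W t i j • v t j)
    (t0 s : ℕ) (i : Fin n) : v (t0 + s) i = ∑ j, Q W t0 s i j • v t0 j := by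
  induction s generalizing i with
  | zero =>
    simp [Q, Matrix.one_apply, ite_smul]
  | succ s ih =>
    rw [show t0 + (s+1) = (t0 + s) + 1 by ring, hv]
    simp only [ih]
    simp only [Finset.smul_sum, Q_succ_apply, Finset.sum_smul, mul_smul]
    exact Finset.sum_comm

end PushSumAux

open PushSumAux in
set_option maxHeartbeats 2000000 in
/-- Push-sum initialized for an arbitrary convex combination: with `x_i(0) = c_i x_i^int`
and `y_i(0) = c_i`, where `c_i > 0` and `Σ_i c_i = 1`, each ratio `x_i(t)/y_i(t)`
converges to `Σ_k c_k x_k^int` exponentially fast. -/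
theorem pushsum_convex_combination (n d : ℕ) (hn : 1 ≤ n) (hd : 1 ≤ d)
    (W : ℕ → Matrix (Fin n) (Fin n) ℝ)
    (hWnonneg : ∀ t i j, 0 ≤ W t i j)
    (hWcol : ∀ t j, ∑ i, W t i j = 1)
    (hWdiag : ∀ t i, 0 < W t i i)
    (β : ℝ) (hβ : 0 < β)
    (hWβ : ∀ t i j, 0 < W t i j → β ≤ W t i j)
    (L : ℕ) (hL : 0 < L)
    (hconn : ∀ t : ℕ, ∀ i j : Fin n,
      Relation.TransGen (fun a b => ∃ k ∈ Finset.Ico t (t + L), 0 < W k b a) i j)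
    (c : Fin n → ℝ) (hc : ∀ i, 0 < c i) (hcsum : ∑ i, c i = 1)
    (xint : Fin n → EuclideanSpace ℝ (Fin d))
    (x : ℕ → Fin n → EuclideanSpace ℝ (Fin d))
    (hx0 : ∀ i, x 0 i = c i • xint i)
    (hx : ∀ t i, x (t + 1) i = ∑ j, W t i j • x t j)
    (y : ℕ → Fin n → ℝ)
    (hy0 : ∀ i, y 0 i = c i)
    (hy : ∀ t i, y (t + 1) i = ∑ j, W t i j * y t j) :
    ∃ C > 0, ∃ μ : ℝ, 0 ≤ μ ∧ μ < 1 ∧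
      ∀ i : Fin n, ∀ t : ℕ,
        ‖(y t i)⁻¹ • x t i - ∑ k, c k • xint k‖ ≤ C * μ ^ t := by
  classical
  have i0 : Fin n := ⟨0, hn⟩
  set s0 : EuclideanSpace ℝ (Fin d) := ∑ k, c k • xint k with hs0
  set z : ℕ → Fin n → EuclideanSpace ℝ (Fin d) := fun t i => x t i - y t i • s0 with hz
  have hzrec : ∀ t i, z (t+1) i = ∑ j, W t i j • z t j := by
    intro t i
    simp only [hz, hx, hy, smul_sub, Finset.sum_smul, mul_smul, Finset.sum_sub_distrib]
  have hzsum : ∀ t, ∑ i, z t i = 0 := by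
    intro t
    induction t with
    | zero =>
      simp only [hz, hx0, hy0, Finset.sum_sub_distrib, ← Finset.sum_smul, hcsum, one_smul]
      exact sub_self s0
    | succ t ih =>
      simp only [hzrec]
      rw [Finset.sum_comm]
      simp only [← Finset.sum_smul, hWcol, one_smul, ih]
  set V : ℕ → ℝ := fun t => ∑ i, ‖z t i‖ with hV
  have hVnn : ∀ t, 0 ≤ V t := fun t => Finset.sum_nonneg fun i _ => norm_nonneg _
  have hzleV : ∀ t i, ‖z t i‖ ≤ V t := fun t i =>
    Finset.single_le_sum (fun i _ => norm_nonneg (z t i)) (Finset.mem_univ i)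
  have hVstep : ∀ t, V (t+1) ≤ V t := by
    intro t
    calc V (t+1) = ∑ i, ‖∑ j, W t i j • z t j‖ := by simp only [hV, hzrec]
    _ ≤ ∑ i, ∑ j, ‖W t i j • z t j‖ :=
        Finset.sum_le_sum fun i _ => norm_sum_le _ _
    _ = ∑ i, ∑ j, W t i j * ‖z t j‖ := by
        refine Finset.sum_congr rfl fun i _ => Finset.sum_congr rfl fun j _ => ?_
        rw [norm_smul, Real.norm_eq_abs, abs_of_nonneg (hWnonneg t i j)]
    _ = ∑ j, (∑ i, W t i j) * ‖z t j‖ := by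
        rw [Finset.sum_comm]; simp only [Finset.sum_mul]
    _ = V t := by simp only [hWcol, one_mul, hV]
  have hVmono : ∀ a b : ℕ, a ≤ b → V b ≤ V a := by
    intro a b hab
    induction b, hab using Nat.le_induction with
    | base => exact le_rfl
    | succ b hb ih => exact le_trans (hVstep b) ih
  set T : ℕ := n * L with hT
  have hTpos : 0 < T := Nat.mul_pos hn hL
  set ε : ℝ := β ^ T with hε
  have hεpos : 0 < ε := pow_pos hβ T
  have hQge : ∀ t i j, ε ≤ Q W t T i j := fun t i j =>
    Q_pos_le W hWnonneg β hβ.le hWβ t T i j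
      (Q_full W hn hWnonneg hWdiag L hL hconn t i j)
  have hβ1 : β ≤ 1 := by
    have h1 := hWβ 0 i0 i0 (hWdiag 0 i0)
    have h2 : W 0 i0 i0 ≤ ∑ k, W 0 k i0 :=
      Finset.single_le_sum (f := fun k => W 0 k i0) (fun k _ => hWnonneg 0 k i0)
        (Finset.mem_univ i0)
    rw [hWcol 0 i0] at h2
    linarith
  have hnε : (n:ℝ) * ε ≤ 1 := by
    have h1 := Q_col W hWcol 0 T i0
    have h2 : ∑ i, ε ≤ ∑ i, Q W 0 T i i0 :=
      Finset.sum_le_sum fun i _ => hQge 0 i i0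
    rw [h1] at h2
    simpa [Finset.sum_const, nsmul_eq_mul] using h2
  have hn1 : (1:ℝ) ≤ n := by exact_mod_cast hn
  set θ : ℝ := max (1 - n * ε) (1/2) with hθ
  have hθpos : 0 < θ := lt_of_lt_of_le (by norm_num) (le_max_right _ _)
  have hθlt : θ < 1 := by
    apply max_lt _ (by norm_num)
    nlinarith
  have hVwin : ∀ t0, V (t0 + T) ≤ θ * V t0 := by
    intro t0
    have hzQ : ∀ i, z (t0 + T) i = ∑ j, (Q W t0 T i j - ε) • z t0 j := by
      intro i
      rw [Q_action W z hzrec t0 T i]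
      simp only [sub_smul, Finset.sum_sub_distrib, ← Finset.smul_sum, hzsum t0,
        smul_zero, sub_zero]
    calc V (t0 + T) = ∑ i, ‖∑ j, (Q W t0 T i j - ε) • z t0 j‖ := by
          simp only [hV, hzQ]
    _ ≤ ∑ i, ∑ j, (Q W t0 T i j - ε) * ‖z t0 j‖ := by
        refine Finset.sum_le_sum fun i _ => le_trans (norm_sum_le _ _)
          (Finset.sum_le_sum fun j _ => ?_)
        rw [norm_smul, Real.norm_eq_abs, abs_of_nonneg (by linarith [hQge t0 i j])]
    _ = ∑ j, (∑ i, (Q W t0 T i j - ε)) * ‖z t0 j‖ := by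
        rw [Finset.sum_comm]; simp only [Finset.sum_mul]
    _ = ∑ j, (1 - n * ε) * ‖z t0 j‖ := by
        refine Finset.sum_congr rfl fun j _ => ?_
        rw [Finset.sum_sub_distrib, Q_col W hWcol t0 T j, Finset.sum_const,
          Finset.card_univ, Fintype.card_fin, nsmul_eq_mul]
    _ = (1 - n * ε) * V t0 := by rw [← Finset.mul_sum]
    _ ≤ θ * V t0 := mul_le_mul_of_nonneg_right (le_max_left _ _) (hVnn t0)
  have hVdec : ∀ m, V (m * T) ≤ θ ^ m * V 0 := by
    intro m
    induction m with
    | zero => simp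
    | succ m ih =>
      have : (m+1) * T = m * T + T := by ring
      rw [this]
      calc V (m*T + T) ≤ θ * V (m*T) := hVwin (m*T)
      _ ≤ θ * (θ ^ m * V 0) := mul_le_mul_of_nonneg_left ih hθpos.le
      _ = θ ^ (m+1) * V 0 := by ring
  have hVt : ∀ t, V t ≤ θ ^ (t / T) * V 0 := by
    intro t
    calc V t ≤ V ((t / T) * T) := hVmono _ _ (Nat.div_mul_le_self t T)
    _ ≤ θ ^ (t / T) * V 0 := hVdec _
  -- μ
  set μ : ℝ := θ ^ ((T:ℝ)⁻¹) with hμ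
  have hμpos : 0 < μ := Real.rpow_pos_of_pos hθpos _
  have hμlt : μ < 1 := Real.rpow_lt_one hθpos.le hθlt (by positivity)
  have hμT : μ ^ T = θ := by
    rw [hμ, ← Real.rpow_natCast (θ ^ ((T:ℝ)⁻¹)) T, ← Real.rpow_mul hθpos.le,
      inv_mul_cancel₀ (by exact_mod_cast hTpos.ne'), Real.rpow_one]
  have hθμ : ∀ t, θ ^ (t / T) ≤ 2 * μ ^ t := by
    intro t
    have ht : t ≤ (t / T + 1) * T := by
      have h1 := Nat.div_add_mod t T
      have h2 := Nat.mod_lt t hTpos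
      nlinarith [Nat.div_add_mod t T, Nat.mod_lt t hTpos]
    have h3 : μ ^ ((t / T + 1) * T) ≤ μ ^ t :=
      pow_le_pow_of_le_one hμpos.le hμlt.le ht
    have h4 : μ ^ ((t / T + 1) * T) = θ * θ ^ (t / T) := by
      rw [pow_mul', hμT]; ring
    have h5 : (1/2 : ℝ) ≤ θ := le_max_right _ _
    have h6 : 0 ≤ θ ^ (t / T) := pow_nonneg hθpos.le _
    nlinarith
  -- lower bound on y
  have hynn : ∀ t i, 0 ≤ y t i := by
    intro t
    induction t with
    | zero => intro i; rw [hy0]; exact (hc i).le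
    | succ t ih =>
      intro i
      rw [hy]
      exact Finset.sum_nonneg fun j _ => mul_nonneg (hWnonneg t i j) (ih j)
  have hysum : ∀ t, ∑ i, y t i = 1 := by
    intro t
    induction t with
    | zero => simp only [hy0]; exact hcsum
    | succ t ih =>
      simp only [hy]
      rw [Finset.sum_comm]
      simp only [← Finset.sum_mul, hWcol, one_mul, ih]
  have hylow : ∀ t i, β ^ t * c i ≤ y t i := by
    intro t
    induction t with
    | zero => intro i; simp [hy0]
    | succ t ih =>
      intro i
      rw [hy]
      calc β ^ (t+1) * c i = β * (β ^ t * c i) := by ring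
      _ ≤ W t i i * y t i :=
          mul_le_mul (hWβ t i i (hWdiag t i)) (ih i) (mul_nonneg (pow_nonneg hβ.le t) (hc i).le) (hWnonneg t i i)
      _ ≤ ∑ j, W t i j * y t j :=
          Finset.single_le_sum (f := fun j => W t i j * y t j)
            (fun j _ => mul_nonneg (hWnonneg t i j) (hynn t j)) (Finset.mem_univ i)
  have hyQ : ∀ t i, T ≤ t → ε ≤ y t i := by
    intro t i hTt
    have hyrec : ∀ t' i', y (t'+1) i' = ∑ j, W t' i' j • y t' j := by
      intro t' i'; rw [hy]; simp [smul_eq_mul]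
    have h1 : y ((t - T) + T) i = ∑ j, Q W (t - T) T i j • y (t - T) j :=
      Q_action W y hyrec (t - T) T i
    rw [Nat.sub_add_cancel hTt] at h1
    rw [h1]
    calc ε = ε * ∑ j, y (t - T) j := by rw [hysum]; ring
    _ = ∑ j, ε * y (t - T) j := by rw [Finset.mul_sum]
    _ ≤ ∑ j, Q W (t - T) T i j • y (t - T) j :=
        Finset.sum_le_sum fun j _ => by
          simp only [smul_eq_mul]
          exact mul_le_mul_of_nonneg_right (hQge _ i j) (hynn _ j)
  obtain ⟨im, -, him⟩ := Finset.exists_min_image Finset.univ c ⟨i0, Finset.mem_univ i0⟩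
  have hcle1 : ∀ i, c i ≤ 1 := by
    intro i
    have := Finset.single_le_sum (f := c) (fun j _ => (hc j).le) (Finset.mem_univ i)
    rw [hcsum] at this; exact this
  set δ : ℝ := ε * c im with hδ
  have hδpos : 0 < δ := mul_pos hεpos (hc im)
  have hylb : ∀ t i, δ ≤ y t i := by
    intro t i
    by_cases h : T ≤ t
    · calc δ = ε * c im := rfl
      _ ≤ ε * 1 := mul_le_mul_of_nonneg_left (hcle1 im) hεpos.le
      _ = ε := mul_one ε
      _ ≤ y t i := hyQ t i h
    · push_neg at h
      calc δ = β ^ T * c im := rfl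
      _ ≤ β ^ t * c i :=
          mul_le_mul (pow_le_pow_of_le_one hβ.le hβ1 h.le)
            (him i (Finset.mem_univ i)) (hc im).le (by positivity)
      _ ≤ y t i := hylow t i
  -- conclusion
  refine ⟨2 * V 0 / δ + 1, by positivity, μ, hμpos.le, hμlt, ?_⟩
  intro i t
  have hyt : 0 < y t i := lt_of_lt_of_le hδpos (hylb t i)
  have hxz : (y t i)⁻¹ • x t i - s0 = (y t i)⁻¹ • z t i := by
    simp only [hz, smul_sub, smul_smul, inv_mul_cancel₀ hyt.ne', one_smul]
  rw [hxz, norm_smul, Real.norm_eq_abs, abs_of_pos (inv_pos.mpr hyt)]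
  have h1 : (y t i)⁻¹ ≤ δ⁻¹ := inv_anti₀ hδpos (hylb t i)
  have h2 : ‖z t i‖ ≤ V t := hzleV t i
  have h3 : V t ≤ θ ^ (t / T) * V 0 := hVt t
  have h4 : θ ^ (t / T) ≤ 2 * μ ^ t := hθμ t
  have hμt : 0 < μ ^ t := pow_pos hμpos t
  have hV0 : 0 ≤ V 0 := hVnn 0
  calc (y t i)⁻¹ * ‖z t i‖ ≤ δ⁻¹ * V t := by
        apply mul_le_mul h1 h2 (norm_nonneg _) (inv_nonneg.mpr hδpos.le)
  _ ≤ δ⁻¹ * (θ ^ (t / T) * V 0) := mul_le_mul_of_nonneg_left h3 (inv_nonneg.mpr hδpos.le)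
  _ ≤ δ⁻¹ * (2 * μ ^ t * V 0) := by
      apply mul_le_mul_of_nonneg_left _ (inv_nonneg.mpr hδpos.le)
      exact mul_le_mul_of_nonneg_right h4 hV0
  _ = (2 * V 0 / δ) * μ ^ t := by field_simp
  _ ≤ (2 * V 0 / δ + 1) * μ ^ t := by nlinarith
end
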